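/- arXiv:2205.02288 — 16 statements merged into one kernel-verified Lean document; each statement's English description precedes it below -/
import Mathlib

section
/- Let X be a binary treatment and Y a random variable whose conditional distribution given X = x is atomless for x ∈ {0,1}, and let 𝒯 ⊆ ℝ. Then Y is 𝒯-independent of X if and only if for all t₁, t₂ ∈ 𝒯 ∪ {−∞, +∞} with t₁ < t₂ one has P({X = 1} ∩ {Y ∈ (t₁, t₂)}) = P(X = 1) · P(Y ∈ (t₁, t₂)); equivalently, the average value of the latent propensity score over every such interval equals P(X = 1). -/
open MeasureTheory Set ENNReal

/-- Average value characterization, binary treatment.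
`Y` is `𝒯`-independent of `X` iff for every interval with endpoints in
`𝒯 ∪ {-∞, +∞}`, `P({X = 1} ∩ {Y ∈ (t₁,t₂)}) = P(X = 1) · P(Y ∈ (t₁,t₂))`. -/
theorem stmt_0 {Ω : Type*} [MeasurableSpace Ω] (P : Measure Ω) [IsProbabilityMeasure P]
    (X Y : Ω → ℝ) (hX : Measurable X) (hY : Measurable Y)
    (hbin : ∀ ω, X ω = 0 ∨ X ω = 1)
    (hp0 : 0 < P {ω | X ω = 1}) (hp1 : P {ω | X ω = 1} < 1)
    (hatomless : ∀ x ∈ ({0, 1} : Set ℝ), ∀ y : ℝ,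
      P ({ω | Y ω = y} ∩ {ω | X ω = x}) = 0)
    (𝒯 : Set ℝ) :
    (∀ τ ∈ 𝒯,
        P ({ω | Y ω ≤ τ} ∩ {ω | X ω = 0}) / P {ω | X ω = 0}
          = P ({ω | Y ω ≤ τ} ∩ {ω | X ω = 1}) / P {ω | X ω = 1})
      ↔ (∀ t₁ t₂ : EReal,
          t₁ ∈ ((fun r : ℝ => (r : EReal)) '' 𝒯 ∪ {⊥, ⊤}) →
          t₂ ∈ ((fun r : ℝ => (r : EReal)) '' 𝒯 ∪ {⊥, ⊤}) →
          t₁ < t₂ →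
          P ({ω | X ω = 1} ∩ {ω | t₁ < (Y ω : EReal) ∧ (Y ω : EReal) < t₂})
            = P {ω | X ω = 1} * P {ω | t₁ < (Y ω : EReal) ∧ (Y ω : EReal) < t₂}) := by
  classical
  set A : Set Ω := {ω | X ω = 1} with hAdef
  have hA : MeasurableSet A := hX (measurableSet_singleton 1)
  have hAc : {ω | X ω = 0} = Aᶜ := by
    ext ω
    simp only [hAdef, mem_setOf_eq, mem_compl_iff]
    constructor
    · intro h h1; rw [h1] at h; norm_num at h
    · intro h; rcases hbin ω with h0 | h1
      · exact h0
      · exact absurd h1 h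
  have hq_ne_top : P A ≠ ∞ := measure_ne_top P A
  have hq_ne_zero : P A ≠ 0 := hp0.ne'
  have hcompl : P Aᶜ = 1 - P A := by
    rw [measure_compl hA hq_ne_top, measure_univ]
  have hq0_ne : P Aᶜ ≠ 0 := by
    rw [hcompl]
    intro h
    rw [tsub_eq_zero_iff_le] at h
    exact absurd h hp1.not_ge
  -- atoms of Y are null
  have hatom : ∀ y : ℝ, P {ω | Y ω = y} = 0 := by
    intro y
    have hsub : {ω | Y ω = y} ⊆
        ({ω | Y ω = y} ∩ {ω | X ω = 0}) ∪ ({ω | Y ω = y} ∩ {ω | X ω = 1}) := by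
      intro ω hω
      rcases hbin ω with h0 | h1
      · exact Or.inl ⟨hω, h0⟩
      · exact Or.inr ⟨hω, h1⟩
    refine le_antisymm ?_ zero_le
    calc P {ω | Y ω = y} ≤ _ := measure_mono hsub
      _ ≤ P ({ω | Y ω = y} ∩ {ω | X ω = 0}) + P ({ω | Y ω = y} ∩ {ω | X ω = 1}) :=
        measure_union_le _ _
      _ = 0 := by
        rw [hatomless 0 (by simp) y, hatomless 1 (by simp) y, add_zero]
  -- {Y < r} and {Y ≤ r} agree in measure, also after intersecting with A
  have hlt_le : ∀ r : ℝ, P {ω | Y ω < r} = P {ω | Y ω ≤ r} := by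
    intro r
    have hsub1 : {ω | Y ω < r} ⊆ {ω | Y ω ≤ r} := by
      intro ω h
      simp only [mem_setOf_eq] at h ⊢
      exact le_of_lt h
    have hsub2 : {ω | Y ω ≤ r} ⊆ {ω | Y ω < r} ∪ {ω | Y ω = r} := by
      intro ω h
      simp only [mem_setOf_eq, mem_union] at h ⊢
      exact lt_or_eq_of_le h
    refine le_antisymm (measure_mono hsub1) ?_
    calc P {ω | Y ω ≤ r} ≤ P ({ω | Y ω < r} ∪ {ω | Y ω = r}) := measure_mono hsub2
      _ ≤ P {ω | Y ω < r} + P {ω | Y ω = r} := measure_union_le _ _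
      _ = P {ω | Y ω < r} := by rw [hatom r, add_zero]
  have hlt_leA : ∀ r : ℝ, P ({ω | Y ω < r} ∩ A) = P ({ω | Y ω ≤ r} ∩ A) := by
    intro r
    have hsub1 : {ω | Y ω < r} ∩ A ⊆ {ω | Y ω ≤ r} ∩ A := by
      refine inter_subset_inter_left _ ?_
      intro ω h
      simp only [mem_setOf_eq] at h ⊢
      exact le_of_lt h
    have hsub2 : {ω | Y ω ≤ r} ∩ A ⊆ ({ω | Y ω < r} ∩ A) ∪ {ω | Y ω = r} := by
      rintro ω ⟨h1, h2⟩
      simp only [mem_setOf_eq] at h1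
      rcases lt_or_eq_of_le h1 with h' | h'
      · exact Or.inl ⟨h', h2⟩
      · exact Or.inr h'
    refine le_antisymm (measure_mono hsub1) ?_
    calc P ({ω | Y ω ≤ r} ∩ A) ≤ P (({ω | Y ω < r} ∩ A) ∪ {ω | Y ω = r}) := measure_mono hsub2
      _ ≤ P ({ω | Y ω < r} ∩ A) + P {ω | Y ω = r} := measure_union_le _ _
      _ = P ({ω | Y ω < r} ∩ A) := by rw [hatom r, add_zero]
  -- key per-τ equivalence
  have hkey : ∀ τ : ℝ,
      (P ({ω | Y ω ≤ τ} ∩ {ω | X ω = 0}) / P {ω | X ω = 0}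
        = P ({ω | Y ω ≤ τ} ∩ {ω | X ω = 1}) / P {ω | X ω = 1})
      ↔ P ({ω | Y ω ≤ τ} ∩ A) = P A * P {ω | Y ω ≤ τ} := by
    intro τ
    rw [hAc]
    set C : Set Ω := {ω | Y ω ≤ τ} with hCdef
    have hC : MeasurableSet C := hY measurableSet_Iic
    have hsplit : P (C ∩ A) + P (C ∩ Aᶜ) = P C := by
      have := measure_inter_add_diff C hA (μ := P)
      rwa [diff_eq] at this
    set b := P (C ∩ A) with hb
    set a := P (C ∩ Aᶜ) with ha
    set c := P C with hc
    set q := P A with hq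
    have hb_ne : b ≠ ∞ := measure_ne_top _ _
    have ha_ne : a ≠ ∞ := measure_ne_top _ _
    have hc_ne : c ≠ ∞ := measure_ne_top _ _
    -- pass to reals
    have hqr : (0:ℝ) < q.toReal := ENNReal.toReal_pos hq_ne_zero hq_ne_top
    have hq0r : (0:ℝ) < (P Aᶜ).toReal := ENNReal.toReal_pos hq0_ne (measure_ne_top _ _)
    have hq0r_eq : (P Aᶜ).toReal = 1 - q.toReal := by
      rw [hcompl, ENNReal.toReal_sub_of_le prob_le_one one_ne_top, ENNReal.toReal_one]
    have hsplitr : b.toReal + a.toReal = c.toReal := by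
      rw [← ENNReal.toReal_add hb_ne ha_ne, hsplit]
    constructor
    · intro h
      have h' : a.toReal / (P Aᶜ).toReal = b.toReal / q.toReal := by
        rw [← ENNReal.toReal_div, ← ENNReal.toReal_div, h]
      have hax : a.toReal = c.toReal - b.toReal := by linarith
      rw [div_eq_div_iff hq0r.ne' hqr.ne', hax, hq0r_eq] at h'
      have hgoal : b.toReal = q.toReal * c.toReal := by linear_combination -h'
      refine (ENNReal.toReal_eq_toReal_iff' hb_ne ?_).mp ?_
      · exact ENNReal.mul_ne_top hq_ne_top hc_ne
      · rw [ENNReal.toReal_mul]; exact hgoal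
    · intro h
      have hgoal : b.toReal = q.toReal * c.toReal := by
        rw [h, ENNReal.toReal_mul]
      have hax : a.toReal = c.toReal - b.toReal := by
        have := ENNReal.toReal_add hb_ne ha_ne
        linarith [hsplitr]
      have h' : a.toReal / (P Aᶜ).toReal = b.toReal / q.toReal := by
        rw [div_eq_div_iff hq0r.ne' hqr.ne', hax, hq0r_eq]
        linear_combination -hgoal
      refine (ENNReal.toReal_eq_toReal_iff' ?_ ?_).mp ?_
      · exact (ENNReal.div_lt_top ha_ne hq0_ne).ne
      · exact (ENNReal.div_lt_top hb_ne hq_ne_zero).ne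
      · rw [ENNReal.toReal_div, ENNReal.toReal_div]; exact h'
  -- difference lemma
  have hdiff : ∀ S T : Set Ω, MeasurableSet T → T ⊆ S →
      P (S ∩ A) = P A * P S → P (T ∩ A) = P A * P T →
      P ((S \ T) ∩ A) = P A * P (S \ T) := by
    intro S T hT hTS hS hTeq
    have h1 : (S \ T) ∩ A = (S ∩ A) \ (T ∩ A) := by
      ext ω; simp only [mem_diff, mem_inter_iff]; tauto
    rw [h1, measure_diff (inter_subset_inter_left _ hTS) (hT.inter hA).nullMeasurableSet
        (measure_ne_top _ _), measure_diff hTS hT.nullMeasurableSet (measure_ne_top _ _),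
      hS, hTeq, ENNReal.mul_sub (fun _ _ => hq_ne_top)]
  constructor
  · -- forward
    intro h t₁ t₂ ht₁ ht₂ hlt
    have hIeq : {ω | t₁ < (Y ω : EReal) ∧ (Y ω : EReal) < t₂}
        = {ω | (Y ω : EReal) < t₂} \ {ω | (Y ω : EReal) ≤ t₁} := by
      ext ω
      simp only [mem_setOf_eq, mem_diff, not_le]
      tauto
    have hsub : {ω | (Y ω : EReal) ≤ t₁} ⊆ {ω | (Y ω : EReal) < t₂} :=
      fun ω hω => lt_of_le_of_lt hω hlt
    -- P over Sle t₁
    have hle : P ({ω | (Y ω : EReal) ≤ t₁} ∩ A) = P A * P {ω | (Y ω : EReal) ≤ t₁}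
        ∧ MeasurableSet {ω | (Y ω : EReal) ≤ t₁} := by
      rcases ht₁ with ⟨r, hr, rfl⟩ | ht₁
      · have hset : {ω | (Y ω : EReal) ≤ (r : EReal)} = {ω | Y ω ≤ r} := by
          ext ω; exact EReal.coe_le_coe_iff
        rw [hset]
        exact ⟨(hkey r).mp (h r hr), hY measurableSet_Iic⟩
      · rcases ht₁ with rfl | rfl
        · have hset : {ω | (Y ω : EReal) ≤ (⊥ : EReal)} = (∅ : Set Ω) := by
            ext ω; simp [le_bot_iff]
          rw [hset]
          simp
        · have hset : {ω | (Y ω : EReal) ≤ (⊤ : EReal)} = (univ : Set Ω) := by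
            ext ω; simp
          rw [hset]
          simp [measure_univ]
    -- P over Slt t₂
    have hlt2 : P ({ω | (Y ω : EReal) < t₂} ∩ A) = P A * P {ω | (Y ω : EReal) < t₂} := by
      rcases ht₂ with ⟨r, hr, rfl⟩ | ht₂
      · have hset : {ω | (Y ω : EReal) < (r : EReal)} = {ω | Y ω < r} := by
          ext ω; exact EReal.coe_lt_coe_iff
        rw [hset, hlt_leA r, hlt_le r]
        exact (hkey r).mp (h r hr)
      · rcases ht₂ with rfl | rfl
        · exact absurd hlt (not_lt_bot)
        · have hset : {ω | (Y ω : EReal) < (⊤ : EReal)} = (univ : Set Ω) := by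
            ext ω; simp [lt_top_iff_ne_top]
          rw [hset]
          simp [measure_univ, inter_comm]
    rw [hIeq, inter_comm A _]
    exact hdiff _ _ hle.2 hsub hlt2 hle.1
  · -- backward
    intro h τ hτ
    have hmem₁ : (⊥ : EReal) ∈ ((fun r : ℝ => (r : EReal)) '' 𝒯 ∪ {⊥, ⊤}) :=
      Or.inr (Or.inl rfl)
    have hmem₂ : ((τ : EReal)) ∈ ((fun r : ℝ => (r : EReal)) '' 𝒯 ∪ {⊥, ⊤}) :=
      Or.inl ⟨τ, hτ, rfl⟩
    have h' := h ⊥ (τ : EReal) hmem₁ hmem₂ (EReal.bot_lt_coe τ)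
    have hset : {ω | (⊥ : EReal) < (Y ω : EReal) ∧ (Y ω : EReal) < (τ : EReal)}
        = {ω | Y ω < τ} := by
      ext ω
      simp only [mem_setOf_eq, EReal.bot_lt_coe, true_and]
      exact EReal.coe_lt_coe_iff
    rw [hset, inter_comm] at h'
    rw [hlt_leA τ, hlt_le τ] at h'
    exact (hkey τ).mpr h'
end

section
/- Let X be a binary treatment and Y a random variable whose conditional distribution given X = x is atomless for x ∈ {0,1}. Suppose a latent propensity score p is weakly monotonic (weakly increasing or weakly decreasing) on ℝ and is not μ-almost-everywhere constant. Then for every τ ∈ ℝ with P(Y < τ) > 0 and P(Y > τ) > 0, Y is not τ-cdf independent of X; that is, P({X = 1} ∩ {Y ≤ τ}) ≠ P(X = 1) · P(Y ≤ τ). -/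
open MeasureTheory Set

lemma aux_const_ae {μ : Measure ℝ} [IsProbabilityMeasure μ] {f : ℝ → ℝ}
    (hint : Integrable f μ) {τ q : ℝ}
    (hle : ∀ y ≤ τ, f y ≤ f τ) (hge : ∀ y, τ ≤ y → f τ ≤ f y)
    (ha : 0 < (μ (Iic τ)).toReal) (hb : 0 < (μ (Ioi τ)).toReal)
    (h1 : ∫ y in Iic τ, f y ∂μ = q * (μ (Iic τ)).toReal)
    (h2 : ∫ y in Ioi τ, f y ∂μ = q * (μ (Ioi τ)).toReal) :
    ∀ᵐ y ∂μ, f y = q := by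
  set a := (μ (Iic τ)).toReal with ha'
  set b := (μ (Ioi τ)).toReal with hb'
  have hconstIic : IntegrableOn (fun _ : ℝ => f τ) (Iic τ) μ :=
    integrableOn_const (measure_ne_top _ _)
  have hconstIoi : IntegrableOn (fun _ : ℝ => f τ) (Ioi τ) μ :=
    integrableOn_const (measure_ne_top _ _)
  have hIle : ∫ y in Iic τ, f y ∂μ ≤ f τ * a := by
    have := setIntegral_mono_on hint.integrableOn hconstIic measurableSet_Iic
      (fun x hx => hle x hx)
    rwa [setIntegral_const, smul_eq_mul, mul_comm] at this
  have hIge : f τ * b ≤ ∫ y in Ioi τ, f y ∂μ := by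
    have := setIntegral_mono_on hconstIoi hint.integrableOn measurableSet_Ioi
      (fun x hx => hge x (le_of_lt hx))
    rwa [setIntegral_const, smul_eq_mul, mul_comm] at this
  have hq1 : q ≤ f τ := by
    have : q * a ≤ f τ * a := h1 ▸ hIle
    exact le_of_mul_le_mul_right this ha
  have hq2 : f τ ≤ q := by
    have : f τ * b ≤ q * b := h2 ▸ hIge
    exact le_of_mul_le_mul_right this hb
  have hfq : f τ = q := le_antisymm hq2 hq1
  -- on Iic τ
  have hz1 : ∫ y in Iic τ, (q - f y) ∂μ = 0 := by
    rw [integral_sub (integrable_const q).integrableOn hint.integrableOn,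
      setIntegral_const, smul_eq_mul, h1]
    rw [measureReal_def, ← ha']
    ring
  have hnn1 : 0 ≤ᵐ[μ.restrict (Iic τ)] fun y => q - f y :=
    (ae_restrict_iff' measurableSet_Iic).2
      (Filter.Eventually.of_forall fun y hy => sub_nonneg.2 (hfq ▸ hle y hy))
  have hint1 : Integrable (fun y => q - f y) (μ.restrict (Iic τ)) :=
    (integrable_const q).integrableOn.sub hint.integrableOn
  have heq1 : ∀ᵐ y ∂μ, y ∈ Iic τ → f y = q := by
    have := (integral_eq_zero_iff_of_nonneg_ae hnn1 hint1).1 hz1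
    have := (ae_restrict_iff' measurableSet_Iic).1 this
    filter_upwards [this] with y hy hy'
    have := hy hy'
    simp only [Pi.zero_apply] at this
    linarith
  -- on Ioi τ
  have hz2 : ∫ y in Ioi τ, (f y - q) ∂μ = 0 := by
    rw [integral_sub hint.integrableOn (integrable_const q).integrableOn,
      setIntegral_const, smul_eq_mul, h2]
    rw [measureReal_def, ← hb']
    ring
  have hnn2 : 0 ≤ᵐ[μ.restrict (Ioi τ)] fun y => f y - q :=
    (ae_restrict_iff' measurableSet_Ioi).2
      (Filter.Eventually.of_forall fun y hy => sub_nonneg.2 (hfq ▸ hge y (le_of_lt hy)))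
  have hint2 : Integrable (fun y => f y - q) (μ.restrict (Ioi τ)) :=
    hint.integrableOn.sub (integrable_const q).integrableOn
  have heq2 : ∀ᵐ y ∂μ, y ∈ Ioi τ → f y = q := by
    have := (integral_eq_zero_iff_of_nonneg_ae hnn2 hint2).1 hz2
    have := (ae_restrict_iff' measurableSet_Ioi).1 this
    filter_upwards [this] with y hy hy'
    have := hy hy'
    simp only [Pi.zero_apply] at this
    linarith
  filter_upwards [heq1, heq2] with y h1' h2'
  rcases le_or_gt y τ with h | h
  · exact h1' h
  · exact h2' h

/-- A weakly monotonic, non-(a.e.-)constant latent propensity score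
rules out τ-cdf independence at every quantile τ in the interior of the distribution
of `Y`. -/
theorem stmt_1 {Ω : Type*} [MeasurableSpace Ω] (P : Measure Ω) [IsProbabilityMeasure P]
    (X Y : Ω → ℝ) (hX : Measurable X) (hY : Measurable Y)
    (hbin : ∀ ω, X ω = 0 ∨ X ω = 1)
    (hp0 : 0 < P {ω | X ω = 1}) (hp1 : P {ω | X ω = 1} < 1)
    (hatomless : ∀ x ∈ ({0, 1} : Set ℝ), ∀ y : ℝ,
      P ({ω | Y ω = y} ∩ {ω | X ω = x}) = 0)
    (p : ℝ → ℝ) (hpmeas : Measurable p) (hp01 : ∀ y, p y ∈ Set.Icc (0 : ℝ) 1)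
    (hprop : ∀ B : Set ℝ, MeasurableSet B →
      (P ({ω | X ω = 1} ∩ Y ⁻¹' B)).toReal = ∫ y in B, p y ∂(Measure.map Y P))
    (hmono : Monotone p ∨ Antitone p)
    (hnotconst : ∀ c : ℝ, ¬ (∀ᵐ y ∂(Measure.map Y P), p y = c)) :
    ∀ τ : ℝ, 0 < P {ω | Y ω < τ} → 0 < P {ω | τ < Y ω} →
      P ({ω | X ω = 1} ∩ {ω | Y ω ≤ τ}) ≠ P {ω | X ω = 1} * P {ω | Y ω ≤ τ} := by
  intro τ hlt hgt hcontra
  set μ := Measure.map Y P with hμ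
  haveI : IsProbabilityMeasure μ := Measure.isProbabilityMeasure_map hY.aemeasurable
  have hint : Integrable p μ := by
    refine Integrable.mono' (integrable_const 1) hpmeas.aestronglyMeasurable ?_
    refine Filter.Eventually.of_forall fun y => ?_
    rw [Real.norm_eq_abs]
    exact abs_le.2 ⟨by linarith [(hp01 y).1], (hp01 y).2⟩
  have hpreIic : Y ⁻¹' Iic τ = {ω | Y ω ≤ τ} := by ext ω; simp [Set.mem_Iic]
  have hpreIoi : Y ⁻¹' Ioi τ = {ω | τ < Y ω} := by ext ω; simp [Set.mem_Ioi]
  have hμIic : μ (Iic τ) = P {ω | Y ω ≤ τ} := by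
    rw [hμ, Measure.map_apply hY measurableSet_Iic, hpreIic]
  have hμIoi : μ (Ioi τ) = P {ω | τ < Y ω} := by
    rw [hμ, Measure.map_apply hY measurableSet_Ioi, hpreIoi]
  set q := (P {ω | X ω = 1}).toReal with hq
  set a := (μ (Iic τ)).toReal with ha'
  set b := (μ (Ioi τ)).toReal with hb'
  have hapos : 0 < a := by
    apply ENNReal.toReal_pos _ (measure_ne_top _ _)
    rw [hμIic]
    have hsub : {ω | Y ω < τ} ⊆ {ω | Y ω ≤ τ} := fun ω (hω : Y ω < τ) => le_of_lt hω
    exact (lt_of_lt_of_le hlt (measure_mono hsub)).ne'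
  have hbpos : 0 < b := by
    apply ENNReal.toReal_pos _ (measure_ne_top _ _)
    rw [hμIoi]
    exact hgt.ne'
  -- the key integral identity on Iic τ
  have h1 : ∫ y in Iic τ, p y ∂μ = q * a := by
    have := hprop (Iic τ) measurableSet_Iic
    rw [hpreIic, hcontra, ENNReal.toReal_mul] at this
    rw [← this, hq, ha', hμIic]
  -- total integral
  have htot : ∫ y, p y ∂μ = q := by
    have := hprop univ MeasurableSet.univ
    simpa [Set.preimage_univ, Set.inter_univ] using this.symm
  -- a + b = 1
  have hab : a + b = 1 := by
    have hsum : μ (Iic τ) + μ (Ioi τ) = 1 := by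
      rw [← measure_union (Iic_disjoint_Ioi le_rfl) measurableSet_Ioi, Iic_union_Ioi,
        measure_univ]
    rw [ha', hb', ← ENNReal.toReal_add (measure_ne_top _ _) (measure_ne_top _ _), hsum]
    simp
  have h2 : ∫ y in Ioi τ, p y ∂μ = q * b := by
    have hsplit := integral_add_compl (s := Iic τ) (f := p) measurableSet_Iic hint
    rw [compl_Iic, htot, h1] at hsplit
    linear_combination hsplit - q * hab
  rcases hmono with hm | hm
  · exact hnotconst q (aux_const_ae hint (fun y hy => hm hy) (fun y hy => hm hy)
      hapos hbpos h1 h2)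
  · -- apply the lemma to 1 - p
    have hintf : Integrable (fun y => 1 - p y) μ := (integrable_const 1).sub hint
    have h1f : ∫ y in Iic τ, (1 - p y) ∂μ = (1 - q) * a := by
      rw [integral_sub (integrable_const 1).integrableOn hint.integrableOn,
        setIntegral_const, smul_eq_mul, h1]
      rw [measureReal_def, ← ha']
      ring
    have h2f : ∫ y in Ioi τ, (1 - p y) ∂μ = (1 - q) * b := by
      rw [integral_sub (integrable_const 1).integrableOn hint.integrableOn,
        setIntegral_const, smul_eq_mul, h2]
      rw [measureReal_def, ← hb']
      ring
    have := aux_const_ae hintf (f := fun y => 1 - p y) (τ := τ) (q := 1 - q)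
      (fun y hy => by linarith [hm hy]) (fun y hy => by linarith [hm hy])
      hapos hbpos h1f h2f
    refine hnotconst q ?_
    filter_upwards [this] with y hy
    linarith
end

section
/- Let μ be an atomless probability distribution on ℝ with support the interval [y̲, ȳ], let p₁ ∈ (0,1), and let 𝒯 ⊆ [y̲, ȳ]. Suppose [y̲, ȳ] ∖ 𝒯 contains a non-degenerate interval [a, b] with a < b and μ((a, b)) > 0. Then there exists a Borel function p : ℝ → [0,1] such that (i) ∫_{(t₁,t₂)} p dμ = p₁ · μ((t₁, t₂)) for all t₁, t₂ ∈ 𝒯 ∪ {−∞, +∞} with t₁ < t₂ (so that p is a latent propensity score consistent with 𝒯-independence of a variable Y with distribution μ from a binary X with P(X = 1) = p₁), and (ii) the sets {y ∈ [y̲, ȳ] : p(y) = 0} and {y ∈ [y̲, ȳ] : p(y) = 1} each have positive Lebesgue measure. -/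
open MeasureTheory Set

/-- If `[y̲, ȳ] \ 𝒯` contains a non-degenerate interval, there is a
latent propensity score consistent with `𝒯`-independence (via the average-value
characterization) which equals `0` and `1` on sets of positive Lebesgue measure. -/
theorem stmt_3 (μ : Measure ℝ) [IsProbabilityMeasure μ] [NullSingletonClass μ]
    (ylo yhi : ℝ) (hy : ylo < yhi)
    (hsupp_compl : μ (Set.Icc ylo yhi)ᶜ = 0)
    (hsupp : ∀ c d : ℝ, ylo ≤ c → c < d → d ≤ yhi → 0 < μ (Set.Ioo c d))
    (p₁ : ℝ) (hp₁ : p₁ ∈ Set.Ioo (0 : ℝ) 1)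
    (𝒯 : Set ℝ) (h𝒯 : 𝒯 ⊆ Set.Icc ylo yhi)
    (a b : ℝ) (hab : a < b) (hIcc : Set.Icc a b ⊆ Set.Icc ylo yhi \ 𝒯)
    (hμab : 0 < μ (Set.Ioo a b)) :
    ∃ p : ℝ → ℝ, Measurable p ∧ (∀ y, p y ∈ Set.Icc (0 : ℝ) 1) ∧
      (∀ t₁ t₂ : EReal,
        t₁ ∈ ((fun r : ℝ => (r : EReal)) '' 𝒯 ∪ {⊥, ⊤}) →
        t₂ ∈ ((fun r : ℝ => (r : EReal)) '' 𝒯 ∪ {⊥, ⊤}) →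
        t₁ < t₂ →
        ∫ y in {y : ℝ | t₁ < (y : EReal) ∧ (y : EReal) < t₂}, p y ∂μ
          = p₁ * (μ {y : ℝ | t₁ < (y : EReal) ∧ (y : EReal) < t₂}).toReal) ∧
      0 < volume {y ∈ Set.Icc ylo yhi | p y = 0} ∧
      0 < volume {y ∈ Set.Icc ylo yhi | p y = 1} := by
  classical
  open ProbabilityTheory in
  obtain ⟨hp₁0, hp₁1⟩ := hp₁
  -- continuity of the cdf of an atomless measure
  have hcont : Continuous (cdf μ) := by
    rw [continuous_iff_continuousAt]
    intro x
    rw [(cdf μ).mono.continuousAt_iff_leftLim_eq_rightLim, (cdf μ).rightLim_eq]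
    have h0 : (cdf μ).measure {x} = 0 := by rw [measure_cdf]; exact measure_singleton x
    rw [(cdf μ).measure_singleton] at h0
    have h1 := ENNReal.ofReal_eq_zero.mp h0
    have h2 := (cdf μ).mono.leftLim_le (le_refl x)
    linarith
  have hIoc : ∀ x y : ℝ, x ≤ y → (μ (Ioc x y)).toReal = cdf μ y - cdf μ x := by
    intro x y h
    have hu : Iic x ∪ Ioc x y = Iic y := Iic_union_Ioc_eq_Iic h
    have hd : Disjoint (Iic x) (Ioc x y) := by
      simp only [Set.disjoint_left, mem_Iic, mem_Ioc]
      intro z hz h'; exact absurd hz (not_le.mpr h'.1)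
    have hmu := measure_union (μ := μ) hd measurableSet_Ioc
    rw [hu] at hmu
    rw [cdf_eq_real, cdf_eq_real, measureReal_def, measureReal_def, hmu,
      ENNReal.toReal_add (measure_ne_top μ _) (measure_ne_top μ _)]
    ring
  set A := (μ (Ioo a b)).toReal with hA
  have hA0 : 0 < A := ENNReal.toReal_pos hμab.ne' (measure_ne_top μ _)
  have hIooIoc : μ (Ioo a b) = μ (Ioc a b) := measure_congr Ioo_ae_eq_Ioc
  have hFba : cdf μ b - cdf μ a = A := by rw [← hIoc a b hab.le, hA, hIooIoc]
  set r := (1 - p₁) * A with hr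
  have hr0 : 0 < r := mul_pos (by linarith) hA0
  have hrA : r < A := by nlinarith
  obtain ⟨c, hc, hFc⟩ := intermediate_value_Ioo hab.le hcont.continuousOn
    (show cdf μ a + r ∈ Ioo (cdf μ a) (cdf μ b) from ⟨by linarith, by linarith⟩)
  obtain ⟨hac, hcb⟩ := hc
  have hIcoIoc : ∀ x y : ℝ, μ (Ico x y) = μ (Ioc x y) := by
    intro x y
    calc μ (Ico x y) = μ (Ioo x y) := (measure_congr Ioo_ae_eq_Ico).symm
      _ = μ (Ioc x y) := measure_congr Ioo_ae_eq_Ioc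
  have hμac : (μ (Ico a c)).toReal = r := by
    rw [hIcoIoc, hIoc a c hac.le, hFc]; ring
  have hab' : (μ (Ico a b)).toReal = A := by
    rw [hIcoIoc, ← hIooIoc]
  have hμcb : (μ (Ico c b)).toReal = p₁ * A := by
    have hU : Ico a c ∪ Ico c b = Ico a b := Ico_union_Ico_eq_Ico hac.le hcb.le
    have hdcc : Disjoint (Ico a c) (Ico c b) := by
      rw [Set.disjoint_left]; intro z hz hz'; exact absurd hz.2 (not_lt.mpr hz'.1)
    have hsum := measure_union (μ := μ) hdcc measurableSet_Ico
    rw [hU] at hsum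
    have h2 := congrArg ENNReal.toReal hsum
    rw [ENNReal.toReal_add (measure_ne_top μ _) (measure_ne_top μ _), hμac, hab'] at h2
    nlinarith [h2]
  -- the propensity score
  set p : ℝ → ℝ := fun y => if y ∈ Ico a c then 0 else if y ∈ Ico c b then 1 else p₁ with hp
  have hpmeas : Measurable p := by
    apply Measurable.ite measurableSet_Ico measurable_const
    exact Measurable.ite measurableSet_Ico measurable_const measurable_const
  have hprange : ∀ y, p y ∈ Icc (0 : ℝ) 1 := by
    intro y; simp only [hp]
    split_ifs <;> constructor <;> norm_num <;> linarith
  have hpint : Integrable p μ := by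
    refine Integrable.mono' (integrable_const 1) hpmeas.aestronglyMeasurable ?_
    filter_upwards with y
    rw [Real.norm_eq_abs, abs_le]
    exact ⟨by linarith [(hprange y).1], (hprange y).2⟩
  have hsub1 : Ico a c ⊆ Ico a b := Ico_subset_Ico_right hcb.le
  have hsub2 : Ico c b ⊆ Ico a b := Ico_subset_Ico_left hac.le
  -- key computation
  have key : ∀ S : Set ℝ, MeasurableSet S → (Ico a b ⊆ S ∨ S ∩ Ico a b = ∅) →
      ∫ y in S, p y ∂μ = p₁ * (μ S).toReal := by
    intro S hS hcase
    rcases hcase with hsub | hdisj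
    · have hdcc : Disjoint (Ico a c) (Ico c b) := by
        rw [Set.disjoint_left]; intro z hz hz'; exact absurd hz.2 (not_lt.mpr hz'.1)
      have hsplit : ∫ y in S, p y ∂μ
          = ∫ y in S \ Ico a b, p y ∂μ + ∫ y in Ico a b, p y ∂μ := by
        rw [← setIntegral_union disjoint_sdiff_left measurableSet_Ico
          hpint.integrableOn hpint.integrableOn, diff_union_of_subset hsub]
      have hIab : ∫ y in Ico a b, p y ∂μ
          = ∫ y in Ico a c, p y ∂μ + ∫ y in Ico c b, p y ∂μ := by
        rw [← setIntegral_union hdcc measurableSet_Ico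
          hpint.integrableOn hpint.integrableOn, Ico_union_Ico_eq_Ico hac.le hcb.le]
      have h1 : ∫ y in S \ Ico a b, p y ∂μ = p₁ * (μ (S \ Ico a b)).toReal := by
        rw [setIntegral_congr_fun (hS.diff measurableSet_Ico)
          (g := fun _ => p₁) (fun y hy => by
            simp only [hp]
            rw [if_neg (fun h => hy.2 (hsub1 h)), if_neg (fun h => hy.2 (hsub2 h))]),
          setIntegral_const, smul_eq_mul, measureReal_def]
        ring
      have h2 : ∫ y in Ico a c, p y ∂μ = 0 := by
        rw [setIntegral_congr_fun measurableSet_Ico (g := fun _ => (0 : ℝ))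
          (fun y hy => by simp only [hp]; rw [if_pos hy])]
        simp
      have h3 : ∫ y in Ico c b, p y ∂μ = p₁ * A := by
        rw [setIntegral_congr_fun measurableSet_Ico (g := fun _ => (1 : ℝ))
          (fun y hy => by
            simp only [hp]
            rw [if_neg (fun h => absurd h.2 (not_lt.mpr hy.1)), if_pos hy]),
          setIntegral_const, smul_eq_mul, mul_one, measureReal_def, hμcb]
      have hmS : (μ S).toReal = (μ (S \ Ico a b)).toReal + A := by
        rw [← hab', ← ENNReal.toReal_add (measure_ne_top μ _) (measure_ne_top μ _),
          ← measure_union disjoint_sdiff_left measurableSet_Ico, diff_union_of_subset hsub]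
      rw [hsplit, hIab, h1, h2, h3, hmS]
      ring
    · have heq : EqOn p (fun _ => p₁) S := by
        intro y hy
        have hnab : y ∉ Ico a b := fun h => (eq_empty_iff_forall_notMem.mp hdisj y) ⟨hy, h⟩
        simp only [hp]
        rw [if_neg (fun h => hnab (hsub1 h)), if_neg (fun h => hnab (hsub2 h))]
      rw [setIntegral_congr_fun hS heq, setIntegral_const, smul_eq_mul, measureReal_def]
      ring
  have hnot : ∀ s ∈ 𝒯, s < a ∨ b < s := by
    intro s hs
    by_contra h
    push_neg at h
    exact (hIcc ⟨h.1, h.2⟩).2 hs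
  refine ⟨p, hpmeas, hprange, ?_, ?_, ?_⟩
  · intro t₁ t₂ ht₁ ht₂ hlt
    simp only [mem_union, mem_image, mem_insert_iff, mem_singleton_iff] at ht₁ ht₂
    rcases ht₁ with ⟨s₁, hs₁, rfl⟩ | rfl | rfl
    · rcases ht₂ with ⟨s₂, hs₂, rfl⟩ | rfl | rfl
      · -- Ioo s₁ s₂
        have hset : {y : ℝ | (s₁ : EReal) < (y : EReal) ∧ (y : EReal) < (s₂ : EReal)}
            = Ioo s₁ s₂ := by ext y; simp
        rw [hset]
        refine key _ measurableSet_Ioo ?_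
        rcases hnot s₂ hs₂ with h2 | h2
        · right; ext y; simp only [mem_inter_iff, mem_Ioo, mem_Ico, mem_empty_iff_false,
            iff_false, not_and]
          intro h1' h2' h3'; linarith
        · rcases hnot s₁ hs₁ with h1 | h1
          · left; intro y hy; exact ⟨by linarith [hy.1], by linarith [hy.2]⟩
          · right; ext y; simp only [mem_inter_iff, mem_Ioo, mem_Ico, mem_empty_iff_false,
              iff_false, not_and]
            intro h1' h2' h3'; linarith
      · exact absurd hlt (by simp)
      · -- Ioi s₁
        have hset : {y : ℝ | (s₁ : EReal) < (y : EReal) ∧ (y : EReal) < (⊤ : EReal)}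
            = Ioi s₁ := by ext y; simp
        rw [hset]
        refine key _ measurableSet_Ioi ?_
        rcases hnot s₁ hs₁ with h1 | h1
        · left; intro y hy; exact lt_of_lt_of_le h1 hy.1
        · right; ext y; simp only [mem_inter_iff, mem_Ioi, mem_Ico, mem_empty_iff_false,
            iff_false, not_and]
          intro h1' h2' h3'; linarith
    · rcases ht₂ with ⟨s₂, hs₂, rfl⟩ | rfl | rfl
      · -- Iio s₂
        have hset : {y : ℝ | (⊥ : EReal) < (y : EReal) ∧ (y : EReal) < (s₂ : EReal)}
            = Iio s₂ := by ext y; simp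
        rw [hset]
        refine key _ measurableSet_Iio ?_
        rcases hnot s₂ hs₂ with h2 | h2
        · right; ext y; simp only [mem_inter_iff, mem_Iio, mem_Ico, mem_empty_iff_false,
            iff_false, not_and]
          intro h1' h2' h3'; linarith
        · left; intro y hy; exact lt_trans hy.2 h2
      · exact absurd hlt (by simp)
      · -- univ
        have hset : {y : ℝ | (⊥ : EReal) < (y : EReal) ∧ (y : EReal) < (⊤ : EReal)}
            = univ := by ext y; simp
        rw [hset]
        exact key _ MeasurableSet.univ (Or.inl (subset_univ _))
    · exact absurd hlt (by simp)
  · have hsub0 : Ico a c ⊆ {y ∈ Icc ylo yhi | p y = 0} := by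
      intro y hy
      refine ⟨(hIcc ⟨hy.1, le_of_lt (lt_trans hy.2 hcb)⟩).1, ?_⟩
      simp only [hp]; rw [if_pos hy]
    calc (0 : ENNReal) < volume (Ico a c) := by
          rw [Real.volume_Ico]; exact ENNReal.ofReal_pos.mpr (by linarith)
      _ ≤ _ := measure_mono hsub0
  · have hsub1' : Ico c b ⊆ {y ∈ Icc ylo yhi | p y = 1} := by
      intro y hy
      refine ⟨(hIcc ⟨le_trans hac.le hy.1, hy.2.le⟩).1, ?_⟩
      simp only [hp]
      rw [if_neg (fun h => absurd h.2 (not_lt.mpr hy.1)), if_pos hy]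
    calc (0 : ENNReal) < volume (Ico c b) := by
          rw [Real.volume_Ico]; exact ENNReal.ofReal_pos.mpr (by linarith)
      _ ≤ _ := measure_mono hsub1'
end

section
/- Let Y be an integrable real random variable and p : ℝ → [0,1] a Borel function that is weakly increasing on ℝ. Suppose p(Y) is not almost surely constant, i.e., P(p(Y) = c) < 1 for every constant c. Then Cov(Y, p(Y)) = E[Y·p(Y)] − E[Y]·E[p(Y)] > 0. -/
/-!
With `m = E Y`, the covariance is `E[(p(Y) - p(m)) (Y - m)]`, because subtracting the constant
`p(m)` from `p(Y)` changes it by `p(m) E[Y - m] = 0`. Monotonicity of `p` makes the integrand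
nonnegative, so the covariance is nonnegative, and it vanishes only if the integrand does almost
surely. But `(p(Y) - p(m)) (Y - m) = 0` forces `p(Y) = p(m)`, so `p(Y)` would be a.s. constant.
-/

open MeasureTheory

section

variable {Ω : Type*} [MeasurableSpace Ω] {P : Measure Ω} {X Z : Ω → ℝ}

theorem MeasureTheory.Integrable.sub_const_mul_sub_const [IsFiniteMeasure P]
    (hX : Integrable X P) (hZ : Integrable Z P) (hXZ : Integrable (fun ω => X ω * Z ω) P)
    (c a : ℝ) :
    Integrable (fun ω => (Z ω - c) * (X ω - a)) P :=
  (((hXZ.sub (hZ.const_mul a)).sub (hX.const_mul c)).add (integrable_const (c * a))).congr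
    (.of_forall fun ω => by simp only [Pi.add_apply, Pi.sub_apply]; ring)

variable [IsProbabilityMeasure P]

theorem integral_mul_sub_integral_mul_integral_eq (hX : Integrable X P)
    (hZ : Integrable Z P) (hXZ : Integrable (fun ω => X ω * Z ω) P) (c : ℝ) :
    (∫ ω, X ω * Z ω ∂P) - (∫ ω, X ω ∂P) * (∫ ω, Z ω ∂P) =
      ∫ ω, (Z ω - c) * (X ω - ∫ ω', X ω' ∂P) ∂P := by
  set m := ∫ ω, X ω ∂P
  have hexpand : (fun ω => (Z ω - c) * (X ω - m)) =
      fun ω => (X ω * Z ω - m * Z ω) - c * (X ω - m) := by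
    funext ω; ring
  have hXZ_sub : Integrable (fun ω => X ω * Z ω - m * Z ω) P := hXZ.sub (hZ.const_mul m)
  have hX_sub : Integrable (fun ω => X ω - m) P := hX.sub (integrable_const m)
  rw [hexpand, integral_sub hXZ_sub (hX_sub.const_mul c), integral_sub hXZ (hZ.const_mul m),
    integral_const_mul, integral_const_mul, integral_sub hX (integrable_const m)]
  simp [m]

theorem sub_integral_mul_integral_pos_of_monotone {f : ℝ → ℝ} (hf : Monotone f)
    (hX : Integrable X P) (hfX : Integrable (fun ω => f (X ω)) P)
    (hXfX : Integrable (fun ω => X ω * f (X ω)) P) (hnc : ∀ c, ¬∀ᵐ ω ∂P, f (X ω) = c) :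
    0 < (∫ ω, X ω * f (X ω) ∂P) - (∫ ω, X ω ∂P) * (∫ ω, f (X ω) ∂P) := by
  set m := ∫ ω, X ω ∂P
  set g : Ω → ℝ := fun ω => (f (X ω) - f m) * (X ω - m)
  have hg_nonneg : 0 ≤ g := fun ω => (monovary_id_iff.2 hf).sub_mul_sub_nonneg m (X ω)
  have hg_int : Integrable g P := hX.sub_const_mul_sub_const hfX hXfX (f m) m
  rw [integral_mul_sub_integral_mul_integral_eq hX hfX hXfX (f m)]
  refine (integral_nonneg hg_nonneg).lt_of_ne fun hzero => hnc (f m) ?_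
  filter_upwards [(integral_eq_zero_iff_of_nonneg hg_nonneg hg_int).1 hzero.symm] with ω hω
  rcases mul_eq_zero.1 hω with h | h
  · exact sub_eq_zero.1 h
  · rw [sub_eq_zero.1 h]

end

theorem stmt_5_general {Ω : Type*} [MeasurableSpace Ω] (P : Measure Ω) [IsProbabilityMeasure P]
    (Y : Ω → ℝ) (hint : Integrable Y P)
    (p : ℝ → ℝ) (hp01 : ∀ y, p y ∈ Set.Icc (0 : ℝ) 1)
    (hmono : Monotone p)
    (hnotconst : ∀ c : ℝ, P {ω | p (Y ω) = c} < 1) :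
    0 < (∫ ω, Y ω * p (Y ω) ∂P) - (∫ ω, Y ω ∂P) * (∫ ω, p (Y ω) ∂P) := by
  have hpY_meas : AEStronglyMeasurable (fun ω => p (Y ω)) P :=
    (hmono.measurable.comp_aemeasurable hint.aemeasurable).aestronglyMeasurable
  have hpY_bound : ∀ᵐ ω ∂P, ‖p (Y ω)‖ ≤ 1 := .of_forall fun ω =>
    abs_le.2 ⟨by linarith [(hp01 (Y ω)).1], (hp01 (Y ω)).2⟩
  refine sub_integral_mul_integral_pos_of_monotone hmono hint (.of_bound hpY_meas 1 hpY_bound)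
    (hint.mul_bdd hpY_meas hpY_bound) fun c hc => (hnotconst c).ne ?_
  exact (measure_congr (ae_eq_univ.2 (ae_iff.1 hc))).trans measure_univ

/-- If `p : ℝ → [0,1]` is weakly increasing and `p(Y)` is not almost
surely constant, then `Cov(Y, p(Y)) = E[Y p(Y)] − E[Y] E[p(Y)] > 0`. -/
theorem stmt_5 {Ω : Type*} [MeasurableSpace Ω] (P : Measure Ω) [IsProbabilityMeasure P]
    (Y : Ω → ℝ) (hY : Measurable Y) (hint : Integrable Y P)
    (p : ℝ → ℝ) (hpmeas : Measurable p) (hp01 : ∀ y, p y ∈ Set.Icc (0 : ℝ) 1)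
    (hmono : Monotone p)
    (hnotconst : ∀ c : ℝ, P {ω | p (Y ω) = c} < 1) :
    0 < (∫ ω, Y ω * p (Y ω) ∂P) - (∫ ω, Y ω ∂P) * (∫ ω, p (Y ω) ∂P) :=
  stmt_5_general P Y hint p hp01 hmono hnotconst
end

section
/- Let X be a binary treatment and Y₀ a random variable such that for each x, x′ ∈ {0,1}: the conditional cdf of Y₀ given X = x′ is continuous and strictly increasing on its support, supp(Y₀ | X = x′) = supp(Y₀) = [y̲₀, ȳ₀], and P(X = x) > 0. Let 𝒯 = [a, b] ⊆ [y̲₀, ȳ₀]. If Y₀ is 𝒯-independent of X, then every latent propensity score p satisfies p(y₀) = P(X = 1) for μ-almost every y₀ ∈ [a, b]. -/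
open MeasureTheory Set

/-- corollary: `𝒯`-independence implies `𝒰`-independence.
Under the regularity assumptions on the conditional cdfs and common support
`[y̲₀, ȳ₀]`, if `Y₀` is `[a,b]`-independent of the binary treatment `X`, then every
latent propensity score equals `P(X = 1)` almost everywhere on `[a,b]`. -/
theorem stmt_6 {Ω : Type*} [MeasurableSpace Ω] (P : Measure Ω) [IsProbabilityMeasure P]
    (X Y₀ : Ω → ℝ) (hX : Measurable X) (hY : Measurable Y₀)
    (hbin : ∀ ω, X ω = 0 ∨ X ω = 1)
    (hpx : ∀ x ∈ ({0, 1} : Set ℝ), 0 < P {ω | X ω = x})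
    (ylo yhi : ℝ) (hy : ylo < yhi)
    (F : ℝ → ℝ → ℝ)
    (hF : ∀ x ∈ ({0, 1} : Set ℝ), ∀ y : ℝ,
      F x y = (P ({ω | Y₀ ω ≤ y} ∩ {ω | X ω = x})).toReal / (P {ω | X ω = x}).toReal)
    (hcont : ∀ x ∈ ({0, 1} : Set ℝ), ContinuousOn (F x) (Set.Icc ylo yhi))
    (hstrict : ∀ x ∈ ({0, 1} : Set ℝ), StrictMonoOn (F x) (Set.Icc ylo yhi))
    (hsupp : ∀ x ∈ ({0, 1} : Set ℝ),
      P ({ω | Y₀ ω ∈ Set.Icc ylo yhi} ∩ {ω | X ω = x}) = P {ω | X ω = x})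
    (a b : ℝ) (hab : a ≤ b) (hsub : Set.Icc a b ⊆ Set.Icc ylo yhi)
    (hTindep : ∀ τ ∈ Set.Icc a b,
        P ({ω | Y₀ ω ≤ τ} ∩ {ω | X ω = 0}) / P {ω | X ω = 0}
          = P ({ω | Y₀ ω ≤ τ} ∩ {ω | X ω = 1}) / P {ω | X ω = 1})
    (p : ℝ → ℝ) (hpmeas : Measurable p) (hp01 : ∀ y, p y ∈ Set.Icc (0 : ℝ) 1)
    (hprop : ∀ B : Set ℝ, MeasurableSet B →
      (P ({ω | X ω = 1} ∩ Y₀ ⁻¹' B)).toReal = ∫ y in B, p y ∂(Measure.map Y₀ P)) :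
    ∀ᵐ y ∂((Measure.map Y₀ P).restrict (Set.Icc a b)),
      p y = (P {ω | X ω = 1}).toReal := by
  classical
  set μ := Measure.map Y₀ P with hμdef
  haveI hμprob : IsProbabilityMeasure μ := Measure.isProbabilityMeasure_map hY.aemeasurable
  set c := (P {ω | X ω = 1}).toReal with hcdef
  -- basic facts about the binary treatment
  have hm0 : MeasurableSet {ω | X ω = (0:ℝ)} := hX (measurableSet_singleton 0)
  have hm1 : MeasurableSet {ω | X ω = (1:ℝ)} := hX (measurableSet_singleton 1)
  have h0mem : (0:ℝ) ∈ ({0,1} : Set ℝ) := by simp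
  have h1mem : (1:ℝ) ∈ ({0,1} : Set ℝ) := by simp
  have hP0pos := hpx 0 h0mem
  have hP1pos := hpx 1 h1mem
  have hP0ne : P {ω | X ω = (0:ℝ)} ≠ 0 := hP0pos.ne'
  have hP1ne : P {ω | X ω = (1:ℝ)} ≠ 0 := hP1pos.ne'
  have hP0top : P {ω | X ω = (0:ℝ)} ≠ ⊤ := measure_ne_top P _
  have hP1top : P {ω | X ω = (1:ℝ)} ≠ ⊤ := measure_ne_top P _
  have hdisj : Disjoint {ω | X ω = (0:ℝ)} {ω | X ω = (1:ℝ)} := by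
    rw [Set.disjoint_left]
    rintro ω (h0 : X ω = 0) (h1 : X ω = 1)
    rw [h0] at h1; norm_num at h1
  have hunion : {ω | X ω = (0:ℝ)} ∪ {ω | X ω = (1:ℝ)} = Set.univ := by
    ext ω; simpa using hbin ω
  have hsum : P {ω | X ω = (0:ℝ)} + P {ω | X ω = (1:ℝ)} = 1 := by
    rw [← measure_union hdisj hm1, hunion, measure_univ]
  -- splitting any set along the binary treatment
  have hsplit : ∀ S : Set Ω, MeasurableSet S →
      P S = P (S ∩ {ω | X ω = (0:ℝ)}) + P (S ∩ {ω | X ω = (1:ℝ)}) := by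
    intro S hS
    rw [← measure_union (hdisj.mono (Set.inter_subset_right) (Set.inter_subset_right))
      (hS.inter hm1), ← Set.inter_union_distrib_left, hunion, Set.inter_univ]
  -- μ(Iic τ) = P(Y₀ ≤ τ)
  have hμIic : ∀ τ : ℝ, μ (Iic τ) = P {ω | Y₀ ω ≤ τ} := by
    intro τ
    rw [hμdef, Measure.map_apply hY measurableSet_Iic]
    rfl
  -- Step 1: 𝒯-independence gives the joint measure on Iic τ
  have hjoint : ∀ τ ∈ Icc a b,
      P ({ω | Y₀ ω ≤ τ} ∩ {ω | X ω = (1:ℝ)}) = P {ω | X ω = (1:ℝ)} * μ (Iic τ) := by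
    intro τ hτ
    set A0 := P ({ω | Y₀ ω ≤ τ} ∩ {ω | X ω = (0:ℝ)}) with hA0
    set A1 := P ({ω | Y₀ ω ≤ τ} ∩ {ω | X ω = (1:ℝ)}) with hA1
    have hdiv := hTindep τ hτ
    have hcross0 := (ENNReal.div_eq_div_iff hP1ne hP1top hP0ne hP0top).mp hdiv
    have hcross : A0 * P {ω | X ω = (1:ℝ)} = A1 * P {ω | X ω = (0:ℝ)} := by
      rw [mul_comm A0, mul_comm A1]; exact hcross0
    have hmY : MeasurableSet {ω | Y₀ ω ≤ τ} := hY measurableSet_Iic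
    have : A1 = A1 * (P {ω | X ω = (0:ℝ)} + P {ω | X ω = (1:ℝ)}) := by
      rw [hsum, mul_one]
    rw [this, mul_add, ← hcross, ← add_mul, hμIic, hsplit _ hmY, mul_comm]
  -- Step 2: the propensity integral over Iic τ, τ ∈ [a,b]
  have hIic : ∀ τ ∈ Icc a b, ∫ y in Iic τ, p y ∂μ = c * (μ (Iic τ)).toReal := by
    intro τ hτ
    have h1 := hprop (Iic τ) measurableSet_Iic
    have hpre : Y₀ ⁻¹' Iic τ = {ω | Y₀ ω ≤ τ} := rfl
    rw [hpre, Set.inter_comm] at h1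
    rw [← h1, hjoint τ hτ, ENNReal.toReal_mul]
  -- Step 3: μ is carried by [ylo, yhi]
  have hμsupport : μ (Icc ylo yhi) = 1 := by
    have hmS : MeasurableSet {ω | Y₀ ω ∈ Icc ylo yhi} := hY measurableSet_Icc
    have : P {ω | Y₀ ω ∈ Icc ylo yhi} = 1 := by
      rw [hsplit _ hmS, hsupp 0 h0mem, hsupp 1 h1mem, hsum]
    rw [hμdef, Measure.map_apply hY measurableSet_Icc]
    exact this
  have hμout : μ (Icc ylo yhi)ᶜ = 0 := by
    rw [measure_compl measurableSet_Icc (measure_ne_top μ _), hμsupport, measure_univ, tsub_self]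
  have hyloa : ylo ≤ a := (hsub ⟨le_refl a, hab⟩).1
  have hayhi : a ≤ yhi := le_trans hab (hsub ⟨hab, le_refl b⟩).2
  -- Step 4: the integral over Iio a
  have hIio : ∫ y in Iio a, p y ∂μ = c * (μ (Iio a)).toReal := by
    rcases eq_or_lt_of_le hyloa with heq | hlt
    · -- a = ylo : Iio a is μ-null
      have hnull : μ (Iio a) = 0 := by
        refine measure_mono_null (fun y hy' => ?_) hμout
        simp only [mem_compl_iff, mem_Icc, not_and_or, not_le]
        exact Or.inl (by rw [heq]; exact hy')
      rw [hnull, Measure.restrict_eq_zero.mpr hnull]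
      simp
    · -- ylo < a : μ has no atom at a, so Iio a =ᵐ Iic a
      have hatom : ∀ x ∈ ({0,1} : Set ℝ), P ({ω | Y₀ ω = a} ∩ {ω | X ω = x}) = 0 := by
        intro x hx
        set d := (P {ω | X ω = x}).toReal with hd
        have hdpos : 0 < d := ENNReal.toReal_pos (hpx x hx).ne' (measure_ne_top P _)
        -- the approximating sequence
        set τ : ℕ → ℝ := fun n => a - (a - ylo) / (n + 1) with hτdef
        have hτlt : ∀ n, τ n < a := by
          intro n
          have : 0 < (a - ylo) / (n + 1) := div_pos (by linarith) (by positivity)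
          simp only [hτdef]; linarith
        have hτmem : ∀ n, τ n ∈ Icc ylo yhi := by
          intro n
          constructor
          · have h1 : (a - ylo) / (n + 1) ≤ (a - ylo) := by
              apply div_le_self (by linarith)
              push_cast; linarith [Nat.cast_nonneg (α := ℝ) n]
            simp only [hτdef]; linarith
          · linarith [hτlt n, hayhi]
        have hτmono : Monotone τ := by
          intro m n hmn
          simp only [hτdef]
          have hmn' : (m:ℝ) + 1 ≤ (n:ℝ) + 1 := by
            have : (m:ℝ) ≤ n := by exact_mod_cast hmn
            linarith
          have := div_le_div_of_nonneg_left (show (0:ℝ) ≤ a - ylo by linarith)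
            (show (0:ℝ) < (m:ℝ) + 1 by positivity) hmn'
          linarith
        have hτtend : Filter.Tendsto τ Filter.atTop (nhds a) := by
          have h1 : Filter.Tendsto (fun n : ℕ => (a - ylo) / (n + 1)) Filter.atTop (nhds 0) := by
            apply Filter.Tendsto.div_atTop (tendsto_const_nhds)
            exact Filter.tendsto_atTop_add_const_right _ 1 tendsto_natCast_atTop_atTop
          have := Filter.Tendsto.sub (tendsto_const_nhds (x := a)) h1
          simpa using this
        -- continuity of F x at a within Icc
        have haIcc : a ∈ Icc ylo yhi := ⟨hyloa, hayhi⟩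
        have hcw : ContinuousWithinAt (F x) (Icc ylo yhi) a := hcont x hx a haIcc
        have hFtend : Filter.Tendsto (fun n => F x (τ n)) Filter.atTop (nhds (F x a)) := by
          apply hcw.tendsto.comp
          rw [tendsto_nhdsWithin_iff]
          exact ⟨hτtend, Filter.Eventually.of_forall hτmem⟩
        -- rewrite F in terms of the joint measure
        have hGF : ∀ y : ℝ, (P ({ω | Y₀ ω ≤ y} ∩ {ω | X ω = x})).toReal = F x y * d := by
          intro y
          rw [hF x hx y]
          rw [hd, div_mul_cancel₀]
          exact (ENNReal.toReal_pos (hpx x hx).ne' (measure_ne_top P _)).ne'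
        have hGtend : Filter.Tendsto
            (fun n => (P ({ω | Y₀ ω ≤ τ n} ∩ {ω | X ω = x})).toReal) Filter.atTop
            (nhds ((P ({ω | Y₀ ω ≤ a} ∩ {ω | X ω = x})).toReal)) := by
          simp only [hGF]
          exact hFtend.mul_const d
        -- monotone union of sets
        have hmono : Monotone (fun n => {ω | Y₀ ω ≤ τ n} ∩ {ω | X ω = x}) := by
          intro m n hmn ω ⟨h1, h2⟩
          exact ⟨le_trans h1 (hτmono hmn), h2⟩
        have hUnion : ⋃ n, ({ω | Y₀ ω ≤ τ n} ∩ {ω | X ω = x}) =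
            {ω | Y₀ ω < a} ∩ {ω | X ω = x} := by
          ext ω
          simp only [mem_iUnion, mem_inter_iff, mem_setOf_eq]
          constructor
          · rintro ⟨n, h1, h2⟩; exact ⟨lt_of_le_of_lt h1 (hτlt n), h2⟩
          · rintro ⟨h1, h2⟩
            have : ∀ᶠ n in Filter.atTop, Y₀ ω < τ n := hτtend.eventually (eventually_gt_nhds h1)
            obtain ⟨n, hn⟩ := this.exists
            exact ⟨n, hn.le, h2⟩
        have hμtend : Filter.Tendsto
            (fun n => P ({ω | Y₀ ω ≤ τ n} ∩ {ω | X ω = x})) Filter.atTop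
            (nhds (P ({ω | Y₀ ω < a} ∩ {ω | X ω = x}))) := by
          rw [← hUnion]
          exact tendsto_measure_iUnion_atTop hmono
        have hμtendR : Filter.Tendsto
            (fun n => (P ({ω | Y₀ ω ≤ τ n} ∩ {ω | X ω = x})).toReal) Filter.atTop
            (nhds ((P ({ω | Y₀ ω < a} ∩ {ω | X ω = x})).toReal)) :=
          (ENNReal.tendsto_toReal (measure_ne_top P _)).comp hμtend
        have hlim : (P ({ω | Y₀ ω < a} ∩ {ω | X ω = x})).toReal
            = (P ({ω | Y₀ ω ≤ a} ∩ {ω | X ω = x})).toReal :=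
          tendsto_nhds_unique hμtendR hGtend
        have heqENN : P ({ω | Y₀ ω < a} ∩ {ω | X ω = x})
            = P ({ω | Y₀ ω ≤ a} ∩ {ω | X ω = x}) :=
          (ENNReal.toReal_eq_toReal_iff' (measure_ne_top P _) (measure_ne_top P _)).mp hlim
        -- decompose {Y₀ ≤ a} = {Y₀ < a} ∪ {Y₀ = a}
        have hdec : P ({ω | Y₀ ω ≤ a} ∩ {ω | X ω = x})
            = P ({ω | Y₀ ω < a} ∩ {ω | X ω = x}) + P ({ω | Y₀ ω = a} ∩ {ω | X ω = x}) := by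
          rw [← measure_union _ (show MeasurableSet ({ω | Y₀ ω = a} ∩ {ω | X ω = x}) from
            (hY (measurableSet_singleton a)).inter (hX (measurableSet_singleton x)))]
          · congr 1
            ext ω
            simp only [mem_union, mem_inter_iff, mem_setOf_eq]
            constructor
            · rintro ⟨h1, h2⟩
              rcases lt_or_eq_of_le h1 with h | h
              · exact Or.inl ⟨h, h2⟩
              · exact Or.inr ⟨h, h2⟩
            · rintro (⟨h1, h2⟩ | ⟨h1, h2⟩)
              · exact ⟨h1.le, h2⟩
              · exact ⟨h1.le, h2⟩
          · rw [Set.disjoint_left]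
            rintro ω ⟨h1, _⟩ ⟨h2, _⟩
            simp only [mem_setOf_eq] at h1 h2
            rw [h2] at h1; exact lt_irrefl a h1
        rw [← heqENN] at hdec
        nth_rewrite 1 [← add_zero (P ({ω | Y₀ ω < a} ∩ {ω | X ω = x}))] at hdec
        exact ((ENNReal.add_right_inj (measure_ne_top P _)).mp hdec).symm
      have hμa : μ {a} = 0 := by
        have hPa : P {ω | Y₀ ω = a} = 0 := by
          have hma : MeasurableSet {ω | Y₀ ω = a} := hY (measurableSet_singleton a)
          rw [hsplit _ hma, hatom 0 h0mem, hatom 1 h1mem, add_zero]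
        rw [hμdef, Measure.map_apply hY (measurableSet_singleton a)]
        exact hPa
      have hae : Iio a =ᵐ[μ] Iic a := by
        rw [Filter.eventuallyEq_set]
        have : ∀ᵐ y ∂μ, y ≠ a := by
          rw [ae_iff]
          simpa using hμa
        filter_upwards [this] with y hy
        simp only [mem_Iio, mem_Iic]
        constructor
        · exact le_of_lt
        · intro h; exact lt_of_le_of_ne h hy
      rw [setIntegral_congr_set hae, measure_congr hae]
      exact hIic a ⟨le_refl a, hab⟩
  -- Step 5: integral over Icc a t for t ∈ [a,b]
  have hμIicfin : ∀ s : Set ℝ, μ s ≠ ⊤ := fun s => measure_ne_top μ s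
  have hpint : Integrable p μ := by
    refine ⟨hpmeas.aestronglyMeasurable, ?_⟩
    apply HasFiniteIntegral.mono' (g := fun _ => (1:ℝ)) (hasFiniteIntegral_const 1)
    filter_upwards with y
    rw [Real.norm_eq_abs, abs_le]
    exact ⟨by linarith [(hp01 y).1], (hp01 y).2⟩
  have hIcc : ∀ t ∈ Icc a b, ∫ y in Icc a t, p y ∂μ = c * (μ (Icc a t)).toReal := by
    intro t ht
    have hdisj' : Disjoint (Iio a) (Icc a t) := by
      rw [Set.disjoint_left]; intro y h1 h2; exact absurd h2.1 (not_le.mpr h1)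
    have hun : Iio a ∪ Icc a t = Iic t := by
      ext y; simp only [mem_union, mem_Iio, mem_Icc, mem_Iic]
      constructor
      · rintro (h | ⟨h1, h2⟩)
        · linarith [ht.1]
        · exact h2
      · intro h
        rcases lt_or_ge y a with h' | h'
        · exact Or.inl h'
        · exact Or.inr ⟨h', h⟩
    have hIntU : ∫ y in Iic t, p y ∂μ = ∫ y in Iio a, p y ∂μ + ∫ y in Icc a t, p y ∂μ := by
      rw [← hun]
      exact setIntegral_union hdisj' measurableSet_Icc hpint.integrableOn hpint.integrableOn
    have hMeasU : μ (Iic t) = μ (Iio a) + μ (Icc a t) := by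
      rw [← hun, measure_union hdisj' measurableSet_Icc]
    have h1 := hIic t ht
    rw [hIntU, hIio, hMeasU, ENNReal.toReal_add (hμIicfin _) (hμIicfin _)] at h1
    linarith
  -- Step 6: the two measures on the restriction agree
  set μ' := μ.restrict (Icc a b) with hμ'def
  have hcnonneg : 0 ≤ c := ENNReal.toReal_nonneg
  set ν₁ := μ'.withDensity (fun y => ENNReal.ofReal (p y)) with hν₁def
  set ν₂ := μ'.withDensity (fun _ => ENNReal.ofReal c) with hν₂def
  haveI : IsFiniteMeasure μ' := by
    constructor
    rw [hμ'def, Measure.restrict_apply_univ]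
    exact lt_of_le_of_lt (measure_mono (subset_univ _)) (measure_lt_top μ univ)
  haveI hν₁fin : IsFiniteMeasure ν₁ := by
    constructor
    rw [hν₁def, withDensity_apply _ MeasurableSet.univ, Measure.restrict_univ]
    calc ∫⁻ y, ENNReal.ofReal (p y) ∂μ' ≤ ∫⁻ _, 1 ∂μ' := by
          apply lintegral_mono
          intro y
          exact ENNReal.ofReal_le_one.mpr (hp01 y).2
      _ = μ' univ := by simp
      _ < ⊤ := measure_lt_top μ' univ
  have hinter : ∀ τ : ℝ, a ≤ τ → Iic τ ∩ Icc a b = Icc a (min τ b) := by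
    intro τ hτ
    ext y
    simp only [mem_inter_iff, mem_Iic, mem_Icc, le_min_iff]
    constructor
    · rintro ⟨h1, h2, h3⟩; exact ⟨h2, h1, h3⟩
    · rintro ⟨h1, h2, h3⟩; exact ⟨h2, h1, h3⟩
  have hinter' : ∀ τ : ℝ, τ < a → Iic τ ∩ Icc a b = ∅ := by
    intro τ hτ
    rw [Set.eq_empty_iff_forall_notMem]
    rintro y ⟨h1, h2, _⟩
    simp only [mem_Iic] at h1
    linarith
  have hν₁Iic : ∀ τ : ℝ, ν₁ (Iic τ) = ν₂ (Iic τ) := by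
    intro τ
    rw [hν₁def, hν₂def, withDensity_apply _ measurableSet_Iic,
      withDensity_apply _ measurableSet_Iic]
    rw [hμ'def]
    rw [Measure.restrict_restrict measurableSet_Iic]
    rcases lt_or_ge τ a with hτ | hτ
    · rw [hinter' τ hτ]
      simp
    · rw [hinter τ hτ]
      have htmem : min τ b ∈ Icc a b := ⟨le_min hτ hab, min_le_right τ b⟩
      have h1 : ∫⁻ y in Icc a (min τ b), ENNReal.ofReal (p y) ∂μ
          = ENNReal.ofReal (∫ y in Icc a (min τ b), p y ∂μ) := by
        rw [ofReal_integral_eq_lintegral_ofReal hpint.integrableOn]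
        filter_upwards with y
        exact (hp01 y).1
      rw [h1, hIcc _ htmem, setLIntegral_const, ENNReal.ofReal_mul hcnonneg,
        ENNReal.ofReal_toReal (hμIicfin _)]
  have hνeq : ν₁ = ν₂ := Measure.ext_of_Iic ν₁ ν₂ hν₁Iic
  -- Step 7: conclude via setIntegral characterization
  have hpint' : Integrable p μ' := hpint.restrict
  have hkey : ∀ s : Set ℝ, MeasurableSet s → ∫ y in s, p y ∂μ' = c * (μ' s).toReal := by
    intro s hs
    have h1 : ∫⁻ y in s, ENNReal.ofReal (p y) ∂μ' = ENNReal.ofReal (∫ y in s, p y ∂μ') := by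
      rw [ofReal_integral_eq_lintegral_ofReal hpint'.integrableOn]
      filter_upwards with y
      exact (hp01 y).1
    have h2 : ν₁ s = ν₂ s := by rw [hνeq]
    rw [hν₁def, hν₂def, withDensity_apply _ hs, withDensity_apply _ hs, h1,
      setLIntegral_const] at h2
    have h3 : ENNReal.ofReal (∫ y in s, p y ∂μ') = ENNReal.ofReal (c * (μ' s).toReal) := by
      rw [h2, ENNReal.ofReal_mul hcnonneg, ENNReal.ofReal_toReal (measure_ne_top μ' s)]
    have hnn : 0 ≤ ∫ y in s, p y ∂μ' := by
      apply setIntegral_nonneg hs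
      intro y _
      exact (hp01 y).1
    have hnn2 : 0 ≤ c * (μ' s).toReal := mul_nonneg hcnonneg ENNReal.toReal_nonneg
    exact (ENNReal.ofReal_eq_ofReal_iff hnn hnn2).mp h3
  have hzero : (fun y => p y - c) =ᵐ[μ'] 0 := by
    apply Integrable.ae_eq_zero_of_forall_setIntegral_eq_zero
      (hpint'.sub (integrable_const c))
    intro s hs hμs
    show ∫ y in s, (p y - c) ∂μ' = 0
    calc ∫ y in s, (p y - c) ∂μ'
        = ∫ y in s, p y ∂μ' - ∫ _ in s, c ∂μ' :=
          integral_sub hpint'.integrableOn (integrable_const c).integrableOn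
      _ = 0 := by
          rw [hkey s hs, setIntegral_const, smul_eq_mul, mul_comm, measureReal_def, sub_self]
  filter_upwards [hzero] with y hy
  have : p y - c = 0 := hy
  linarith
end

section
/- Let A, B be real random variables with finite means and X a real random variable such that the pair (A, B) is independent of X. Define V = (A − E A) + (B − E B)·X. Suppose that for every x in the support of X, the random variable A + B·x is symmetrically distributed about E A + x·E B (i.e., (A + Bx) − (E A + x E B) has the same distribution as its negation) and its distribution is atomless. Then V is median independent of X: E[1{V ≤ 0} | σ(X)] = 1/2 almost surely; in particular P(V ≤ 0 | X = x) = 1/2 for every x in the support of X with P(X = x) > 0, and P(V ≤ 0) = 1/2. -/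
open MeasureTheory Set ProbabilityTheory

/-- The (topological) support of a measure on `ℝ`. -/
def msupport (μ : Measure ℝ) : Set ℝ :=
  {y : ℝ | ∀ ε > 0, 0 < μ (Set.Ioo (y - ε) (y + ε))}

lemma msupport_compl_null (ν : Measure ℝ) : ν (msupport ν)ᶜ = 0 := by
  set U : ℚ × ℚ → Set ℝ := fun pq =>
    if ν (Set.Ioo (pq.1 : ℝ) pq.2) = 0 then Set.Ioo (pq.1 : ℝ) pq.2 else ∅ with hU
  have hsub : (msupport ν)ᶜ ⊆ ⋃ pq, U pq := by
    intro y hy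
    simp only [msupport, mem_compl_iff, mem_setOf_eq, not_forall] at hy
    push_neg at hy
    obtain ⟨ε, hε, h0⟩ := hy
    have h0' : ν (Set.Ioo (y - ε) (y + ε)) = 0 := le_antisymm h0 zero_le
    obtain ⟨p, hp1, hp2⟩ := exists_rat_btwn (show y - ε < y by linarith)
    obtain ⟨q, hq1, hq2⟩ := exists_rat_btwn (show y < y + ε by linarith)
    have hnull : ν (Set.Ioo (p : ℝ) q) = 0 :=
      measure_mono_null
        (fun z hz => mem_Ioo.2 ⟨lt_trans hp1 (mem_Ioo.1 hz).1, lt_trans (mem_Ioo.1 hz).2 hq2⟩) h0'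
    refine mem_iUnion.2 ⟨(p, q), ?_⟩
    simp only [hU, hnull, if_true]
    exact ⟨hp2, hq1⟩
  refine measure_mono_null hsub (measure_iUnion_null fun pq => ?_)
  by_cases h : ν (Set.Ioo (pq.1 : ℝ) pq.2) = 0 <;> simp [hU, h]

/-- Manski. In the random-coefficients model with `(A,B) ⫫ X`,
the reduced-form unobservable `V = (A − EA) + (B − EB)X` is median independent of
`X` when each `A + Bx` is symmetrically distributed about its mean with an
atomless distribution. -/
theorem stmt_7 {Ω : Type*} [MeasurableSpace Ω] (P : Measure Ω) [IsProbabilityMeasure P]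
    (A B X : Ω → ℝ) (hA : Measurable A) (hB : Measurable B) (hXm : Measurable X)
    (hAint : Integrable A P) (hBint : Integrable B P) (hXint : Integrable X P)
    (hindep : IndepFun (fun ω => (A ω, B ω)) X P)
    (V : Ω → ℝ)
    (hV : ∀ ω, V ω = (A ω - ∫ ω', A ω' ∂P) + (B ω - ∫ ω', B ω' ∂P) * X ω)
    (hsym : ∀ x ∈ msupport (Measure.map X P),
      Measure.map (fun ω => (A ω + B ω * x) - ((∫ ω', A ω' ∂P) + x * ∫ ω', B ω' ∂P)) P
        = Measure.map
            (fun ω => -((A ω + B ω * x) - ((∫ ω', A ω' ∂P) + x * ∫ ω', B ω' ∂P))) P)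
    (hatomless : ∀ x ∈ msupport (Measure.map X P), ∀ r : ℝ,
      P {ω | A ω + B ω * x = r} = 0) :
    (P[Set.indicator {ω | V ω ≤ 0} (fun _ => (1 : ℝ)) |
        MeasurableSpace.comap X inferInstance] =ᵐ[P] fun _ => (1 : ℝ) / 2)
    ∧ (∀ x ∈ msupport (Measure.map X P), 0 < P {ω | X ω = x} →
        P ({ω | V ω ≤ 0} ∩ {ω | X ω = x}) = P {ω | X ω = x} / 2)
    ∧ P {ω | V ω ≤ 0} = 1 / 2 := by
  set EA := ∫ ω', A ω' ∂P with hEA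
  set EB := ∫ ω', B ω' ∂P with hEB
  have hABm : Measurable (fun ω => (A ω, B ω)) := hA.prodMk hB
  set μ := Measure.map (fun ω => (A ω, B ω)) P with hμ
  set ν := Measure.map X P with hν
  haveI : IsProbabilityMeasure ν := Measure.isProbabilityMeasure_map hXm.aemeasurable
  haveI : IsProbabilityMeasure μ := Measure.isProbabilityMeasure_map hABm.aemeasurable
  have hmap : Measure.map (fun ω => ((A ω, B ω), X ω)) P = μ.prod ν :=
    (indepFun_iff_map_prod_eq_prod_map_map hABm.aemeasurable hXm.aemeasurable).mp hindep
  set f : (ℝ × ℝ) × ℝ → ℝ := fun p => (p.1.1 + p.1.2 * p.2) - (EA + p.2 * EB) with hf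
  have hfm : Measurable f := by
    simp only [hf]; fun_prop
  have hVf : ∀ ω, V ω = f ((A ω, B ω), X ω) := by
    intro ω; simp only [hf]; rw [hV ω]; ring
  -- the conditional probability is 1/2 on the support
  have hhalf : ∀ y ∈ msupport ν, P {ω | f ((A ω, B ω), y) ≤ 0} = 1 / 2 := by
    intro y hy
    set W : Ω → ℝ := fun ω => (A ω + B ω * y) - (EA + y * EB) with hWdef
    have hWm : Measurable W := by simp only [hWdef]; fun_prop
    have hseteq : {ω | f ((A ω, B ω), y) ≤ 0} = {ω | W ω ≤ 0} := rfl
    have hs : Measure.map W P = Measure.map (fun ω => -W ω) P := hsym y hy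
    have h1 : Measure.map W P (Iic 0) = P {ω | W ω ≤ 0} := by
      rw [Measure.map_apply hWm measurableSet_Iic]; rfl
    have h2 : Measure.map (fun ω => -W ω) P (Iic 0) = P {ω | 0 ≤ W ω} := by
      rw [Measure.map_apply (f := fun ω => -W ω) hWm.neg measurableSet_Iic]
      congr 1; ext ω; simp [neg_nonpos]
    have heqPT : P {ω | W ω ≤ 0} = P {ω | 0 ≤ W ω} := by rw [← h1, hs, h2]
    have hzero : P {ω | W ω = 0} = 0 := by
      have h := hatomless y hy (EA + y * EB)
      have : {ω | W ω = 0} = {ω | A ω + B ω * y = EA + y * EB} := by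
        ext ω; simp [hWdef, sub_eq_zero]
      rw [this]; exact h
    have hunion : {ω | W ω ≤ 0} ∪ {ω | 0 ≤ W ω} = univ := by
      ext ω; simp [le_total (W ω) 0]
    have hinter : {ω | W ω ≤ 0} ∩ {ω | 0 ≤ W ω} = {ω | W ω = 0} := by
      ext ω; simp [le_antisymm_iff, and_comm]
    have hWge : MeasurableSet {ω | (0:ℝ) ≤ W ω} := measurableSet_le measurable_const hWm
    have hsum := measure_union_add_inter (μ := P) {ω | W ω ≤ 0} hWge
    rw [hunion, hinter, hzero, measure_univ, add_zero, ← heqPT] at hsum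
    rw [hseteq, ENNReal.eq_div_iff (two_ne_zero) (ENNReal.ofNat_ne_top), two_mul]
    exact hsum.symm
  -- key computation
  have key : ∀ t : Set ℝ, MeasurableSet t →
      P ({ω | V ω ≤ 0} ∩ X ⁻¹' t) = P (X ⁻¹' t) / 2 := by
    intro t ht
    set S : Set ((ℝ × ℝ) × ℝ) := {p | f p ≤ 0 ∧ p.2 ∈ t} with hS
    have hSm : MeasurableSet S :=
      (measurableSet_le hfm measurable_const).inter (measurable_snd ht)
    have hpre : (fun ω => ((A ω, B ω), X ω)) ⁻¹' S = {ω | V ω ≤ 0} ∩ X ⁻¹' t := by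
      ext ω
      simp only [hS, mem_preimage, mem_setOf_eq, mem_inter_iff, hVf ω]
    have h1 : P ({ω | V ω ≤ 0} ∩ X ⁻¹' t) = (μ.prod ν) S := by
      rw [← hpre, ← hmap, Measure.map_apply (hABm.prodMk hXm) hSm]
    have h2 : (μ.prod ν) S = ∫⁻ y, μ ((fun z => (z, y)) ⁻¹' S) ∂ν :=
      Measure.prod_apply_symm hSm
    have hslice : ∀ y, μ ((fun z : ℝ × ℝ => (z, y)) ⁻¹' S)
        = t.indicator (fun y => μ {z : ℝ × ℝ | f (z, y) ≤ 0}) y := by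
      intro y
      by_cases hyt : y ∈ t
      · rw [indicator_of_mem hyt]
        congr 1; ext z; simp [hS, hyt]
      · rw [indicator_of_notMem hyt]
        have : (fun z : ℝ × ℝ => (z, y)) ⁻¹' S = ∅ := by
          ext z; simp [hS, hyt]
        rw [this, measure_empty]
    have h3 : ∫⁻ y, μ ((fun z : ℝ × ℝ => (z, y)) ⁻¹' S) ∂ν
        = ∫⁻ y in t, μ {z : ℝ × ℝ | f (z, y) ≤ 0} ∂ν := by
      rw [lintegral_congr hslice, lintegral_indicator ht]
    have hg : ∀ y, μ {z : ℝ × ℝ | f (z, y) ≤ 0} = P {ω | f ((A ω, B ω), y) ≤ 0} := by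
      intro y
      rw [hμ, Measure.map_apply hABm]
      · rfl
      · exact measurableSet_le (hfm.comp (measurable_id.prodMk measurable_const))
          measurable_const
    have hae : ∀ᵐ y ∂ν, y ∈ msupport ν := by
      have h := msupport_compl_null ν
      rw [ae_iff]
      exact h
    have h4 : ∫⁻ y in t, μ {z : ℝ × ℝ | f (z, y) ≤ 0} ∂ν
        = ∫⁻ y in t, ((1 : ENNReal) / 2) ∂ν := by
      refine lintegral_congr_ae (ae_restrict_of_ae ?_)
      filter_upwards [hae] with y hy
      rw [hg y, hhalf y hy]
    rw [h1, h2, h3, h4, lintegral_const, Measure.restrict_apply_univ, hν,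
      Measure.map_apply hXm ht, one_div, ENNReal.div_eq_inv_mul]
  have hVm : Measurable V := by
    have : V = fun ω => f ((A ω, B ω), X ω) := funext hVf
    rw [this]; exact hfm.comp (hABm.prodMk hXm)
  have hVset : MeasurableSet {ω | V ω ≤ 0} := measurableSet_le hVm measurable_const
  refine ⟨?_, ?_, ?_⟩
  · have hm : MeasurableSpace.comap X inferInstance ≤ _ := hXm.comap_le
    haveI : SigmaFinite (P.trim hm) := by
      haveI := isFiniteMeasure_trim (μ := P) hm
      infer_instance
    refine (ae_eq_condExp_of_forall_setIntegral_eq hm ?_ ?_ ?_ ?_).symm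
    · exact (integrable_const (1 : ℝ)).indicator hVset
    · intro s _ _
      exact integrableOn_const (measure_ne_top P s)
    · rintro s ⟨u, hu, rfl⟩ _
      rw [setIntegral_const, setIntegral_indicator hVset, setIntegral_const, smul_eq_mul,
        smul_eq_mul, mul_one, inter_comm, measureReal_def, measureReal_def, key u hu, ENNReal.toReal_div]
      simp
      ring
    · exact StronglyMeasurable.aestronglyMeasurable stronglyMeasurable_const
  · intro x _ _
    exact key {x} (measurableSet_singleton x)
  · have h := key univ MeasurableSet.univ
    simpa using h
end

section
/- Let X be a real random variable with atomless distribution and U a random variable uniformly distributed on [0,1], and let 𝒯 ⊆ [0,1]. Then U is 𝒯-independent of X (i.e., for every τ ∈ 𝒯, E[1{U ≤ τ} | σ(X)] = τ almost surely) if and only if for every x ∈ ℝ and every t₁, t₂ ∈ 𝒯 ∪ {0, 1} with t₁ < t₂, P({X > x} ∩ {U ∈ (t₁, t₂)}) = P(X > x) · (t₂ − t₁). -/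
open MeasureTheory Set

/-- Average value characterization, continuous treatment.
With `X` atomless and `U ~ Unif[0,1]`, `U` is `𝒯`-independent of `X` iff for every
`x` and every interval with endpoints in `𝒯 ∪ {0,1}`,
`P({X > x} ∩ {U ∈ (t₁,t₂)}) = P(X > x)(t₂ − t₁)`. -/
theorem stmt_8 {Ω : Type*} [MeasurableSpace Ω] (P : Measure Ω) [IsProbabilityMeasure P]
    (X U : Ω → ℝ) (hX : Measurable X) (hU : Measurable U)
    (hXatomless : ∀ x : ℝ, P {ω | X ω = x} = 0)
    (hUunif : Measure.map U P = volume.restrict (Set.Icc (0 : ℝ) 1))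
    (𝒯 : Set ℝ) (h𝒯 : 𝒯 ⊆ Set.Icc (0 : ℝ) 1) :
    (∀ τ ∈ 𝒯,
        P[Set.indicator {ω | U ω ≤ τ} (fun _ => (1 : ℝ)) |
          MeasurableSpace.comap X inferInstance] =ᵐ[P] fun _ => τ)
      ↔ (∀ x : ℝ, ∀ t₁ ∈ 𝒯 ∪ {0, 1}, ∀ t₂ ∈ 𝒯 ∪ {0, 1}, t₁ < t₂ →
          P ({ω | x < X ω} ∩ {ω | t₁ < U ω ∧ U ω < t₂})
            = P {ω | x < X ω} * ENNReal.ofReal (t₂ - t₁)) := by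
  have hm : MeasurableSpace.comap X inferInstance ≤ ‹MeasurableSpace Ω› := hX.comap_le
  haveI : SigmaFinite (P.trim hm) := inferInstance
  -- basic facts about U
  have hUA : ∀ s : Set ℝ, MeasurableSet s → P (U ⁻¹' s) = volume (s ∩ Icc 0 1) := by
    intro s hs
    rw [← Measure.map_apply hU hs, hUunif, Measure.restrict_apply hs]
  have hU0 : P {ω | U ω ≤ 0} = 0 := by
    have : {ω | U ω ≤ 0} = U ⁻¹' (Iic 0) := rfl
    rw [this, hUA _ measurableSet_Iic]
    refine le_antisymm (le_trans (measure_mono (show Iic 0 ∩ Icc 0 1 ⊆ {(0 : ℝ)} from ?_))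
      (le_of_eq Real.volume_singleton)) (zero_le)
    rintro y ⟨h1, h2, _⟩
    exact le_antisymm h1 h2
  have hUpt : ∀ t : ℝ, P {ω | U ω = t} = 0 := by
    intro t
    have : {ω | U ω = t} = U ⁻¹' {t} := rfl
    rw [this, hUA _ (measurableSet_singleton t)]
    refine le_antisymm (le_trans (measure_mono (inter_subset_left (t := Icc 0 1)))
      (le_of_eq Real.volume_singleton)) (zero_le)
  have hU1 : P {ω | 1 < U ω} = 0 := by
    have : {ω | 1 < U ω} = U ⁻¹' (Ioi 1) := rfl
    rw [this, hUA _ measurableSet_Ioi]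
    have he : Ioi (1 : ℝ) ∩ Icc 0 1 = ∅ := by
      ext y
      simp only [mem_inter_iff, mem_Ioi, mem_Icc, mem_empty_iff_false, iff_false]
      rintro ⟨h1, _, h2⟩; linarith
    rw [he, measure_empty]
  have hUle : ∀ t : ℝ, 0 ≤ t → t ≤ 1 → P {ω | U ω ≤ t} = ENNReal.ofReal t := by
    intro t ht0 ht1
    have : {ω | U ω ≤ t} = U ⁻¹' (Iic t) := rfl
    rw [this, hUA _ measurableSet_Iic]
    have : Iic t ∩ Icc 0 1 = Icc 0 t := by
      ext y; simp only [mem_inter_iff, mem_Iic, mem_Icc]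
      constructor
      · rintro ⟨h1, h2, _⟩; exact ⟨h2, h1⟩
      · rintro ⟨h1, h2⟩; exact ⟨h2, h1, h2.trans ht1⟩
    rw [this, Real.volume_Icc, sub_zero]
  -- membership in 𝒯 ∪ {0,1} gives [0,1]
  have hmem : ∀ t ∈ 𝒯 ∪ ({0, 1} : Set ℝ), 0 ≤ t ∧ t ≤ 1 := by
    rintro t (ht | ht)
    · exact ⟨(h𝒯 ht).1, (h𝒯 ht).2⟩
    · rcases ht with rfl | rfl
      · exact ⟨le_refl 0, zero_le_one⟩
      · exact ⟨zero_le_one, le_refl 1⟩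
  -- integrability of the indicator
  have hmeasU : ∀ t : ℝ, MeasurableSet {ω | U ω ≤ t} := fun t => hU measurableSet_Iic
  have hfint : ∀ t : ℝ, Integrable (Set.indicator {ω | U ω ≤ t} (fun _ => (1 : ℝ))) P :=
    fun t => (integrable_const 1).indicator (hmeasU t)
  -- set integrals of the indicator
  have hint_ind : ∀ (t : ℝ) (s : Set Ω), MeasurableSet s →
      ∫ x in s, Set.indicator {ω | U ω ≤ t} (fun _ => (1 : ℝ)) x ∂P
        = (P (s ∩ {ω | U ω ≤ t})).toReal := by
    intro t s _
    rw [setIntegral_indicator (hmeasU t), setIntegral_const, smul_eq_mul, mul_one, measureReal_def]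
  constructor
  · -- forward direction
    intro h x t₁ ht₁ t₂ ht₂ hlt
    set A : Set Ω := {ω | x < X ω} with hA
    have hAmeas : MeasurableSet A := hX measurableSet_Ioi
    have hAm : MeasurableSet[MeasurableSpace.comap X inferInstance] A :=
      ⟨Ioi x, measurableSet_Ioi, rfl⟩
    have F : ∀ t ∈ 𝒯 ∪ ({0, 1} : Set ℝ),
        P (A ∩ {ω | U ω ≤ t}) = P A * ENNReal.ofReal t := by
      rintro t (ht | ht)
      · -- t ∈ 𝒯 : use conditional expectation
        have hce := h t ht
        have h1 : ∫ x in A, (P[Set.indicator {ω | U ω ≤ t} (fun _ => (1 : ℝ)) |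
            MeasurableSpace.comap X inferInstance]) x ∂P = ∫ x in A, (fun _ => t) x ∂P :=
          integral_congr_ae (ae_restrict_of_ae hce)
        rw [setIntegral_condExp hm (hfint t) hAm, hint_ind t A hAmeas,
          setIntegral_const, smul_eq_mul, measureReal_def] at h1
        have hne1 : P (A ∩ {ω | U ω ≤ t}) ≠ ⊤ := measure_ne_top _ _
        have hne2 : P A * ENNReal.ofReal t ≠ ⊤ :=
          ENNReal.mul_ne_top (measure_ne_top _ _) ENNReal.ofReal_ne_top
        rw [← ENNReal.toReal_eq_toReal_iff' hne1 hne2, h1, ENNReal.toReal_mul,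
          ENNReal.toReal_ofReal (h𝒯 ht).1]
      · rcases ht with rfl | rfl
        · -- t = 0
          rw [ENNReal.ofReal_zero, mul_zero]
          exact le_antisymm (le_trans (measure_mono inter_subset_right) (le_of_eq hU0))
            (zero_le)
        · -- t = 1
          rw [ENNReal.ofReal_one, mul_one]
          refine le_antisymm (measure_mono inter_subset_left) ?_
          calc P A ≤ P (A ∩ {ω | U ω ≤ 1}) + P (A \ {ω | U ω ≤ 1}) :=
                measure_le_inter_add_diff _ _ _
            _ ≤ P (A ∩ {ω | U ω ≤ 1}) + P {ω | 1 < U ω} :=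
                add_le_add (le_refl _) (measure_mono fun ω (hω : ω ∈ A \ {ω | U ω ≤ 1}) => show 1 < U ω from lt_of_not_ge hω.2)
            _ = P (A ∩ {ω | U ω ≤ 1}) := by rw [hU1, add_zero]
    have h01 : 0 ≤ t₁ := (hmem t₁ ht₁).1
    -- replace the open interval by a difference of sublevel sets, up to null sets
    have hcongr : P (A ∩ {ω | t₁ < U ω ∧ U ω < t₂})
        = P (A ∩ ({ω | U ω ≤ t₂} \ {ω | U ω ≤ t₁})) := by
      apply measure_congr
      rw [Filter.eventuallyEq_set]
      filter_upwards [measure_eq_zero_iff_ae_notMem.mp (hUpt t₂)] with ω hω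
      simp only [mem_inter_iff, mem_diff, mem_setOf_eq, not_le]
      constructor
      · rintro ⟨hA', h1, h2⟩; exact ⟨hA', le_of_lt h2, h1⟩
      · rintro ⟨hA', h1, h2⟩
        exact ⟨hA', h2, lt_of_le_of_ne h1 fun he => hω (by simpa using he)⟩
    have hsub : A ∩ {ω | U ω ≤ t₁} ⊆ A ∩ {ω | U ω ≤ t₂} :=
      inter_subset_inter_right _ fun ω hω => le_trans hω (le_of_lt hlt)
    have hdiff : A ∩ ({ω | U ω ≤ t₂} \ {ω | U ω ≤ t₁})
        = (A ∩ {ω | U ω ≤ t₂}) \ (A ∩ {ω | U ω ≤ t₁}) := by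
      ext ω
      simp only [mem_inter_iff, mem_diff, mem_setOf_eq]
      tauto
    rw [hcongr, hdiff,
      measure_diff hsub ((hAmeas.inter (hmeasU t₁)).nullMeasurableSet) (measure_ne_top _ _),
      F t₂ ht₂, F t₁ ht₁, ← ENNReal.mul_sub (fun _ _ => measure_ne_top P A),
      ← ENNReal.ofReal_sub _ h01]
  · -- reverse direction
    intro h τ hτ
    rcases eq_or_lt_of_le (h𝒯 hτ).1 with h0 | h0
    · -- τ = 0 : indicator is a.e. zero
      have hae : Set.indicator {ω | U ω ≤ τ} (fun _ => (1 : ℝ)) =ᵐ[P] (0 : Ω → ℝ) := by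
        filter_upwards [measure_eq_zero_iff_ae_notMem.mp
          (show P {ω | U ω ≤ τ} = 0 from by rw [← h0]; exact hU0)] with ω hω
        simp [Set.indicator_apply, hω]
      calc P[Set.indicator {ω | U ω ≤ τ} (fun _ => (1 : ℝ)) |
            MeasurableSpace.comap X inferInstance]
          =ᵐ[P] P[(0 : Ω → ℝ) | MeasurableSpace.comap X inferInstance] := condExp_congr_ae hae
        _ =ᵐ[P] (fun _ => τ) := by
            rw [condExp_zero]
            exact Filter.Eventually.of_forall fun ω => by simp [← h0]
    · -- 0 < τ
      have hτ1 : τ ≤ 1 := (h𝒯 hτ).2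
      -- from the hypothesis applied to (0, τ)
      have hAx : ∀ x : ℝ, P (X ⁻¹' Ioi x ∩ {ω | U ω ≤ τ})
          = P (X ⁻¹' Ioi x) * ENNReal.ofReal τ := by
        intro x
        have h1 := h x 0 (Or.inr (Or.inl rfl)) τ (Or.inl hτ) h0
        rw [sub_zero] at h1
        have hcongr : P ({ω | x < X ω} ∩ {ω | 0 < U ω ∧ U ω < τ})
            = P ({ω | x < X ω} ∩ {ω | U ω ≤ τ}) := by
          apply measure_congr
          rw [Filter.eventuallyEq_set]
          filter_upwards [measure_eq_zero_iff_ae_notMem.mp (hUpt τ),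
            measure_eq_zero_iff_ae_notMem.mp hU0] with ω hω1 hω2
          simp only [mem_inter_iff, mem_setOf_eq] at *
          constructor
          · rintro ⟨hA', _, h2⟩; exact ⟨hA', le_of_lt h2⟩
          · rintro ⟨hA', h1'⟩
            exact ⟨hA', lt_of_not_ge hω2,
              lt_of_le_of_ne h1' fun he => hω1 (by simpa using he)⟩
        rw [hcongr] at h1
        exact h1
      -- extend from rays to all Borel sets via a π-system argument
      have hgen : (inferInstance : MeasurableSpace ℝ)
          = MeasurableSpace.generateFrom (range Ioi) :=
        (BorelSpace.measurable_eq (α := ℝ)).trans (borel_eq_generateFrom_Ioi ℝ)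
      have hres : MeasurableSet {ω | U ω ≤ τ} := hmeasU τ
      haveI : IsFiniteMeasure (P.restrict {ω | U ω ≤ τ}) := inferInstance
      haveI : IsFiniteMeasure (Measure.map X (P.restrict {ω | U ω ≤ τ})) :=
        ⟨by rw [Measure.map_apply hX MeasurableSet.univ]; exact measure_lt_top _ _⟩
      have hext : Measure.map X (P.restrict {ω | U ω ≤ τ})
          = (ENNReal.ofReal τ) • Measure.map X P := by
        refine ext_of_generate_finite (range Ioi) hgen isPiSystem_Ioi ?_ ?_
        · rintro s ⟨x, rfl⟩
          rw [Measure.map_apply hX measurableSet_Ioi, Measure.restrict_apply (hX measurableSet_Ioi),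
            Measure.smul_apply, Measure.map_apply hX measurableSet_Ioi, smul_eq_mul, mul_comm]
          exact hAx x
        · rw [Measure.map_apply hX MeasurableSet.univ, preimage_univ, Measure.restrict_apply_univ,
            hUle τ (le_of_lt h0) hτ1, Measure.smul_apply, Measure.map_apply hX MeasurableSet.univ,
            preimage_univ, measure_univ, smul_eq_mul, mul_one]
      have hAll : ∀ s : Set Ω, MeasurableSet[MeasurableSpace.comap X inferInstance] s →
          P (s ∩ {ω | U ω ≤ τ}) = ENNReal.ofReal τ * P s := by
        intro s hs
        obtain ⟨B, hB, rfl⟩ := hs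
        have h1 : P (X ⁻¹' B ∩ {ω | U ω ≤ τ})
            = Measure.map X (P.restrict {ω | U ω ≤ τ}) B := by
          rw [Measure.map_apply hX hB, Measure.restrict_apply (hX hB)]
        rw [h1, hext, Measure.smul_apply, Measure.map_apply hX hB, smul_eq_mul]
      symm
      refine ae_eq_condExp_of_forall_setIntegral_eq hm (hfint τ)
        (fun s _ _ => integrableOn_const (measure_ne_top _ _))
        (fun s hs _ => ?_)
        (StronglyMeasurable.aestronglyMeasurable
          (@stronglyMeasurable_const _ _ (MeasurableSpace.comap X inferInstance) _ _))
      rw [hint_ind τ s (hm s hs), hAll s hs, setIntegral_const, smul_eq_mul, measureReal_def,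
        ENNReal.toReal_mul, ENNReal.toReal_ofReal (le_of_lt h0), mul_comm]
end

section
/- Let X be a real random variable with atomless distribution and U uniformly distributed on [0,1]. Suppose there exist x ∈ ℝ and a Borel function g : [0,1] → [0,1] with P({X > x} ∩ {U ∈ B}) = ∫_B g(u) du for every Borel B ⊆ [0,1] (a version of P(X > x | U = u)), such that g is weakly monotonic on (0,1) and not Lebesgue-almost-everywhere constant on (0,1). Then for every τ ∈ (0,1), P({X > x} ∩ {U ≤ τ}) ≠ P(X > x) · τ; in particular, U is not τ-cdf independent of X for any τ ∈ (0,1). -/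
open MeasureTheory Set

/-- Key real-analysis lemma: if `g` is monotone on `(0,1)`, integrable on `[0,1]`,
and its average over `(0,τ)` equals its average over `(0,1)` (in the sense
`∫_{(0,τ)} g = τ ∫_{(0,1)} g`), then `g` is a.e. constant (equal to `g τ`) on `(0,1)`. -/
lemma key_mono (g : ℝ → ℝ) (hint : IntegrableOn g (Set.Icc 0 1))
    (τ : ℝ) (hτ : τ ∈ Set.Ioo (0 : ℝ) 1)
    (hmono : MonotoneOn g (Set.Ioo 0 1))
    (heq : ∫ u in Set.Ioo (0 : ℝ) τ, g u = τ * ∫ u in Set.Ioo (0 : ℝ) 1, g u) :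
    ∀ᵐ u ∂(volume.restrict (Set.Ioo (0 : ℝ) 1)), g u = g τ := by
  obtain ⟨hτ0, hτ1⟩ := hτ
  have hi1 : IntegrableOn g (Set.Ioo 0 τ) :=
    hint.mono_set (fun u hu => ⟨hu.1.le, hu.2.le.trans hτ1.le⟩)
  have hi2 : IntegrableOn g (Set.Ioo τ 1) :=
    hint.mono_set (fun u hu => ⟨(hτ0.trans hu.1).le, hu.2.le⟩)
  have hi1c : IntegrableOn g (Set.Ioc 0 τ) :=
    hint.mono_set (fun u hu => ⟨hu.1.le, hu.2.trans hτ1.le⟩)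
  have hi2c : IntegrableOn g (Set.Ioc τ 1) :=
    hint.mono_set (fun u hu => ⟨(hτ0.trans hu.1).le, hu.2⟩)
  have hdisj : Disjoint (Set.Ioc (0 : ℝ) τ) (Set.Ioc τ 1) :=
    Set.disjoint_left.2 fun u h1 h2 => absurd h2.1 (not_lt.2 h1.2)
  have hsplit : ∫ u in Set.Ioo (0 : ℝ) 1, g u =
      (∫ u in Set.Ioo (0 : ℝ) τ, g u) + ∫ u in Set.Ioo τ 1, g u := by
    rw [← integral_Ioc_eq_integral_Ioo, ← integral_Ioc_eq_integral_Ioo,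
      ← integral_Ioc_eq_integral_Ioo, ← Set.Ioc_union_Ioc_eq_Ioc hτ0.le hτ1.le,
      setIntegral_union hdisj measurableSet_Ioc hi1c hi2c]
  set L := ∫ u in Set.Ioo (0 : ℝ) τ, g u with hLdef
  set R := ∫ u in Set.Ioo τ 1, g u with hRdef
  set c := g τ with hcdef
  have hvol1 : ((volume (Set.Ioo (0 : ℝ) τ)).toReal) = τ := by
    rw [Real.volume_Ioo, sub_zero, ENNReal.toReal_ofReal hτ0.le]
  have hvol2 : ((volume (Set.Ioo τ (1 : ℝ))).toReal) = 1 - τ := by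
    rw [Real.volume_Ioo, ENNReal.toReal_ofReal (by linarith)]
  have hconst1 : IntegrableOn (fun _ : ℝ => c) (Set.Ioo 0 τ) :=
    integrableOn_const (by rw [Real.volume_Ioo]; exact ENNReal.ofReal_ne_top)
  have hconst2 : IntegrableOn (fun _ : ℝ => c) (Set.Ioo τ 1) :=
    integrableOn_const (by rw [Real.volume_Ioo]; exact ENNReal.ofReal_ne_top)
  have hint1 : ∫ _u in Set.Ioo (0 : ℝ) τ, c = τ * c := by
    rw [setIntegral_const, smul_eq_mul, measureReal_def, hvol1]
  have hint2 : ∫ _u in Set.Ioo τ (1 : ℝ), c = (1 - τ) * c := by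
    rw [setIntegral_const, smul_eq_mul, measureReal_def, hvol2]
  have hle1 : ∀ u ∈ Set.Ioo (0 : ℝ) τ, g u ≤ c :=
    fun u hu => hmono ⟨hu.1, hu.2.trans hτ1⟩ ⟨hτ0, hτ1⟩ hu.2.le
  have hle2 : ∀ u ∈ Set.Ioo τ (1 : ℝ), c ≤ g u :=
    fun u hu => hmono ⟨hτ0, hτ1⟩ ⟨hτ0.trans hu.1, hu.2⟩ hu.1.le
  have hL : L ≤ τ * c := by
    rw [← hint1]
    exact setIntegral_mono_on hi1 hconst1 measurableSet_Ioo hle1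
  have hR : (1 - τ) * c ≤ R := by
    rw [← hint2]
    exact setIntegral_mono_on hconst2 hi2 measurableSet_Ioo hle2
  have key1 : (1 - τ) * L = τ * R := by
    have : L = τ * (L + R) := by rw [← hsplit]; exact heq
    nlinarith [this]
  have hcL : L = τ * c := by
    have e1 : (1 - τ) * L ≤ (1 - τ) * (τ * c) :=
      mul_le_mul_of_nonneg_left hL (by linarith)
    have e2 : τ * ((1 - τ) * c) ≤ τ * R := mul_le_mul_of_nonneg_left hR hτ0.le
    have e3 : (1 - τ) * L = (1 - τ) * (τ * c) := by nlinarith [key1, e1, e2]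
    exact mul_left_cancel₀ (by linarith : (1 : ℝ) - τ ≠ 0) e3
  have hcR : R = (1 - τ) * c := by
    have e3 : τ * R = τ * ((1 - τ) * c) := by nlinarith [key1, hcL]
    exact mul_left_cancel₀ (by linarith : τ ≠ 0) e3
  -- deduce a.e. equality on (0,τ)
  have hzero1 : ∫ u in Set.Ioo (0 : ℝ) τ, (c - g u) = 0 := by
    rw [integral_sub hconst1 hi1, hint1, ← hLdef, hcL, sub_self]
  have hnn1 : 0 ≤ᵐ[volume.restrict (Set.Ioo (0 : ℝ) τ)] fun u => c - g u :=
    (ae_restrict_iff' measurableSet_Ioo).2 (ae_of_all _ fun u hu => sub_nonneg.2 (hle1 u hu))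
  have hae1 : ∀ᵐ u ∂(volume.restrict (Set.Ioo (0 : ℝ) τ)), g u = c := by
    have h0 := (integral_eq_zero_iff_of_nonneg_ae hnn1 (hconst1.sub hi1)).1 hzero1
    filter_upwards [h0] with u hu
    have : c - g u = 0 := hu
    linarith
  -- deduce a.e. equality on (τ,1)
  have hzero2 : ∫ u in Set.Ioo τ (1 : ℝ), (g u - c) = 0 := by
    rw [integral_sub hi2 hconst2, hint2, ← hRdef, hcR, sub_self]
  have hnn2 : 0 ≤ᵐ[volume.restrict (Set.Ioo τ (1 : ℝ))] fun u => g u - c :=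
    (ae_restrict_iff' measurableSet_Ioo).2 (ae_of_all _ fun u hu => sub_nonneg.2 (hle2 u hu))
  have hae2 : ∀ᵐ u ∂(volume.restrict (Set.Ioo τ (1 : ℝ))), g u = c := by
    have h0 := (integral_eq_zero_iff_of_nonneg_ae hnn2 (hi2.sub hconst2)).1 hzero2
    filter_upwards [h0] with u hu
    have : g u - c = 0 := hu
    linarith
  -- combine
  rw [ae_restrict_iff' measurableSet_Ioo]
  have hA' : ∀ᵐ u : ℝ, u ∈ Set.Ioo (0 : ℝ) τ → g u = c :=
    (ae_restrict_iff' measurableSet_Ioo).1 hae1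
  have hB' : ∀ᵐ u : ℝ, u ∈ Set.Ioo τ (1 : ℝ) → g u = c :=
    (ae_restrict_iff' measurableSet_Ioo).1 hae2
  have hne : ∀ᵐ u : ℝ, u ≠ τ := by
    rw [ae_iff]
    have : {u : ℝ | ¬u ≠ τ} = {τ} := by ext u; simp
    rw [this]
    exact measure_singleton τ
  filter_upwards [hA', hB', hne] with u h1 h2 h3 hu
  rcases lt_or_gt_of_ne h3 with h | h
  · exact h1 ⟨hu.1, h⟩
  · exact h2 ⟨h, hu.2⟩

/-- If a version `g` of `u ↦ P(X > x | U = u)` is weakly monotonic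
and not a.e. constant on `(0,1)`, then `U` is not `τ`-cdf independent of `X` for any
`τ ∈ (0,1)`. -/
theorem stmt_9 {Ω : Type*} [MeasurableSpace Ω] (P : Measure Ω) [IsProbabilityMeasure P]
    (X U : Ω → ℝ) (hX : Measurable X) (hU : Measurable U)
    (hXatomless : ∀ x : ℝ, P {ω | X ω = x} = 0)
    (hUunif : Measure.map U P = volume.restrict (Set.Icc (0 : ℝ) 1))
    (x : ℝ) (g : ℝ → ℝ) (hg : Measurable g) (hg01 : ∀ u, g u ∈ Set.Icc (0 : ℝ) 1)
    (hgver : ∀ B : Set ℝ, MeasurableSet B → B ⊆ Set.Icc (0 : ℝ) 1 →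
      (P ({ω | x < X ω} ∩ U ⁻¹' B)).toReal = ∫ u in B, g u)
    (hmono : MonotoneOn g (Set.Ioo (0 : ℝ) 1) ∨ AntitoneOn g (Set.Ioo (0 : ℝ) 1))
    (hnotconst : ∀ c : ℝ,
      ¬ (∀ᵐ u ∂(volume.restrict (Set.Ioo (0 : ℝ) 1)), g u = c)) :
    ∀ τ ∈ Set.Ioo (0 : ℝ) 1,
      P ({ω | x < X ω} ∩ {ω | U ω ≤ τ}) ≠ P {ω | x < X ω} * ENNReal.ofReal τ := by
  intro τ hτ h
  set A : Set Ω := {ω | x < X ω} with hAdef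
  -- P(U ∉ [0,1]) = 0
  have hU0 : P (U ⁻¹' (Set.Icc (0 : ℝ) 1)ᶜ) = 0 := by
    rw [← Measure.map_apply hU measurableSet_Icc.compl, hUunif,
      Measure.restrict_apply measurableSet_Icc.compl]
    simp
  -- P A = P (A ∩ U ⁻¹' Icc 0 1)
  have hPA : P A = P (A ∩ U ⁻¹' Set.Icc 0 1) := by
    refine le_antisymm ?_ (measure_mono Set.inter_subset_left)
    have hsub : A ⊆ (A ∩ U ⁻¹' Set.Icc 0 1) ∪ U ⁻¹' (Set.Icc (0 : ℝ) 1)ᶜ := by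
      intro ω hω
      by_cases hc : U ω ∈ Set.Icc (0 : ℝ) 1
      · exact Or.inl ⟨hω, hc⟩
      · exact Or.inr hc
    calc P A ≤ P ((A ∩ U ⁻¹' Set.Icc 0 1) ∪ U ⁻¹' (Set.Icc (0 : ℝ) 1)ᶜ) := measure_mono hsub
      _ ≤ P (A ∩ U ⁻¹' Set.Icc 0 1) + P (U ⁻¹' (Set.Icc (0 : ℝ) 1)ᶜ) := measure_union_le _ _
      _ = P (A ∩ U ⁻¹' Set.Icc 0 1) := by rw [hU0, add_zero]
  -- P (A ∩ {U ≤ τ}) = P (A ∩ U ⁻¹' Icc 0 τ)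
  have hPτ : P (A ∩ {ω | U ω ≤ τ}) = P (A ∩ U ⁻¹' Set.Icc 0 τ) := by
    refine le_antisymm ?_ (measure_mono (Set.inter_subset_inter_right _ (fun ω hω => hω.2)))
    have hsub : A ∩ {ω | U ω ≤ τ} ⊆
        (A ∩ U ⁻¹' Set.Icc 0 τ) ∪ U ⁻¹' (Set.Icc (0 : ℝ) 1)ᶜ := by
      intro ω hω
      by_cases hc : 0 ≤ U ω
      · exact Or.inl ⟨hω.1, hc, hω.2⟩
      · exact Or.inr fun hmem => hc hmem.1
    calc P (A ∩ {ω | U ω ≤ τ})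
        ≤ P ((A ∩ U ⁻¹' Set.Icc 0 τ) ∪ U ⁻¹' (Set.Icc (0 : ℝ) 1)ᶜ) := measure_mono hsub
      _ ≤ P (A ∩ U ⁻¹' Set.Icc 0 τ) + P (U ⁻¹' (Set.Icc (0 : ℝ) 1)ᶜ) := measure_union_le _ _
      _ = P (A ∩ U ⁻¹' Set.Icc 0 τ) := by rw [hU0, add_zero]
  -- convert the assumed equality to a real equality of integrals
  have hreal : (P (A ∩ {ω | U ω ≤ τ})).toReal = (P A).toReal * τ := by
    rw [h, ENNReal.toReal_mul, ENNReal.toReal_ofReal hτ.1.le]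
  have hIτ : (P (A ∩ U ⁻¹' Set.Icc 0 τ)).toReal = ∫ u in Set.Icc (0 : ℝ) τ, g u :=
    hgver _ measurableSet_Icc (Set.Icc_subset_Icc le_rfl hτ.2.le)
  have hI1 : (P (A ∩ U ⁻¹' Set.Icc 0 1)).toReal = ∫ u in Set.Icc (0 : ℝ) 1, g u :=
    hgver _ measurableSet_Icc subset_rfl
  have hE : ∫ u in Set.Icc (0 : ℝ) τ, g u = (∫ u in Set.Icc (0 : ℝ) 1, g u) * τ := by
    rw [← hIτ, ← hI1, ← hPτ, ← hPA, hreal]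
  -- pass to open intervals
  have hEoo : ∫ u in Set.Ioo (0 : ℝ) τ, g u = τ * ∫ u in Set.Ioo (0 : ℝ) 1, g u := by
    rw [← integral_Icc_eq_integral_Ioo, ← integral_Icc_eq_integral_Ioo, hE, mul_comm]
  -- integrability
  have hint : IntegrableOn g (Set.Icc (0 : ℝ) 1) := by
    refine Measure.integrableOn_of_bounded (M := 1) ?_ hg.aestronglyMeasurable ?_
    · rw [Real.volume_Icc]; exact ENNReal.ofReal_ne_top
    · refine ae_of_all _ fun u => ?_
      have := hg01 u
      rw [Real.norm_eq_abs, abs_le]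
      exact ⟨by linarith [this.1], this.2⟩
  -- apply the key lemma in both cases
  have hconst : ∀ᵐ u ∂(volume.restrict (Set.Ioo (0 : ℝ) 1)), g u = g τ := by
    rcases hmono with hm | hm
    · exact key_mono g hint τ hτ hm hEoo
    · have hm' : MonotoneOn (fun u => -g u) (Set.Ioo 0 1) := fun a ha b hb hab =>
        neg_le_neg (hm ha hb hab)
      have heq' : ∫ u in Set.Ioo (0 : ℝ) τ, (fun u => -g u) u =
          τ * ∫ u in Set.Ioo (0 : ℝ) 1, (fun u => -g u) u := by
        simp only [integral_neg, hEoo, mul_neg]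
      have := key_mono (fun u => -g u) hint.neg τ hτ hm' heq'
      filter_upwards [this] with u hu
      have : -g u = -g τ := hu
      linarith
  exact hnotconst (g τ) hconst
end

section
/- Let X be a random variable taking values in a countable set 𝒳 ⊆ ℝ and U uniformly distributed on [0,1]. Suppose there exist x ∈ ℝ and a Borel function g : [0,1] → [0,1] with P({X ≥ x} ∩ {U ∈ B}) = ∫_B g(u) du for every Borel B ⊆ [0,1] (a version of P(X ≥ x | U = u)), such that g is weakly monotonic on (0,1) and not Lebesgue-almost-everywhere constant on (0,1). Then for every τ ∈ (0,1), P({X ≥ x} ∩ {U ≤ τ}) ≠ P(X ≥ x) · τ; in particular, U is not τ-cdf independent of X for any τ ∈ (0,1). -/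
open MeasureTheory Set

lemma intOn (g : ℝ → ℝ) (hg : Measurable g) (hb : ∀ u, |g u| ≤ 1)
    (s : Set ℝ) (hs : volume s ≠ ⊤) : IntegrableOn g s volume :=
  Measure.integrableOn_of_bounded hs hg.aestronglyMeasurable
    (ae_of_all _ fun u => by simpa using hb u)

lemma key_mono_s11 (g : ℝ → ℝ) (hg : Measurable g) (hb : ∀ u, |g u| ≤ 1)
    (τ p : ℝ) (hτ0 : 0 < τ) (hτ1 : τ < 1)
    (h1 : ∫ u in Set.Ioo (0:ℝ) τ, g u = p * τ)
    (h2 : ∫ u in Set.Ioo τ (1:ℝ), g u = p * (1 - τ))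
    (hmono : MonotoneOn g (Set.Ioo (0:ℝ) 1)) :
    ∀ᵐ u ∂(volume.restrict (Set.Ioo (0:ℝ) 1)), g u = g τ := by
  have hτmem : τ ∈ Set.Ioo (0:ℝ) 1 := ⟨hτ0, hτ1⟩
  set c := g τ with hcdef
  have hv1 : volume (Set.Ioo (0:ℝ) τ) ≠ ⊤ := by simp [Real.volume_Ioo]
  have hv2 : volume (Set.Ioo τ (1:ℝ)) ≠ ⊤ := by simp [Real.volume_Ioo]
  have hInt1 : IntegrableOn g (Set.Ioo (0:ℝ) τ) volume := intOn g hg hb _ hv1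
  have hInt2 : IntegrableOn g (Set.Ioo τ (1:ℝ)) volume := intOn g hg hb _ hv2
  have hIc1 : IntegrableOn (fun _ : ℝ => c) (Set.Ioo (0:ℝ) τ) volume :=
    integrableOn_const hv1
  have hIc2 : IntegrableOn (fun _ : ℝ => c) (Set.Ioo τ (1:ℝ)) volume :=
    integrableOn_const hv2
  have hconst1 : ∫ _ in Set.Ioo (0:ℝ) τ, c = τ * c := by
    rw [setIntegral_const, Real.volume_real_Ioo_of_le hτ0.le, sub_zero,
      smul_eq_mul]
  have hconst2 : ∫ _ in Set.Ioo τ (1:ℝ), c = (1 - τ) * c := by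
    rw [setIntegral_const, Real.volume_real_Ioo_of_le hτ1.le, smul_eq_mul]
  have hle1 : ∀ u ∈ Set.Ioo (0:ℝ) τ, g u ≤ c :=
    fun u hu => hmono ⟨hu.1, hu.2.trans hτ1⟩ hτmem hu.2.le
  have hge2 : ∀ u ∈ Set.Ioo τ (1:ℝ), c ≤ g u :=
    fun u hu => hmono hτmem ⟨hτ0.trans hu.1, hu.2⟩ hu.1.le
  have hpc : p ≤ c := by
    have := setIntegral_mono_on hInt1 hIc1 measurableSet_Ioo hle1
    rw [h1, hconst1] at this
    nlinarith
  have hcp : c ≤ p := by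
    have := setIntegral_mono_on hIc2 hInt2 measurableSet_Ioo hge2
    rw [h2, hconst2] at this
    nlinarith
  have hc : c = p := le_antisymm hcp hpc
  have eq1 : ∀ᵐ u ∂volume, u ∈ Set.Ioo (0:ℝ) τ → g u = c := by
    have hz : ∫ u in Set.Ioo (0:ℝ) τ, (c - g u) = 0 := by
      rw [integral_sub hIc1 hInt1, h1, hconst1, hc]; ring
    have hnn : 0 ≤ᵐ[volume.restrict (Set.Ioo (0:ℝ) τ)] fun u => c - g u :=
      (ae_restrict_iff' measurableSet_Ioo).mpr
        (ae_of_all _ fun u hu => sub_nonneg.mpr (hle1 u hu))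
    have := (integral_eq_zero_iff_of_nonneg_ae hnn (hIc1.sub hInt1)).mp hz
    have h' := (ae_restrict_iff' measurableSet_Ioo).mp this
    filter_upwards [h'] with u hu hmem
    have := hu hmem; simp only [Pi.zero_apply] at this; linarith
  have eq2 : ∀ᵐ u ∂volume, u ∈ Set.Ioo τ (1:ℝ) → g u = c := by
    have hz : ∫ u in Set.Ioo τ (1:ℝ), (g u - c) = 0 := by
      rw [integral_sub hInt2 hIc2, h2, hconst2, hc]; ring
    have hnn : 0 ≤ᵐ[volume.restrict (Set.Ioo τ (1:ℝ))] fun u => g u - c :=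
      (ae_restrict_iff' measurableSet_Ioo).mpr
        (ae_of_all _ fun u hu => sub_nonneg.mpr (hge2 u hu))
    have := (integral_eq_zero_iff_of_nonneg_ae hnn (hInt2.sub hIc2)).mp hz
    have h' := (ae_restrict_iff' measurableSet_Ioo).mp this
    filter_upwards [h'] with u hu hmem
    have := hu hmem; simp only [Pi.zero_apply] at this; linarith
  have hne : ∀ᵐ u : ℝ ∂volume, u ≠ τ := by
    rw [ae_iff]
    have h' : {u : ℝ | ¬ u ≠ τ} = {τ} := by ext u; simp
    rw [h']
    exact measure_singleton τ
  rw [ae_restrict_iff' measurableSet_Ioo]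
  filter_upwards [eq1, eq2, hne] with u h1' h2' hne' hmem
  rcases lt_trichotomy u τ with h | h | h
  · exact h1' ⟨hmem.1, h⟩
  · exact absurd h hne'
  · exact h2' ⟨h, hmem.2⟩

/-- With `X` discrete, if a version `g` of `u ↦ P(X ≥ x | U = u)`
is weakly monotonic and not a.e. constant on `(0,1)`, then `U` is not `τ`-cdf
independent of `X` for any `τ ∈ (0,1)`. -/
theorem stmt_11 {Ω : Type*} [MeasurableSpace Ω] (P : Measure Ω) [IsProbabilityMeasure P]
    (X U : Ω → ℝ) (hX : Measurable X) (hU : Measurable U)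
    (hcount : (Set.range X).Countable)
    (hUunif : Measure.map U P = volume.restrict (Set.Icc (0 : ℝ) 1))
    (x : ℝ) (g : ℝ → ℝ) (hg : Measurable g) (hg01 : ∀ u, g u ∈ Set.Icc (0 : ℝ) 1)
    (hgver : ∀ B : Set ℝ, MeasurableSet B → B ⊆ Set.Icc (0 : ℝ) 1 →
      (P ({ω | x ≤ X ω} ∩ U ⁻¹' B)).toReal = ∫ u in B, g u)
    (hmono : MonotoneOn g (Set.Ioo (0 : ℝ) 1) ∨ AntitoneOn g (Set.Ioo (0 : ℝ) 1))
    (hnotconst : ∀ c : ℝ,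
      ¬ (∀ᵐ u ∂(volume.restrict (Set.Ioo (0 : ℝ) 1)), g u = c)) :
    ∀ τ ∈ Set.Ioo (0 : ℝ) 1,
      P ({ω | x ≤ X ω} ∩ {ω | U ω ≤ τ}) ≠ P {ω | x ≤ X ω} * ENNReal.ofReal τ := by
  rintro τ ⟨hτ0, hτ1⟩ h
  set S := {ω | x ≤ X ω} with hSdef
  have hb : ∀ u, |g u| ≤ 1 := fun u => abs_le.mpr ⟨by linarith [(hg01 u).1], (hg01 u).2⟩
  have hmap : ∀ s : Set ℝ, MeasurableSet s → P (U ⁻¹' s) = volume (s ∩ Set.Icc 0 1) := by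
    intro s hs
    rw [← Measure.map_apply hU hs, hUunif, Measure.restrict_apply hs]
  have hIio : P (U ⁻¹' Set.Iio 0) = 0 := by
    rw [hmap _ measurableSet_Iio]
    have : Set.Iio (0:ℝ) ∩ Set.Icc 0 1 = ∅ :=
      Set.eq_empty_iff_forall_notMem.mpr fun u hu => absurd hu.2.1 (not_le.mpr hu.1)
    rw [this, measure_empty]
  have hcomp : P (U ⁻¹' (Set.Icc (0:ℝ) 1)ᶜ) = 0 := by
    rw [hmap _ measurableSet_Icc.compl, Set.compl_inter_self, measure_empty]
  -- P(S ∩ {U ≤ τ}) = P(S ∩ U⁻¹' Icc 0 τ)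
  have hPA : P (S ∩ {ω | U ω ≤ τ}) = P (S ∩ U ⁻¹' Set.Icc 0 τ) := by
    apply le_antisymm
    · calc P (S ∩ {ω | U ω ≤ τ}) ≤ P ((S ∩ U ⁻¹' Set.Icc 0 τ) ∪ U ⁻¹' Set.Iio 0) := by
            apply measure_mono
            rintro ω ⟨hω1, hω2⟩
            by_cases h0 : 0 ≤ U ω
            · exact Or.inl ⟨hω1, h0, hω2⟩
            · exact Or.inr (not_le.mp h0)
        _ ≤ P (S ∩ U ⁻¹' Set.Icc 0 τ) + P (U ⁻¹' Set.Iio 0) := measure_union_le _ _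
        _ = P (S ∩ U ⁻¹' Set.Icc 0 τ) := by rw [hIio, add_zero]
    · exact measure_mono fun ω hω => ⟨hω.1, hω.2.2⟩
  have hPp : P S = P (S ∩ U ⁻¹' Set.Icc 0 1) := by
    apply le_antisymm
    · calc P S ≤ P ((S ∩ U ⁻¹' Set.Icc 0 1) ∪ U ⁻¹' (Set.Icc (0:ℝ) 1)ᶜ) := by
            apply measure_mono
            intro ω hω
            by_cases h0 : U ω ∈ Set.Icc (0:ℝ) 1
            · exact Or.inl ⟨hω, h0⟩
            · exact Or.inr h0
        _ ≤ P (S ∩ U ⁻¹' Set.Icc 0 1) + P (U ⁻¹' (Set.Icc (0:ℝ) 1)ᶜ) := measure_union_le _ _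
        _ = P (S ∩ U ⁻¹' Set.Icc 0 1) := by rw [hcomp, add_zero]
    · exact measure_mono Set.inter_subset_left
  set pS := (P S).toReal with hpSdef
  have key1 : ∫ u in Set.Icc (0:ℝ) τ, g u = pS * τ := by
    rw [← hgver _ measurableSet_Icc (Set.Icc_subset_Icc le_rfl hτ1.le), ← hPA, h,
      ENNReal.toReal_mul, ENNReal.toReal_ofReal hτ0.le]
  have keytot : ∫ u in Set.Icc (0:ℝ) 1, g u = pS := by
    rw [← hgver _ measurableSet_Icc (subset_refl _), ← hPp]
  -- additivity
  have hdisj : Disjoint (Set.Icc (0:ℝ) τ) (Set.Ioc τ 1) :=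
    Set.disjoint_left.mpr fun u h1 h2 => absurd h1.2 (not_le.mpr h2.1)
  have hsplit : ∫ u in Set.Icc (0:ℝ) 1, g u
      = (∫ u in Set.Icc (0:ℝ) τ, g u) + ∫ u in Set.Ioc τ (1:ℝ), g u := by
    rw [← setIntegral_union hdisj measurableSet_Ioc
      (intOn g hg hb _ (by simp [Real.volume_Icc]))
      (intOn g hg hb _ (by simp [Real.volume_Ioc])),
      Set.Icc_union_Ioc_eq_Icc hτ0.le hτ1.le]
  have key2 : ∫ u in Set.Ioc τ (1:ℝ), g u = pS * (1 - τ) := by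
    rw [keytot, key1] at hsplit; linarith
  have key1' : ∫ u in Set.Ioo (0:ℝ) τ, g u = pS * τ := by
    rw [← key1]
    exact setIntegral_congr_set Ioo_ae_eq_Icc
  have key2' : ∫ u in Set.Ioo τ (1:ℝ), g u = pS * (1 - τ) := by
    rw [← key2]
    exact setIntegral_congr_set Ioo_ae_eq_Ioc
  rcases hmono with hm | ha
  · exact hnotconst (g τ) (key_mono_s11 g hg hb τ pS hτ0 hτ1 key1' key2' hm)
  · set g' : ℝ → ℝ := fun u => 1 - g u with hg'def
    have hg'm : Measurable g' := measurable_const.sub hg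
    have hb' : ∀ u, |g' u| ≤ 1 := fun u => abs_le.mpr
      ⟨by simp only [hg'def]; linarith [(hg01 u).2], by simp only [hg'def]; linarith [(hg01 u).1]⟩
    have hm' : MonotoneOn g' (Set.Ioo (0:ℝ) 1) :=
      fun a haa b hbb hab => sub_le_sub_left (ha haa hbb hab) 1
    have hc1 : ∫ u in Set.Ioo (0:ℝ) τ, g' u = (1 - pS) * τ := by
      rw [hg'def]
      rw [integral_sub (integrableOn_const (C := (1:ℝ)) (s := Set.Ioo 0 τ) (μ := volume) (by simp [Real.volume_Ioo]))
        (intOn g hg hb (Set.Ioo 0 τ) (by simp [Real.volume_Ioo])), key1', setIntegral_const,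
        Real.volume_real_Ioo_of_le hτ0.le, sub_zero, smul_eq_mul]
      ring
    have hc2 : ∫ u in Set.Ioo τ (1:ℝ), g' u = (1 - pS) * (1 - τ) := by
      rw [hg'def]
      rw [integral_sub (integrableOn_const (C := (1:ℝ)) (s := Set.Ioo τ 1) (μ := volume) (by simp [Real.volume_Ioo]))
        (intOn g hg hb (Set.Ioo τ 1) (by simp [Real.volume_Ioo])), key2', setIntegral_const,
        Real.volume_real_Ioo_of_le hτ1.le, smul_eq_mul]
      ring
    have := key_mono_s11 g' hg'm hb' τ (1 - pS) hτ0 hτ1 hc1 hc2 hm'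
    apply hnotconst (g τ)
    filter_upwards [this] with u hu
    simp only [hg'def] at hu
    linarith
end

section
/- Let X be a real random variable and U uniformly distributed on [0,1], and let 𝒯 = [a, b] ⊆ [0,1]. If U is 𝒯-independent of X (for every τ ∈ [a, b], E[1{U ≤ τ} | σ(X)] = τ almost surely), then for every x ∈ ℝ the conditional cdf of X given U is unconditional on [a, b]: any Borel function h : [0,1] → [0,1] with P({X ≤ x} ∩ {U ∈ B}) = ∫_B h(u) du for all Borel B ⊆ [0,1] satisfies h(u) = P(X ≤ x) for Lebesgue-almost every u ∈ [a, b]. -/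
open MeasureTheory Set

/-- If `U ~ Unif[0,1]` is `[a,b]`-independent of `X`, then for
every `x`, any version `h` of `u ↦ P(X ≤ x | U = u)` is Lebesgue-a.e. equal to
`P(X ≤ x)` on `[a,b]`. -/
theorem stmt_12 {Ω : Type*} [MeasurableSpace Ω] (P : Measure Ω) [IsProbabilityMeasure P]
    (X U : Ω → ℝ) (hX : Measurable X) (hU : Measurable U)
    (hUunif : Measure.map U P = volume.restrict (Set.Icc (0 : ℝ) 1))
    (a b : ℝ) (hab : a ≤ b) (hsub : Set.Icc a b ⊆ Set.Icc (0 : ℝ) 1)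
    (hTindep : ∀ τ ∈ Set.Icc a b,
      P[Set.indicator {ω | U ω ≤ τ} (fun _ => (1 : ℝ)) |
        MeasurableSpace.comap X inferInstance] =ᵐ[P] fun _ => τ) :
    ∀ x : ℝ, ∀ h : ℝ → ℝ, Measurable h → (∀ u, h u ∈ Set.Icc (0 : ℝ) 1) →
      (∀ B : Set ℝ, MeasurableSet B → B ⊆ Set.Icc (0 : ℝ) 1 →
        (P ({ω | X ω ≤ x} ∩ U ⁻¹' B)).toReal = ∫ u in B, h u) →
      ∀ᵐ u ∂(volume.restrict (Set.Icc a b)), h u = (P {ω | X ω ≤ x}).toReal := by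
  intro x h hmeas hrange hInt
  have ha0 : (0 : ℝ) ≤ a := (hsub (left_mem_Icc.2 hab)).1
  have hb1 : b ≤ 1 := (hsub (right_mem_Icc.2 hab)).2
  have hm : MeasurableSpace.comap X inferInstance ≤ ‹MeasurableSpace Ω› := hX.comap_le
  haveI : SigmaFinite (P.trim hm) := by
    have : IsFiniteMeasure (P.trim hm) := isFiniteMeasure_trim hm
    infer_instance
  set s := {ω | X ω ≤ x} with hs_def
  set c := (P s).toReal with hc_def
  have hc0 : 0 ≤ c := ENNReal.toReal_nonneg
  have hs_meas : MeasurableSet s := hX measurableSet_Iic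
  have hsm : MeasurableSet[MeasurableSpace.comap X inferInstance] s :=
    ⟨Iic x, measurableSet_Iic, rfl⟩
  -- Step A: P(s ∩ {U ≤ τ}) = τ * c for τ ∈ [a,b]
  have hA : ∀ τ ∈ Icc a b, (P (s ∩ {ω | U ω ≤ τ})).toReal = τ * c := by
    intro τ hτ
    have hT : MeasurableSet {ω | U ω ≤ τ} := hU measurableSet_Iic
    have hind : Integrable (Set.indicator {ω | U ω ≤ τ} (fun _ => (1 : ℝ))) P :=
      (integrable_const (1 : ℝ)).indicator hT
    have h1 : ∫ ω in s, Set.indicator {ω | U ω ≤ τ} (fun _ => (1 : ℝ)) ω ∂P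
        = (P (s ∩ {ω | U ω ≤ τ})).toReal := by
      rw [setIntegral_indicator hT, setIntegral_const, smul_eq_mul, mul_one]; rfl
    have h2 := setIntegral_condExp hm hind hsm
    have h3 : ∫ ω in s, (P[Set.indicator {ω | U ω ≤ τ} (fun _ => (1 : ℝ)) |
        MeasurableSpace.comap X inferInstance]) ω ∂P
        = ∫ ω in s, (fun _ : Ω => τ) ω ∂P := by
      refine integral_congr_ae ?_
      exact Filter.EventuallyEq.restrict (hTindep τ hτ)
    rw [h1] at h2
    rw [setIntegral_const, smul_eq_mul] at h3
    rw [← h2, h3, mul_comm, hc_def]; rfl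
  -- P(U < 0) = 0
  have hUneg : P (U ⁻¹' Iio (0 : ℝ)) = 0 := by
    have hmap := Measure.map_apply (μ := P) hU (measurableSet_Iio (a := (0 : ℝ)))
    rw [hUunif] at hmap
    rw [← hmap, Measure.restrict_apply measurableSet_Iio]
    have : Iio (0 : ℝ) ∩ Icc 0 1 = ∅ := by
      ext u; simp only [mem_inter_iff, mem_Iio, mem_Icc, mem_empty_iff_false, iff_false]
      rintro ⟨h1, h2, _⟩; linarith
    rw [this, measure_empty]
  -- Step B: ∫_{Icc 0 τ} h = τ * c for τ ∈ [a,b]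
  have hB : ∀ τ ∈ Icc a b, ∫ u in Icc 0 τ, h u = τ * c := by
    intro τ hτ
    have hτ0 : (0 : ℝ) ≤ τ := le_trans ha0 hτ.1
    have hτ1 : τ ≤ 1 := le_trans hτ.2 hb1
    have hsub' : Icc (0 : ℝ) τ ⊆ Icc (0 : ℝ) 1 := Icc_subset_Icc le_rfl hτ1
    have key := hInt (Icc 0 τ) measurableSet_Icc hsub'
    have hae : (s ∩ U ⁻¹' Icc 0 τ : Set Ω) =ᵐ[P] (s ∩ {ω | U ω ≤ τ} : Set Ω) := by
      have hd1 : ((s ∩ {ω | U ω ≤ τ}) \ (s ∩ U ⁻¹' Icc 0 τ) : Set Ω) ⊆ U ⁻¹' Iio 0 := by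
        rintro ω ⟨⟨hωs, hω1⟩, hω2⟩
        simp only [mem_setOf_eq] at hω1
        simp only [mem_inter_iff, mem_preimage, mem_Icc, not_and, not_le] at hω2
        simp only [mem_preimage, mem_Iio]
        by_contra hcon
        push_neg at hcon
        exact absurd hω1 (not_le.2 (hω2 hωs hcon))
      have h2 : ((s ∩ U ⁻¹' Icc 0 τ) \ (s ∩ {ω | U ω ≤ τ}) : Set Ω) = ∅ := by
        rw [Set.diff_eq_empty]
        exact Set.inter_subset_inter_right s (fun ω hω => hω.2)
      refine (MeasureTheory.ae_eq_set).2 ⟨?_, ?_⟩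
      · rw [h2]; exact measure_empty
      · exact measure_mono_null hd1 hUneg
    rw [measure_congr hae, hA τ hτ] at key
    exact key.symm
  -- h integrable on bounded sets
  have hint_on : ∀ (B : Set ℝ), MeasurableSet B → volume B ≠ ⊤ → IntegrableOn h B := by
    intro B hB hBvol
    refine Measure.integrableOn_of_bounded (M := 1) hBvol hmeas.aestronglyMeasurable ?_
    filter_upwards with u
    rw [Real.norm_eq_abs, abs_le]
    exact ⟨le_trans (by norm_num) (hrange u).1, (hrange u).2⟩
  -- Step C: ∫_{Icc a τ} h = (τ - a) * c for τ ∈ [a,b]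
  have hC : ∀ τ ∈ Icc a b, ∫ u in Icc a τ, h u = (τ - a) * c := by
    intro τ hτ
    have hτ0 : (0 : ℝ) ≤ τ := le_trans ha0 hτ.1
    have hsplit : Icc (0 : ℝ) τ = Icc 0 a ∪ Ioc a τ := (Icc_union_Ioc_eq_Icc ha0 hτ.1).symm
    have hunion : ∫ u in Icc (0 : ℝ) τ, h u = (∫ u in Icc (0 : ℝ) a, h u) + ∫ u in Ioc a τ, h u := by
      rw [hsplit]
      have hdisj : Disjoint (Icc (0 : ℝ) a) (Ioc a τ) := by
        rw [Set.disjoint_left]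
        rintro u ⟨_, hu2⟩ ⟨hu3, _⟩
        exact absurd hu2 (not_le.2 hu3)
      exact setIntegral_union hdisj measurableSet_Ioc
        (hint_on _ measurableSet_Icc (by simp)) (hint_on _ measurableSet_Ioc (by simp))
    have h1 := hB τ hτ
    have h2 := hB a (left_mem_Icc.2 hab)
    rw [h1, h2] at hunion
    have : ∫ u in Ioc a τ, h u = (τ - a) * c := by linarith
    rw [← this, integral_Icc_eq_integral_Ioc]
  -- measures via withDensity
  set μ₁ : Measure ℝ := (volume.restrict (Icc a b)).withDensity (fun u => ENNReal.ofReal (h u)) with hμ₁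
  set μ₂ : Measure ℝ := (volume.restrict (Icc a b)).withDensity (fun _ => ENNReal.ofReal c) with hμ₂
  have hfin : ∫⁻ u in Icc a b, ENNReal.ofReal (h u) ≠ ⊤ := by
    refine ne_top_of_le_ne_top ?_ (lintegral_mono (g := fun _ => (1 : ENNReal)) ?_)
    · simp [Real.volume_Icc]
    · intro u
      exact ENNReal.ofReal_le_one.2 (hrange u).2
  haveI : IsFiniteMeasure μ₁ := by
    constructor
    rw [hμ₁, withDensity_apply _ MeasurableSet.univ, Measure.restrict_univ]
    exact hfin.lt_top
  have hIic : ∀ t : ℝ, μ₁ (Iic t) = μ₂ (Iic t) := by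
    intro t
    have hrr : ∀ f : ℝ → ENNReal, (volume.restrict (Icc a b)).withDensity f (Iic t)
        = ∫⁻ u in Iic t ∩ Icc a b, f u := by
      intro f
      rw [withDensity_apply _ measurableSet_Iic, Measure.restrict_restrict measurableSet_Iic]
    have hset : Iic t ∩ Icc a b = Icc a (min b t) := by
      ext u
      simp only [mem_inter_iff, mem_Iic, mem_Icc, le_min_iff]
      tauto
    rw [hμ₁, hμ₂, hrr, hrr, hset]
    rcases le_or_gt a t with hat | hat
    · set t' := min b t with ht'
      have ht'mem : t' ∈ Icc a b := ⟨le_min hab hat, min_le_left _ _⟩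
      have hC' := hC t' ht'mem
      have hInt' : IntegrableOn h (Icc a t') := hint_on _ measurableSet_Icc (by simp)
      have h1 : ∫⁻ u in Icc a t', ENNReal.ofReal (h u) = ENNReal.ofReal ((t' - a) * c) := by
        rw [← hC', ← ofReal_integral_eq_lintegral_ofReal hInt']
        filter_upwards with u
        exact (hrange u).1
      have h2 : ∫⁻ u in Icc a t', ENNReal.ofReal c = ENNReal.ofReal (t' - a) * ENNReal.ofReal c := by
        rw [setLIntegral_const, Real.volume_Icc, mul_comm]
      rw [h1, h2, ENNReal.ofReal_mul (by linarith [ht'mem.1])]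
    · have : Icc a (min b t) = ∅ := by
        rw [Set.Icc_eq_empty_iff]
        intro hcon
        exact absurd (le_trans hcon (min_le_right _ _)) (not_le.2 hat)
      rw [this]
      simp
  have hμeq : μ₁ = μ₂ := Measure.ext_of_Iic μ₁ μ₂ hIic
  have hae2 : (fun u => ENNReal.ofReal (h u)) =ᵐ[volume.restrict (Icc a b)]
      (fun _ => ENNReal.ofReal c) := by
    rw [← withDensity_eq_iff (hmeas.ennreal_ofReal.aemeasurable) aemeasurable_const ?_]
    · exact hμeq
    · exact hfin
  filter_upwards [hae2] with u hu
  have := (ENNReal.ofReal_eq_ofReal_iff (hrange u).1 hc0).1 hu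
  exact this
end

section
/- Let X be binary with p_x = P(X = x) ∈ (0,1) for x ∈ {0,1}, and U a real random variable whose cdf F is continuous. Suppose U is [a, b]-independent of X for reals a ≤ b, so that P(U ≤ t | X = x) = F(t) for all t ∈ [a, b] and x ∈ {0,1}. Write α = F(a), β = F(b). Then for each x ∈ {0,1} and all u ∈ ℝ: P(U ≤ u | X = x) ≤ F̄^𝒯(u | x), where F̄^𝒯(u | x) equals F(u)/p_x if F(u) ≤ p_x·α; equals α if p_x·α ≤ F(u) and u ≤ a; equals F(u) if a ≤ u ≤ b; equals β + (F(u) − β)/p_x if b ≤ u and F(u) ≤ p_x + β(1 − p_x); and equals 1 if F(u) ≥ p_x + β(1 − p_x). -/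
open MeasureTheory Set

/-- The `𝒯`-independence upper cdf bound `F̄^𝒯(u | x)` with weight `p`, where
`α = F(a)` and `β = F(b)`. -/
noncomputable def Fbar (F : ℝ → ℝ) (p α β a b u : ℝ) : ℝ :=
  if F u ≤ p * α then F u / p
  else if u ≤ a then α
  else if u ≤ b then F u
  else if F u ≤ p + β * (1 - p) then β + (F u - β) / p
  else 1

/-- Under `[a,b]`-independence of `U` from the binary `X`, the
conditional cdf `P(U ≤ u | X = x)` is bounded above by `F̄^𝒯(u | x)`. -/
theorem stmt_14 {Ω : Type*} [MeasurableSpace Ω] (P : Measure Ω) [IsProbabilityMeasure P]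
    (X U : Ω → ℝ) (hX : Measurable X) (hU : Measurable U)
    (hbin : ∀ ω, X ω = 0 ∨ X ω = 1)
    (hp : ∀ x ∈ ({0, 1} : Set ℝ), (P {ω | X ω = x}).toReal ∈ Set.Ioo (0 : ℝ) 1)
    (F : ℝ → ℝ) (hF : ∀ u, F u = (P {ω | U ω ≤ u}).toReal) (hFcont : Continuous F)
    (a b : ℝ) (hab : a ≤ b)
    (hindep : ∀ t ∈ Set.Icc a b, ∀ x ∈ ({0, 1} : Set ℝ),
      (P ({ω | U ω ≤ t} ∩ {ω | X ω = x})).toReal = (P {ω | X ω = x}).toReal * F t) :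
    ∀ x ∈ ({0, 1} : Set ℝ), ∀ u : ℝ,
      (P ({ω | U ω ≤ u} ∩ {ω | X ω = x})).toReal
        ≤ (P {ω | X ω = x}).toReal
            * Fbar F (P {ω | X ω = x}).toReal (F a) (F b) a b u := by

  intro x hx u
  set p : ℝ := (P {ω | X ω = x}).toReal with hpdef
  obtain ⟨hp0, hp1⟩ := hp x hx
  have hp0' : p ≠ 0 := ne_of_gt hp0
  have hmeasU : ∀ v : ℝ, MeasurableSet {ω | U ω ≤ v} := fun v => hU measurableSet_Iic
  have hmeasX : MeasurableSet {ω | X ω = x} := hX (measurableSet_singleton x)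
  -- G v ≤ F v
  have h1 : ∀ v : ℝ, (P ({ω | U ω ≤ v} ∩ {ω | X ω = x})).toReal ≤ F v := by
    intro v
    rw [hF v]
    exact ENNReal.toReal_mono (measure_ne_top P _) (measure_mono inter_subset_left)
  -- monotone
  have h2 : ∀ v w : ℝ, v ≤ w →
      (P ({ω | U ω ≤ v} ∩ {ω | X ω = x})).toReal ≤ (P ({ω | U ω ≤ w} ∩ {ω | X ω = x})).toReal := by
    intro v w hvw
    refine ENNReal.toReal_mono (measure_ne_top P _) (measure_mono ?_)
    exact inter_subset_inter_left _ (fun ω h => le_trans h hvw)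
  -- G u ≤ p
  have h3 : (P ({ω | U ω ≤ u} ∩ {ω | X ω = x})).toReal ≤ p := by
    exact ENNReal.toReal_mono (measure_ne_top P _) (measure_mono inter_subset_right)
  have hGa : (P ({ω | U ω ≤ a} ∩ {ω | X ω = x})).toReal = p * F a :=
    hindep a ⟨le_refl a, hab⟩ x hx
  have hGb : (P ({ω | U ω ≤ b} ∩ {ω | X ω = x})).toReal = p * F b :=
    hindep b ⟨hab, le_refl b⟩ x hx
  rw [Fbar]
  split_ifs with c1 c2 c3 c4
  · have : p * (F u / p) = F u := by field_simp
    rw [this]; exact h1 u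
  · calc (P ({ω | U ω ≤ u} ∩ {ω | X ω = x})).toReal
        ≤ (P ({ω | U ω ≤ a} ∩ {ω | X ω = x})).toReal := h2 u a c2
      _ = p * F a := hGa
  · rw [← hindep u ⟨le_of_not_ge c2, c3⟩ x hx]
  · -- b < u case
    have hbu : b ≤ u := le_of_lt (lt_of_not_ge c3)
    have hinter : ({ω | U ω ≤ u} ∩ {ω | X ω = x}) ∩ {ω | U ω ≤ b}
        = {ω | U ω ≤ b} ∩ {ω | X ω = x} := by
      ext ω
      simp only [mem_inter_iff, mem_setOf_eq]
      exact ⟨fun ⟨⟨_, h2⟩, h3⟩ => ⟨h3, h2⟩, fun ⟨h1, h2⟩ => ⟨⟨le_trans h1 hbu, h2⟩, h1⟩⟩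
    have key := measure_union_add_inter (μ := P)
      ({ω | U ω ≤ u} ∩ {ω | X ω = x}) (hmeasU b)
    rw [hinter] at key
    have hsub : ({ω | U ω ≤ u} ∩ {ω | X ω = x}) ∪ {ω | U ω ≤ b} ⊆ {ω | U ω ≤ u} := by
      rintro ω (⟨h, _⟩ | h)
      · exact h
      · exact le_trans h hbu
    have hle : P ({ω | U ω ≤ u} ∩ {ω | X ω = x}) + P {ω | U ω ≤ b}
        ≤ P {ω | U ω ≤ u} + P ({ω | U ω ≤ b} ∩ {ω | X ω = x}) := by
      rw [← key]
      exact add_le_add_left (measure_mono hsub) _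
    have hreal : (P ({ω | U ω ≤ u} ∩ {ω | X ω = x})).toReal + F b
        ≤ F u + (P ({ω | U ω ≤ b} ∩ {ω | X ω = x})).toReal := by
      rw [hF b, hF u, ← ENNReal.toReal_add (measure_ne_top P _) (measure_ne_top P _),
        ← ENNReal.toReal_add (measure_ne_top P _) (measure_ne_top P _)]
      exact ENNReal.toReal_mono (by finiteness) hle
    have heq : p * (F b + (F u - F b) / p) = p * F b + (F u - F b) := by
      field_simp
    rw [heq]
    linarith [hreal, hGb]
  · rw [mul_one]
    exact h3
end

section
/- Let X be binary with p_x = P(X = x) ∈ (0,1) for x ∈ {0,1}, and U a real random variable whose cdf F is continuous. Suppose U is [a, b]-independent of X for reals a ≤ b, so that P(U ≤ t | X = x) = F(t) for all t ∈ [a, b] and x ∈ {0,1}. Write α = F(a), β = F(b). Then for each x ∈ {0,1} and all u ∈ ℝ: P(U ≤ u | X = x) ≥ F̲^𝒯(u | x), where F̲^𝒯(u | x) equals 0 if F(u) ≤ (1 − p_x)·α; equals α + (F(u) − α)/p_x if (1 − p_x)·α ≤ F(u) and u ≤ a; equals F(u) if a ≤ u ≤ b; equals β if b ≤ u and F(u)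 ≤ p_x·β + (1 − p_x); and equals 1 + (F(u) − 1)/p_x if F(u) ≥ p_x·β + (1 − p_x). -/
open MeasureTheory Set

/-- The `𝒯`-independence lower cdf bound `F̲^𝒯(u | x)` with weight `p`, where
`α = F(a)` and `β = F(b)`. -/
noncomputable def FlowT (F : ℝ → ℝ) (p α β a b u : ℝ) : ℝ :=
  if F u ≤ (1 - p) * α then 0
  else if u ≤ a then α + (F u - α) / p
  else if u ≤ b then F u
  else if F u ≤ p * β + (1 - p) then β
  else 1 + (F u - 1) / p

lemma key_aux {Ω : Type*} [MeasurableSpace Ω] (P : Measure Ω) [IsProbabilityMeasure P]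
    (X U : Ω → ℝ) (hX : Measurable X) (hU : Measurable U)
    (x y : ℝ) (hxy : x ≠ y) (hbin : ∀ ω, X ω = x ∨ X ω = y)
    (hpx : 0 < (P {ω | X ω = x}).toReal)
    (F : ℝ → ℝ) (hF : ∀ u, F u = (P {ω | U ω ≤ u}).toReal)
    (a b : ℝ) (hab : a ≤ b)
    (hix : ∀ t ∈ Set.Icc a b,
      (P ({ω | U ω ≤ t} ∩ {ω | X ω = x})).toReal = (P {ω | X ω = x}).toReal * F t)
    (hiy : ∀ t ∈ Set.Icc a b,
      (P ({ω | U ω ≤ t} ∩ {ω | X ω = y})).toReal = (P {ω | X ω = y}).toReal * F t)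
    (u : ℝ) :
    (P {ω | X ω = x}).toReal * FlowT F (P {ω | X ω = x}).toReal (F a) (F b) a b u
      ≤ (P ({ω | U ω ≤ u} ∩ {ω | X ω = x})).toReal := by
  set p := (P {ω | X ω = x}).toReal with hpdef
  set q := (P {ω | X ω = y}).toReal with hqdef
  have hmx : MeasurableSet {ω | X ω = x} := hX (measurableSet_singleton x)
  have hmy : MeasurableSet {ω | X ω = y} := hX (measurableSet_singleton y)
  have hdisj : Disjoint {ω | X ω = x} {ω | X ω = y} := by
    rw [Set.disjoint_left]
    intro ω h1 h2
    exact hxy (h1 ▸ h2 ▸ rfl)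
  have hunion : {ω | X ω = x} ∪ {ω | X ω = y} = Set.univ := by
    ext ω; simpa using hbin ω
  have psum : p + q = 1 := by
    have h := measure_union (μ := P) hdisj hmy
    rw [hunion, measure_univ] at h
    have := congrArg ENNReal.toReal h
    rw [ENNReal.toReal_add (measure_ne_top P _) (measure_ne_top P _)] at this
    simpa using this.symm
  have split : ∀ v : ℝ, (P ({ω | U ω ≤ v} ∩ {ω | X ω = x})).toReal
      + (P ({ω | U ω ≤ v} ∩ {ω | X ω = y})).toReal = F v := by
    intro v
    have hu2 : {ω | U ω ≤ v} ∩ {ω | X ω = x} ∪ {ω | U ω ≤ v} ∩ {ω | X ω = y}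
        = {ω | U ω ≤ v} := by
      rw [← Set.inter_union_distrib_left, hunion, Set.inter_univ]
    have h : P ({ω | U ω ≤ v} ∩ {ω | X ω = x} ∪ {ω | U ω ≤ v} ∩ {ω | X ω = y})
        = P ({ω | U ω ≤ v} ∩ {ω | X ω = x}) + P ({ω | U ω ≤ v} ∩ {ω | X ω = y}) := by
      apply measure_union (hdisj.mono Set.inter_subset_right Set.inter_subset_right)
      exact ((hU measurableSet_Iic).inter hmy)
    rw [hu2] at h
    rw [hF v, h, ENNReal.toReal_add (measure_ne_top P _) (measure_ne_top P _)]
  have mono : ∀ (v w : ℝ), v ≤ w → ∀ S : Set Ω,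
      (P ({ω | U ω ≤ v} ∩ S)).toReal ≤ (P ({ω | U ω ≤ w} ∩ S)).toReal := by
    intro v w hvw S
    exact ENNReal.toReal_mono (measure_ne_top P _)
      (measure_mono (Set.inter_subset_inter_left _ (fun ω h => le_trans h hvw)))
  have hq_bound : ∀ v : ℝ, (P ({ω | U ω ≤ v} ∩ {ω | X ω = y})).toReal ≤ q := by
    intro v
    exact ENNReal.toReal_mono (measure_ne_top P _) (measure_mono Set.inter_subset_right)
  rw [FlowT]
  split_ifs with h1 h2 h3 h4
  · simp [ENNReal.toReal_nonneg]
  · -- u ≤ a : bound is p*α + F u - α; uses H(u) ≤ H(a) = q * F a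
    have hHa : (P ({ω | U ω ≤ a} ∩ {ω | X ω = y})).toReal = q * F a :=
      hiy a ⟨le_refl a, hab⟩
    have hHu : (P ({ω | U ω ≤ u} ∩ {ω | X ω = y})).toReal ≤ q * F a :=
      hHa ▸ mono u a h2 _
    have hs := split u
    have hq1 : q = 1 - p := by linarith
    have hmul : p * (F a + (F u - F a) / p) = p * F a + (F u - F a) := by
      field_simp
    have hqa : q * F a = F a - p * F a := by rw [hq1]; ring
    rw [hmul]
    linarith [hs, hHu, hqa]
  · -- a < u ≤ b : equality
    have := hix u ⟨le_of_lt (not_le.mp h2), h3⟩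
    linarith [this]
  · -- b < u : bound p * F b, uses G(b) ≤ G(u)
    have hGb : (P ({ω | U ω ≤ b} ∩ {ω | X ω = x})).toReal = p * F b :=
      hix b ⟨hab, le_refl b⟩
    have h4' := mono b u (le_of_lt (not_le.mp h3)) {ω | X ω = x}
    rw [hGb] at h4'
    exact h4'
  · -- top tail: bound p + F u - 1, uses H(u) ≤ q = 1 - p
    have hs := split u
    have hq1 : q = 1 - p := by linarith
    have hHu := hq_bound u
    have hmul : p * (1 + (F u - 1) / p) = p + (F u - 1) := by
      field_simp
    rw [hmul]
    linarith [hs, hHu]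

/-- Under `[a,b]`-independence of `U` from the binary `X`, the
conditional cdf `P(U ≤ u | X = x)` is bounded below by `F̲^𝒯(u | x)`. -/
theorem stmt_15 {Ω : Type*} [MeasurableSpace Ω] (P : Measure Ω) [IsProbabilityMeasure P]
    (X U : Ω → ℝ) (hX : Measurable X) (hU : Measurable U)
    (hbin : ∀ ω, X ω = 0 ∨ X ω = 1)
    (hp : ∀ x ∈ ({0, 1} : Set ℝ), (P {ω | X ω = x}).toReal ∈ Set.Ioo (0 : ℝ) 1)
    (F : ℝ → ℝ) (hF : ∀ u, F u = (P {ω | U ω ≤ u}).toReal) (hFcont : Continuous F)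
    (a b : ℝ) (hab : a ≤ b)
    (hindep : ∀ t ∈ Set.Icc a b, ∀ x ∈ ({0, 1} : Set ℝ),
      (P ({ω | U ω ≤ t} ∩ {ω | X ω = x})).toReal = (P {ω | X ω = x}).toReal * F t) :
    ∀ x ∈ ({0, 1} : Set ℝ), ∀ u : ℝ,
      (P {ω | X ω = x}).toReal
          * FlowT F (P {ω | X ω = x}).toReal (F a) (F b) a b u
        ≤ (P ({ω | U ω ≤ u} ∩ {ω | X ω = x})).toReal := by
  intro x hx u
  have h0 : (0 : ℝ) ∈ ({0, 1} : Set ℝ) := by simp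
  have h1 : (1 : ℝ) ∈ ({0, 1} : Set ℝ) := by simp
  rcases hx with hx | hx
  · subst hx
    exact key_aux P X U hX hU 0 1 (by norm_num) hbin ((hp 0 h0).1) F hF a b hab
      (fun t ht => hindep t ht 0 h0) (fun t ht => hindep t ht 1 h1) u
  · simp only [Set.mem_singleton_iff] at hx
    subst hx
    exact key_aux P X U hX hU 1 0 (by norm_num) (fun ω => (hbin ω).symm)
      ((hp 1 h1).1) F hF a b hab
      (fun t ht => hindep t ht 1 h1) (fun t ht => hindep t ht 0 h0) u
end

section
/- Let X be binary with p_x = P(X = x) ∈ (0,1) for x ∈ {0,1}, and U a real random variable whose cdf F is continuous. Suppose U is [a, b]-𝒰-independent of X, i.e., there is a latent propensity score q (a Borel version of u ↦ P(X = x | U = u)) with q(u) = p_x for μ_U-almost every u ∈ [a, b]. Write α = F(a), β = F(b). Then for each x ∈ {0,1} and all u ∈ ℝ: P(U ≤ u | X = x) ≤ F̄^𝒰(u | x), where: if (1 − (β − α))·p_x ≤ α, F̄^𝒰(u | x) equals F(u)/p_x when F(u) ≤ (1 − (β − α))·p_x; equals 1 − (β − α) when (1 − (β − α))·p_x ≤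 F(u) and u ≤ a; equals 1 − (β − F(u)) when a ≤ u ≤ b; and equals 1 when u ≥ b; while if (1 − (β − α))·p_x ≥ α, F̄^𝒰(u | x) equals F(u)/p_x when u ≤ a; equals α/p_x + F(u) − α when a ≤ u ≤ b; equals ((β − α)(p_x − 1) + F(u))/p_x when b ≤ u and F(u) ≤ (β − α)(1 − p_x) + p_x; and equals 1 when F(u) ≥ (β − α)(1 − p_x) + p_x. -/
open MeasureTheory Set

/-- The `𝒰`-independence upper cdf bound `F̄^𝒰(u | x)` with weight `p`, where
`α = F(a)` and `β = F(b)`. -/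
noncomputable def FbarU (F : ℝ → ℝ) (p α β a b u : ℝ) : ℝ :=
  if (1 - (β - α)) * p ≤ α then
    (if F u ≤ (1 - (β - α)) * p then F u / p
     else if u ≤ a then 1 - (β - α)
     else if u ≤ b then 1 - (β - F u)
     else 1)
  else
    (if u ≤ a then F u / p
     else if u ≤ b then α / p + F u - α
     else if F u ≤ (β - α) * (1 - p) + p then ((β - α) * (p - 1) + F u) / p
     else 1)

/-- Under `[a,b]`-𝒰-independence of `U` from the binary `X`
(the latent propensity score `q` for arm `x` equals `p_x` a.e. on `[a,b]`), the
conditional cdf `P(U ≤ u | X = x)` is bounded above by `F̄^𝒰(u | x)`. -/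
theorem stmt_16 {Ω : Type*} [MeasurableSpace Ω] (P : Measure Ω) [IsProbabilityMeasure P]
    (X U : Ω → ℝ) (hX : Measurable X) (hU : Measurable U)
    (hbin : ∀ ω, X ω = 0 ∨ X ω = 1)
    (hp : ∀ x ∈ ({0, 1} : Set ℝ), (P {ω | X ω = x}).toReal ∈ Set.Ioo (0 : ℝ) 1)
    (F : ℝ → ℝ) (hF : ∀ u, F u = (P {ω | U ω ≤ u}).toReal) (hFcont : Continuous F)
    (a b : ℝ) (hab : a ≤ b) :
    ∀ x ∈ ({0, 1} : Set ℝ), ∀ q : ℝ → ℝ, Measurable q →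
      (∀ u, q u ∈ Set.Icc (0 : ℝ) 1) →
      (∀ B : Set ℝ, MeasurableSet B →
        (P ({ω | X ω = x} ∩ U ⁻¹' B)).toReal = ∫ u in B, q u ∂(Measure.map U P)) →
      (∀ᵐ u ∂((Measure.map U P).restrict (Set.Icc a b)),
        q u = (P {ω | X ω = x}).toReal) →
      ∀ u : ℝ,
        (P ({ω | U ω ≤ u} ∩ {ω | X ω = x})).toReal
          ≤ (P {ω | X ω = x}).toReal
              * FbarU F (P {ω | X ω = x}).toReal (F a) (F b) a b u := by
  intro x hx q hqm hq01 hqint hqae u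
  have hμprob : IsProbabilityMeasure (Measure.map U P) :=
    Measure.isProbabilityMeasure_map hU.aemeasurable
  set μ := Measure.map U P with hμdef
  obtain ⟨hp0, hp1⟩ := hp x hx
  set p := (P {ω | X ω = x}).toReal with hpdef
  set G : ℝ → ℝ := fun v => (P ({ω | U ω ≤ v} ∩ {ω | X ω = x})).toReal with hGdef
  have hpne : p ≠ 0 := ne_of_gt hp0
  have hGF : ∀ v, G v ≤ F v := by
    intro v
    rw [hF]
    exact ENNReal.toReal_mono (measure_ne_top P _) (measure_mono Set.inter_subset_left)
  have hGp : ∀ v, G v ≤ p :=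
    fun v => ENNReal.toReal_mono (measure_ne_top P _) (measure_mono Set.inter_subset_right)
  have hG0 : ∀ v, 0 ≤ G v := fun v => ENNReal.toReal_nonneg
  have hGmono : ∀ v w, v ≤ w → G v ≤ G w := by
    intro v w h
    exact ENNReal.toReal_mono (measure_ne_top P _)
      (measure_mono (Set.inter_subset_inter_left _ (fun ω hv => le_trans hv h)))
  have hFsplit : ∀ v w, v ≤ w → F w = F v + (P (U ⁻¹' Set.Ioc v w)).toReal := by
    intro v w hvw
    rw [hF, hF, ← ENNReal.toReal_add (measure_ne_top P _) (measure_ne_top P _)]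
    congr 1
    have hset : {ω | U ω ≤ w} = {ω | U ω ≤ v} ∪ U ⁻¹' Set.Ioc v w := by
      rw [show {ω | U ω ≤ v} = U ⁻¹' Set.Iic v from rfl, ← Set.preimage_union,
        Set.Iic_union_Ioc_eq_Iic hvw]
      rfl
    rw [hset]
    exact measure_union ((Set.Iic_disjoint_Ioc le_rfl).preimage U) (hU measurableSet_Ioc)
  have hStep : ∀ v w, v ≤ w → G w ≤ G v + (F w - F v) := by
    intro v w hvw
    have h2 : F w - F v = (P (U ⁻¹' Set.Ioc v w)).toReal := by
      rw [hFsplit v w hvw]; ring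
    rw [h2]
    have hsub : {ω | U ω ≤ w} ∩ {ω | X ω = x} ⊆
        ({ω | U ω ≤ v} ∩ {ω | X ω = x}) ∪ U ⁻¹' Set.Ioc v w := by
      rintro ω ⟨ha1, ha2⟩
      rcases le_or_gt (U ω) v with h | h
      · exact Or.inl ⟨h, ha2⟩
      · exact Or.inr ⟨h, ha1⟩
    calc G w ≤ (P (({ω | U ω ≤ v} ∩ {ω | X ω = x}) ∪ U ⁻¹' Set.Ioc v w)).toReal :=
          ENNReal.toReal_mono (measure_ne_top P _) (measure_mono hsub)
      _ ≤ (P ({ω | U ω ≤ v} ∩ {ω | X ω = x}) + P (U ⁻¹' Set.Ioc v w)).toReal :=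
          ENNReal.toReal_mono (ENNReal.add_ne_top.2 ⟨measure_ne_top P _, measure_ne_top P _⟩)
            (measure_union_le _ _)
      _ = G v + (P (U ⁻¹' Set.Ioc v w)).toReal :=
          ENNReal.toReal_add (measure_ne_top P _) (measure_ne_top P _)
  have hGint : ∀ v, G v = ∫ t in Set.Iic v, q t ∂μ := by
    intro v
    rw [hGdef]
    simp only
    rw [Set.inter_comm]
    exact hqint (Set.Iic v) measurableSet_Iic
  have hqi : Integrable q μ := by
    refine (integrable_const (1 : ℝ)).mono' hqm.aestronglyMeasurable (ae_of_all _ fun t => ?_)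
    have h := hq01 t
    rw [Real.norm_eq_abs, abs_le]
    exact ⟨by linarith [h.1], h.2⟩
  have hFμ : ∀ v, (μ (Set.Iic v)).toReal = F v := by
    intro v
    rw [hF, hμdef, Measure.map_apply hU measurableSet_Iic]
    rfl
  have hIoc : ∀ s t, a ≤ s → s ≤ t → t ≤ b → G t = G s + p * (F t - F s) := by
    intro s t has hst htb
    have hset : Set.Iic t = Set.Iic s ∪ Set.Ioc s t := (Set.Iic_union_Ioc_eq_Iic hst).symm
    have hdisj : Disjoint (Set.Iic s) (Set.Ioc s t) := Set.Iic_disjoint_Ioc le_rfl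
    have h1 : G t = G s + ∫ r in Set.Ioc s t, q r ∂μ := by
      rw [hGint, hGint, hset,
        setIntegral_union hdisj measurableSet_Ioc hqi.integrableOn hqi.integrableOn]
    have hae : ∀ᵐ r ∂(μ.restrict (Set.Ioc s t)), q r = p :=
      ae_restrict_of_ae_restrict_of_subset
        (Set.Ioc_subset_Icc_self.trans (Set.Icc_subset_Icc has htb)) hqae
    have h2 : ∫ r in Set.Ioc s t, q r ∂μ = ∫ _ in Set.Ioc s t, p ∂μ := integral_congr_ae hae
    have h3 : ∫ _ in Set.Ioc s t, p ∂μ = (μ (Set.Ioc s t)).toReal * p := by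
      rw [setIntegral_const, smul_eq_mul, measureReal_def]
    have h4 : (μ (Set.Ioc s t)).toReal = F t - F s := by
      have hm : μ (Set.Iic t) = μ (Set.Iic s) + μ (Set.Ioc s t) := by
        rw [hset, measure_union hdisj measurableSet_Ioc]
      have hm' := congrArg ENNReal.toReal hm
      rw [ENNReal.toReal_add (measure_ne_top μ _) (measure_ne_top μ _), hFμ, hFμ] at hm'
      linarith
    rw [h1, h2, h3, h4]; ring
  show G u ≤ p * FbarU F p (F a) (F b) a b u
  unfold FbarU
  split_ifs with h1 h2 h3 h4 h5 h6 h7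
  · have he : p * (F u / p) = F u := by field_simp
    rw [he]; exact hGF u
  · have e := hIoc a b le_rfl hab le_rfl
    have hb := hGp b
    have hm := hGmono u a h3
    have he : p * (1 - (F b - F a)) = p - p * (F b - F a) := by ring
    rw [he]; linarith
  · have e := hIoc u b (le_of_not_ge h3) h4 le_rfl
    have hb := hGp b
    have he : p * (1 - (F b - F u)) = p - p * (F b - F u) := by ring
    rw [he]; linarith
  · rw [mul_one]; exact hGp u
  · have he : p * (F u / p) = F u := by field_simp
    rw [he]; exact hGF u
  · have e := hIoc a u le_rfl (le_of_not_ge h5) h6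
    have ha := hGF a
    have he : p * (F a / p + F u - F a) = F a + p * (F u - F a) := by
      field_simp; ring
    rw [he]; linarith
  · have e := hIoc a b le_rfl hab le_rfl
    have ha := hGF a
    have hs := hStep b u (le_of_lt (lt_of_not_ge h6))
    have he : p * (((F b - F a) * (p - 1) + F u) / p) = p * (F b - F a) - (F b - F a) + F u := by
      field_simp
    rw [he]; linarith
  · rw [mul_one]; exact hGp u
end

section
/- Let X be binary with p_x = P(X = x) ∈ (0,1) for x ∈ {0,1}, and U a real random variable whose cdf F is continuous. Suppose U is [a, b]-𝒰-independent of X, i.e., there is a latent propensity score q (a Borel version of u ↦ P(X = x | U = u)) with q(u) = p_x for μ_U-almost every u ∈ [a, b]. Write α = F(a), β = F(b). Then for each x ∈ {0,1} and all u ∈ ℝ: P(U ≤ u | X = x) ≥ F̲^𝒰(u | x), where: if (1 − (β − α))·(1 − p_x) ≤ α, F̲^𝒰(u | x) equals 0 when F(u) ≤ (1 − (β − α))·(1 − p_x); equals (F(u) − (1 − (β − α))(1 − p_x))/p_x when (1 − (β − α))(1 − p_x) ≤ F(u) and u ≤ a; equals (β − 1)(1 − p_x)/p_x + F(u) when a ≤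 u ≤ b; and equals (F(u) − 1)/p_x + 1 when u ≥ b; while if (1 − (β − α))·(1 − p_x) ≥ α, F̲^𝒰(u | x) equals 0 when u ≤ a; equals F(u) − α when a ≤ u ≤ b; equals β − α when b ≤ u and F(u) ≤ p_x(β − α) + 1 − p_x; and equals (F(u) − 1)/p_x + 1 when F(u) ≥ p_x(β − α) + 1 − p_x. -/
open MeasureTheory Set

/-- The `𝒰`-independence lower cdf bound `F̲^𝒰(u | x)` with weight `p`, where
`α = F(a)` and `β = F(b)`. -/
noncomputable def FlowU (F : ℝ → ℝ) (p α β a b u : ℝ) : ℝ :=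
  if (1 - (β - α)) * (1 - p) ≤ α then
    (if F u ≤ (1 - (β - α)) * (1 - p) then 0
     else if u ≤ a then (F u - (1 - (β - α)) * (1 - p)) / p
     else if u ≤ b then (β - 1) * (1 - p) / p + F u
     else (F u - 1) / p + 1)
  else
    (if u ≤ a then 0
     else if u ≤ b then F u - α
     else if F u ≤ p * (β - α) + 1 - p then β - α
     else (F u - 1) / p + 1)

/-- Under `[a,b]`-𝒰-independence of `U` from the binary `X`
(the latent propensity score `q` for arm `x` equals `p_x` a.e. on `[a,b]`), the
conditional cdf `P(U ≤ u | X = x)` is bounded below by `F̲^𝒰(u | x)`. -/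
theorem stmt_17 {Ω : Type*} [MeasurableSpace Ω] (P : Measure Ω) [IsProbabilityMeasure P]
    (X U : Ω → ℝ) (hX : Measurable X) (hU : Measurable U)
    (hbin : ∀ ω, X ω = 0 ∨ X ω = 1)
    (hp : ∀ x ∈ ({0, 1} : Set ℝ), (P {ω | X ω = x}).toReal ∈ Set.Ioo (0 : ℝ) 1)
    (F : ℝ → ℝ) (hF : ∀ u, F u = (P {ω | U ω ≤ u}).toReal) (hFcont : Continuous F)
    (a b : ℝ) (hab : a ≤ b) :
    ∀ x ∈ ({0, 1} : Set ℝ), ∀ q : ℝ → ℝ, Measurable q →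
      (∀ u, q u ∈ Set.Icc (0 : ℝ) 1) →
      (∀ B : Set ℝ, MeasurableSet B →
        (P ({ω | X ω = x} ∩ U ⁻¹' B)).toReal = ∫ u in B, q u ∂(Measure.map U P)) →
      (∀ᵐ u ∂((Measure.map U P).restrict (Set.Icc a b)),
        q u = (P {ω | X ω = x}).toReal) →
      ∀ u : ℝ,
        (P {ω | X ω = x}).toReal
            * FlowU F (P {ω | X ω = x}).toReal (F a) (F b) a b u
          ≤ (P ({ω | U ω ≤ u} ∩ {ω | X ω = x})).toReal := by
  intro x hx q hqm hq01 hver hae u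
  have hμ : IsProbabilityMeasure (Measure.map U P) :=
    Measure.isProbabilityMeasure_map hU.aemeasurable
  set μ := Measure.map U P with hμdef
  set p := (P {ω | X ω = x}).toReal with hpdef
  obtain ⟨hp0, hp1⟩ := Set.mem_Ioo.mp (hp x hx)
  -- integrability of q
  have hqint : Integrable q μ := by
    refine (integrable_const (1:ℝ)).mono' hqm.aestronglyMeasurable ?_
    filter_upwards with t
    rw [Real.norm_eq_abs, abs_le]
    exact ⟨by linarith [(hq01 t).1], (hq01 t).2⟩
  -- cdf identities for μ
  have hμIic : ∀ v : ℝ, (μ (Iic v)).toReal = F v := by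
    intro v
    rw [hμdef, Measure.map_apply hU measurableSet_Iic, hF]
    rfl
  have hμIoc : ∀ u v : ℝ, u ≤ v → (μ (Ioc u v)).toReal = F v - F u := by
    intro u v h
    have key : (μ (Iic u)).toReal + (μ (Ioc u v)).toReal = (μ (Iic v)).toReal := by
      rw [← ENNReal.toReal_add (measure_ne_top μ _) (measure_ne_top μ _),
        ← measure_union (Set.Iic_disjoint_Ioc le_rfl) measurableSet_Ioc,
        Set.Iic_union_Ioc_eq_Iic h]
    rw [hμIic, hμIic] at key
    linarith
  have hμIoi : ∀ v : ℝ, (μ (Ioi v)).toReal = 1 - F v := by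
    intro v
    have key : (μ (Iic v)).toReal + (μ (Ioi v)).toReal = 1 := by
      rw [← ENNReal.toReal_add (measure_ne_top μ _) (measure_ne_top μ _),
        ← measure_union (Set.Iic_disjoint_Ioi le_rfl) measurableSet_Ioi,
        Set.Iic_union_Ioi, measure_univ, ENNReal.toReal_one]
    rw [hμIic] at key
    linarith
  -- the conditional "cdf" G
  set G : ℝ → ℝ := fun v => ∫ t in Iic v, q t ∂μ with hGdef
  have hgoal : (P ({ω | U ω ≤ u} ∩ {ω | X ω = x})).toReal = G u := by
    rw [Set.inter_comm]
    exact hver (Iic u) measurableSet_Iic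
  -- total mass
  have htot : ∫ t, q t ∂μ = p := by
    have h := (hver Set.univ MeasurableSet.univ).symm
    simpa using h
  -- splitting identities
  have hsplit : ∀ u v : ℝ, u ≤ v → G v = G u + ∫ t in Ioc u v, q t ∂μ := by
    intro u v h
    show (∫ t in Iic v, q t ∂μ) = _
    rw [← Set.Iic_union_Ioc_eq_Iic h,
      setIntegral_union (Set.Iic_disjoint_Ioc le_rfl) measurableSet_Ioc
        hqint.integrableOn hqint.integrableOn]
  have hsplit2 : ∀ v : ℝ, p = G v + ∫ t in Ioi v, q t ∂μ := by
    intro v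
    rw [← htot, ← setIntegral_univ (f := q) (μ := μ), ← Set.Iic_union_Ioi (a := v),
      setIntegral_union (Set.Iic_disjoint_Ioi le_rfl) measurableSet_Ioi
        hqint.integrableOn hqint.integrableOn]
  -- elementary bounds
  have hnn : ∀ v : ℝ, 0 ≤ G v := fun v =>
    setIntegral_nonneg measurableSet_Iic fun t _ => (hq01 t).1
  have hIocnn : ∀ u v : ℝ, 0 ≤ ∫ t in Ioc u v, q t ∂μ := fun u v =>
    setIntegral_nonneg measurableSet_Ioc fun t _ => (hq01 t).1
  have hIoinn : ∀ v : ℝ, 0 ≤ ∫ t in Ioi v, q t ∂μ := fun v =>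
    setIntegral_nonneg measurableSet_Ioi fun t _ => (hq01 t).1
  have hmono : ∀ u v : ℝ, u ≤ v → G u ≤ G v := by
    intro u v h
    rw [hsplit u v h]
    linarith [hIocnn u v]
  have hIocle : ∀ u v : ℝ, u ≤ v → ∫ t in Ioc u v, q t ∂μ ≤ F v - F u := by
    intro u v h
    calc ∫ t in Ioc u v, q t ∂μ ≤ ∫ _t in Ioc u v, (1:ℝ) ∂μ := by
          refine setIntegral_mono_on hqint.integrableOn
            (integrable_const 1).integrableOn measurableSet_Ioc ?_
          exact fun t _ => (hq01 t).2
      _ = (μ (Ioc u v)).toReal := by rw [setIntegral_const]; simp; rfl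
      _ = F v - F u := hμIoc u v h
  have hIoile : ∀ v : ℝ, ∫ t in Ioi v, q t ∂μ ≤ 1 - F v := by
    intro v
    calc ∫ t in Ioi v, q t ∂μ ≤ ∫ _t in Ioi v, (1:ℝ) ∂μ := by
          refine setIntegral_mono_on hqint.integrableOn
            (integrable_const 1).integrableOn measurableSet_Ioi ?_
          exact fun t _ => (hq01 t).2
      _ = (μ (Ioi v)).toReal := by rw [setIntegral_const]; simp; rfl
      _ = 1 - F v := hμIoi v
  -- q = p a.e. on [a,b]
  have haeIcc : ∀ᵐ t ∂μ, t ∈ Icc a b → q t = p :=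
    (ae_restrict_iff' measurableSet_Icc).mp hae
  have hconst : ∀ u v : ℝ, a ≤ u → v ≤ b → u ≤ v →
      ∫ t in Ioc u v, q t ∂μ = p * (F v - F u) := by
    intro u v hau hvb huv
    have h1 : ∫ t in Ioc u v, q t ∂μ = ∫ _t in Ioc u v, p ∂μ := by
      refine setIntegral_congr_ae measurableSet_Ioc ?_
      filter_upwards [haeIcc] with t ht hmem
      exact ht ⟨le_of_lt (lt_of_le_of_lt hau hmem.1), le_trans hmem.2 hvb⟩
    rw [h1, setIntegral_const, Measure.real, hμIoc u v huv, smul_eq_mul, mul_comm]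
  -- key structural facts
  have hGmid : ∀ v : ℝ, a ≤ v → v ≤ b → G v = G a + p * (F v - F a) := by
    intro v h1 h2
    rw [hsplit a v h1, hconst a v le_rfl h2 h1]
  have hGb : G b = G a + p * (F b - F a) := hGmid b hab le_rfl
  have hGa : p * F a + (F b - 1) * (1 - p) ≤ G a := by
    have h1 := hsplit2 b
    have h2 := hIoile b
    nlinarith [hGb]
  have hGlow : ∀ v : ℝ, v ≤ a → F v - (1 - (F b - F a)) * (1 - p) ≤ G v := by
    intro v hv
    have h1 := hsplit v a hv
    have h2 := hIocle v a hv
    nlinarith [hGa]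
  have hGhigh : ∀ v : ℝ, F v - 1 + p ≤ G v := by
    intro v
    have h1 := hsplit2 v
    have h2 := hIoile v
    linarith
  rw [hgoal, FlowU]
  have hpne : p ≠ 0 := ne_of_gt hp0
  split_ifs with hc h1 h2 h3 h4 h5 h6
  · simpa using hnn u
  · have heq : p * ((F u - (1 - (F b - F a)) * (1 - p)) / p)
        = F u - (1 - (F b - F a)) * (1 - p) := by field_simp
    rw [heq]
    exact hGlow u h2
  · have heq : p * ((F b - 1) * (1 - p) / p + F u)
        = (F b - 1) * (1 - p) + p * F u := by field_simp
    rw [heq]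
    have hmid := hGmid u (le_of_not_ge h2) h3
    nlinarith [hGa]
  · have heq : p * ((F u - 1) / p + 1) = F u - 1 + p := by field_simp
    rw [heq]
    exact hGhigh u
  · simpa using hnn u
  · have hmid := hGmid u (le_of_not_ge h4) h5
    linarith [hnn a]
  · have hbu : b ≤ u := le_of_not_ge h5
    have := hmono b u hbu
    linarith [hnn a, hGb]
  · have heq : p * ((F u - 1) / p + 1) = F u - 1 + p := by field_simp
    rw [heq]
    exact hGhigh u
end

section
/- Let F be a continuous cdf on ℝ that is strictly increasing on the interval support of its associated measure, let p₁ ∈ (0,1) with p₀ = 1 − p₁, let a ≤ b be reals, and write α = F(a), β = F(b). Then for every ε ∈ [0,1] there exists a probability space carrying random variables U and X ∈ {0,1} such that: (i) U has cdf F; (ii) P(X = 1) = p₁; (iii) U is [a, b]-independent of X (P(U ≤ t | X = 0) = P(U ≤ t | X = 1) = F(t) for all t ∈ [a, b]); and (iv) for all u ∈ ℝ, P(U ≤ u | X = 1) = ε·F̲^𝒯(u | 1) + (1 − ε)·F̄^𝒯(u | 1) and P(U ≤ u | X = 0) = (1 − ε)·F̲^𝒯(u | 0) + ε·F̄^𝒯(u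 | 0). In particular the cdf bounds F̲^𝒯 and F̄^𝒯 are jointly sharp. -/
open MeasureTheory Set

/-- conditional density of `X = 1` given `U`, as a function of `s = F(U)`. -/
noncomputable def hdens (ε p c₁ c₂ c₃ c₄ c₅ c₆ s : ℝ) : ℝ :=
  ε * (if s ≤ c₁ then 0 else if s ≤ c₂ then 1 else if s ≤ c₃ then p
        else if s ≤ c₄ then 0 else 1)
  + (1 - ε) * (if s ≤ c₅ then 1 else if s ≤ c₂ then 0 else if s ≤ c₃ then p
        else if s ≤ c₆ then 1 else 0)

lemma hdens_eq_comb (ε p c₁ c₂ c₃ c₄ c₅ c₆ s : ℝ)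
    (h12 : c₁ ≤ c₂) (h23 : c₂ ≤ c₃) (h34 : c₃ ≤ c₄) (h52 : c₅ ≤ c₂) (h36 : c₃ ≤ c₆) :
    hdens ε p c₁ c₂ c₃ c₄ c₅ c₆ s
      = ε * ((if s ≤ c₂ then (1:ℝ) else 0) - (if s ≤ c₁ then (1:ℝ) else 0)
            + p * ((if s ≤ c₃ then (1:ℝ) else 0) - (if s ≤ c₂ then (1:ℝ) else 0))
            + (1 - (if s ≤ c₄ then (1:ℝ) else 0)))
      + (1 - ε) * ((if s ≤ c₅ then (1:ℝ) else 0)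
            + p * ((if s ≤ c₃ then (1:ℝ) else 0) - (if s ≤ c₂ then (1:ℝ) else 0))
            + ((if s ≤ c₆ then (1:ℝ) else 0) - (if s ≤ c₃ then (1:ℝ) else 0))) := by
  unfold hdens
  split_ifs <;> first | ring1 | linarith

lemma hdens_nonneg (ε p c₁ c₂ c₃ c₄ c₅ c₆ s : ℝ)
    (hε0 : 0 ≤ ε) (hε1 : ε ≤ 1) (hp0 : 0 ≤ p) (hp1 : p ≤ 1) :
    0 ≤ hdens ε p c₁ c₂ c₃ c₄ c₅ c₆ s := by
  unfold hdens
  split_ifs <;> nlinarith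

lemma hdens_le_one (ε p c₁ c₂ c₃ c₄ c₅ c₆ s : ℝ)
    (hε0 : 0 ≤ ε) (hε1 : ε ≤ 1) (hp0 : 0 ≤ p) (hp1 : p ≤ 1) :
    hdens ε p c₁ c₂ c₃ c₄ c₅ c₆ s ≤ 1 := by
  unfold hdens
  split_ifs <;> nlinarith

lemma measurable_hdens (ε p c₁ c₂ c₃ c₄ c₅ c₆ : ℝ) :
    Measurable (hdens ε p c₁ c₂ c₃ c₄ c₅ c₆) := by
  unfold hdens
  apply Measurable.add
  · apply Measurable.const_mul
    apply Measurable.ite (measurableSet_le measurable_id measurable_const) measurable_const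
    apply Measurable.ite (measurableSet_le measurable_id measurable_const) measurable_const
    apply Measurable.ite (measurableSet_le measurable_id measurable_const) measurable_const
    exact Measurable.ite (measurableSet_le measurable_id measurable_const) measurable_const
      measurable_const
  · apply Measurable.const_mul
    apply Measurable.ite (measurableSet_le measurable_id measurable_const) measurable_const
    apply Measurable.ite (measurableSet_le measurable_id measurable_const) measurable_const
    apply Measurable.ite (measurableSet_le measurable_id measurable_const) measurable_const
    exact Measurable.ite (measurableSet_le measurable_id measurable_const) measurable_const
      measurable_const

lemma comb_int {ν : Measure ℝ} [IsFiniteMeasure ν] {f₁ f₂ f₃ f₄ f₅ f₆ : ℝ → ℝ}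
    (h₁ : Integrable f₁ ν) (h₂ : Integrable f₂ ν) (h₃ : Integrable f₃ ν)
    (h₄ : Integrable f₄ ν) (h₅ : Integrable f₅ ν) (h₆ : Integrable f₆ ν) (ε p : ℝ) :
    ∫ t, (ε * (f₂ t - f₁ t + p * (f₃ t - f₂ t) + (1 - f₄ t))
      + (1 - ε) * (f₅ t + p * (f₃ t - f₂ t) + (f₆ t - f₃ t))) ∂ν
    = ε * ((∫ t, f₂ t ∂ν) - (∫ t, f₁ t ∂ν)
          + p * ((∫ t, f₃ t ∂ν) - (∫ t, f₂ t ∂ν))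
          + ((ν univ).toReal - (∫ t, f₄ t ∂ν)))
      + (1 - ε) * ((∫ t, f₅ t ∂ν) + p * ((∫ t, f₃ t ∂ν) - (∫ t, f₂ t ∂ν))
          + ((∫ t, f₆ t ∂ν) - (∫ t, f₃ t ∂ν))) := by
  have i32 : Integrable (fun t => p * (f₃ t - f₂ t)) ν := ((h₃.sub h₂).const_mul p : )
  have d21 : Integrable (fun t => f₂ t - f₁ t) ν := h₂.sub h₁
  have iA1 : Integrable (fun t => f₂ t - f₁ t + p * (f₃ t - f₂ t)) ν := d21.add i32
  have iC : Integrable (fun t => 1 - f₄ t) ν := (integrable_const 1).sub h₄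
  have iA : Integrable (fun t => f₂ t - f₁ t + p * (f₃ t - f₂ t) + (1 - f₄ t)) ν := iA1.add iC
  have iB1 : Integrable (fun t => f₅ t + p * (f₃ t - f₂ t)) ν := h₅.add i32
  have iD : Integrable (fun t => f₆ t - f₃ t) ν := h₆.sub h₃
  have iB : Integrable (fun t => f₅ t + p * (f₃ t - f₂ t) + (f₆ t - f₃ t)) ν := iB1.add iD
  rw [integral_add (iA.const_mul ε) (iB.const_mul (1 - ε)), integral_const_mul,
    integral_const_mul, integral_add iA1 iC, integral_add d21 i32, integral_sub h₂ h₁,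
    integral_const_mul, integral_sub h₃ h₂, integral_sub (integrable_const 1) h₄,
    integral_const, integral_add iB1 iD, integral_add h₅ i32, integral_const_mul,
    integral_sub h₃ h₂, integral_sub h₆ h₃]
  simp [smul_eq_mul, measureReal_def]


set_option maxHeartbeats 1000000 in
/-- sharpness of the `𝒯`-independence cdf bounds.
For every `ε ∈ [0,1]` there is a joint distribution of `(U, X)` with the given
marginals satisfying `[a,b]`-independence, whose conditional cdfs equal the
corresponding convex combinations of the bound functions. -/
theorem stmt_18 (μ : Measure ℝ) [IsProbabilityMeasure μ]
    (F : ℝ → ℝ) (hF : ∀ u, F u = (μ (Set.Iic u)).toReal)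
    (hFcont : Continuous F)
    (hOrd : (msupport μ).OrdConnected)
    (hstrict : StrictMonoOn F (msupport μ))
    (p₁ : ℝ) (hp₁ : p₁ ∈ Set.Ioo (0 : ℝ) 1)
    (a b : ℝ) (hab : a ≤ b) :
    ∀ ε ∈ Set.Icc (0 : ℝ) 1,
      ∃ (Ω : Type) (_ : MeasurableSpace Ω) (P : Measure Ω) (U X : Ω → ℝ),
        IsProbabilityMeasure P ∧ Measurable U ∧ Measurable X ∧
        (∀ ω, X ω = 0 ∨ X ω = 1) ∧
        Measure.map U P = μ ∧
        P {ω | X ω = 1} = ENNReal.ofReal p₁ ∧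
        (∀ t ∈ Set.Icc a b, ∀ x ∈ ({0, 1} : Set ℝ),
          (P ({ω | U ω ≤ t} ∩ {ω | X ω = x})).toReal
            = (P {ω | X ω = x}).toReal * F t) ∧
        (∀ u : ℝ,
          (P ({ω | U ω ≤ u} ∩ {ω | X ω = 1})).toReal
            = (P {ω | X ω = 1}).toReal
                * (ε * FlowT F p₁ (F a) (F b) a b u
                    + (1 - ε) * Fbar F p₁ (F a) (F b) a b u)) ∧
        (∀ u : ℝ,
          (P ({ω | U ω ≤ u} ∩ {ω | X ω = 0})).toReal
            = (P {ω | X ω = 0}).toReal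
                * ((1 - ε) * FlowT F (1 - p₁) (F a) (F b) a b u
                    + ε * Fbar F (1 - p₁) (F a) (F b) a b u)) := by
  obtain ⟨hp0, hp1'⟩ := hp₁
  intro ε hε
  obtain ⟨hε0, hε1⟩ := hε
  -- basic facts about F
  have hFmono : Monotone F := fun x y hxy => by
    rw [hF x, hF y]
    exact ENNReal.toReal_mono (measure_ne_top μ _)
      (measure_mono (Iic_subset_Iic.mpr hxy))
  have hF0 : ∀ u, 0 ≤ F u := fun u => by rw [hF u]; exact ENNReal.toReal_nonneg
  have hF1 : ∀ u, F u ≤ 1 := fun u => by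
    rw [hF u]
    calc (μ (Iic u)).toReal ≤ (μ univ).toReal :=
          ENNReal.toReal_mono (measure_ne_top μ _) (measure_mono (subset_univ _))
      _ = 1 := by rw [measure_univ]; rfl
  have hαβ : F a ≤ F b := hFmono hab
  have hα0 : 0 ≤ F a := hF0 a
  have hβ1 : F b ≤ 1 := hF1 b
  -- tendsto facts
  have hbot : Filter.Tendsto F Filter.atBot (nhds 0) := by
    have hstep : Filter.Tendsto (fun x : ℝ => μ (Iic x)) Filter.atBot (nhds 0) := by
      have hI : ⋂ n : ℝ, Iic n = (∅ : Set ℝ) := by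
        ext x
        simp only [mem_iInter, mem_Iic, mem_empty_iff_false, iff_false, not_forall, not_le]
        exact ⟨x - 1, by linarith⟩
      have := tendsto_measure_iInter_atBot (μ := μ) (s := fun x : ℝ => Iic x)
        (fun _ => measurableSet_Iic.nullMeasurableSet) monotone_Iic ⟨0, measure_ne_top μ _⟩
      rw [hI] at this
      simpa [Function.comp_def] using this
    have hcont := (ENNReal.tendsto_toReal (by norm_num : (0:ENNReal) ≠ ⊤)).comp hstep
    simp only [ENNReal.toReal_zero] at hcont
    refine hcont.congr fun x => ?_
    rw [Function.comp_apply, ← hF x]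
  have htop : Filter.Tendsto F Filter.atTop (nhds 1) := by
    have hstep := tendsto_measure_Iic_atTop (μ := μ)
    rw [measure_univ] at hstep
    have hcont := (ENNReal.tendsto_toReal (by norm_num : (1:ENNReal) ≠ ⊤)).comp hstep
    simp only [ENNReal.toReal_one] at hcont
    refine hcont.congr fun x => ?_
    rw [Function.comp_apply, ← hF x]
  -- the fundamental cdf-slice computation
  have hSm : ∀ c : ℝ, MeasurableSet {t : ℝ | F t ≤ c} := fun c =>
    (isClosed_le hFcont continuous_const).measurableSet
  have lemB : ∀ u c : ℝ, 0 ≤ c →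
      (μ (Iic u ∩ {t | F t ≤ c})).toReal = min (F u) c := by
    intro u c hc
    by_cases hcu : F u ≤ c
    · have h1 : Iic u ∩ {t | F t ≤ c} = Iic u :=
        inter_eq_left.mpr fun t ht => le_trans (hFmono ht) hcu
      rw [h1, min_eq_left hcu, hF u]
    · push_neg at hcu
      have hSu : {t | F t ≤ c} ⊆ Iic u := by
        intro t ht
        simp only [mem_Iic]
        by_contra h
        push_neg at h
        exact absurd (le_trans (hFmono h.le) ht) (not_le.mpr hcu)
      rw [inter_eq_right.mpr hSu, min_eq_right hcu.le]
      by_cases hS : {t : ℝ | F t ≤ c}.Nonempty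
      · have hbdd : BddAbove {t : ℝ | F t ≤ c} := ⟨u, hSu⟩
        have hqS : sSup {t : ℝ | F t ≤ c} ∈ {t : ℝ | F t ≤ c} :=
          (isClosed_le hFcont continuous_const).csSup_mem hS hbdd
        have hSeq : {t : ℝ | F t ≤ c} = Iic (sSup {t : ℝ | F t ≤ c}) := by
          refine subset_antisymm (fun t ht => le_csSup hbdd ht) fun t ht => ?_
          exact le_trans (hFmono ht) hqS
        have hFq : F (sSup {t : ℝ | F t ≤ c}) = c := by
          refine le_antisymm hqS ?_
          by_contra h
          push_neg at h
          have hqu : sSup {t : ℝ | F t ≤ c} ≤ u := csSup_le hS hSu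
          obtain ⟨t, _, hFt⟩ := intermediate_value_Icc hqu hFcont.continuousOn
            (show c ∈ Icc (F (sSup {t : ℝ | F t ≤ c})) (F u) from ⟨h.le, hcu.le⟩)
          have htq : t ≤ sSup {t : ℝ | F t ≤ c} := le_csSup hbdd hFt.le
          have := hFmono htq
          rw [hFt] at this
          exact absurd this (not_le.mpr h)
        rw [hSeq, ← hF _, hFq]
      · rw [not_nonempty_iff_eq_empty] at hS
        rw [hS, measure_empty]
        simp only [ENNReal.toReal_zero]
        by_contra hne
        have hcpos : 0 < c := lt_of_le_of_ne hc fun h => hne (by rw [← h])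
        obtain ⟨t, ht⟩ := ((hbot.eventually_lt_const hcpos).exists)
        have : t ∈ {t : ℝ | F t ≤ c} := ht.le
        rw [hS] at this
        exact this
  have lemB' : ∀ c : ℝ, 0 ≤ c → (μ {t | F t ≤ c}).toReal = min 1 c := by
    intro c hc
    by_cases h1 : (1:ℝ) ≤ c
    · have : {t : ℝ | F t ≤ c} = univ := eq_univ_of_forall fun t => le_trans (hF1 t) h1
      rw [this, measure_univ, min_eq_left h1]
      rfl
    · push_neg at h1
      obtain ⟨u₀, hu₀⟩ := (htop.eventually_const_lt h1).exists
      have hsub : {t : ℝ | F t ≤ c} ⊆ Iic u₀ := by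
        intro t ht
        simp only [mem_Iic]
        by_contra h
        push_neg at h
        exact absurd (le_trans (hFmono h.le) ht) (not_le.mpr hu₀)
      have := lemB u₀ c hc
      rw [inter_eq_right.mpr hsub, min_eq_right hu₀.le] at this
      rw [this, min_eq_right h1.le]
  -- integrals of threshold indicators
  have hif_eq : ∀ c : ℝ, (fun t => if F t ≤ c then (1:ℝ) else 0)
      = Set.indicator {t : ℝ | F t ≤ c} (fun _ => (1:ℝ)) := by
    intro c
    funext t
    simp [Set.indicator_apply, Set.mem_setOf_eq]
  have iInt : ∀ c : ℝ, Integrable (fun t => if F t ≤ c then (1:ℝ) else 0) μ := by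
    intro c
    rw [hif_eq c]
    exact (integrable_const 1).indicator (hSm c)
  have intInd : ∀ u c : ℝ, 0 ≤ c →
      ∫ t in Iic u, (if F t ≤ c then (1:ℝ) else 0) ∂μ = min (F u) c := by
    intro u c hc
    rw [show (fun t => if F t ≤ c then (1:ℝ) else 0)
        = Set.indicator {t : ℝ | F t ≤ c} (fun _ => (1:ℝ)) from hif_eq c]
    rw [integral_indicator (hSm c), setIntegral_const, measureReal_restrict_apply (hSm c),
      inter_comm, smul_eq_mul, mul_one, measureReal_def, lemB u c hc]
  have intInd' : ∀ c : ℝ, 0 ≤ c →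
      ∫ t, (if F t ≤ c then (1:ℝ) else 0) ∂μ = min 1 c := by
    intro c hc
    rw [show (fun t => if F t ≤ c then (1:ℝ) else 0)
        = Set.indicator {t : ℝ | F t ≤ c} (fun _ => (1:ℝ)) from hif_eq c]
    rw [integral_indicator (hSm c), setIntegral_const, smul_eq_mul, mul_one, measureReal_def, lemB' c hc]
  -- algebraic evaluation of the bound functions via minima
  have L45a : ∀ p : ℝ, 0 < p → p < 1 → ∀ u : ℝ,
      p * FlowT F p (F a) (F b) a b u
        = min (F u) (F a) - min (F u) ((1 - p) * F a)
          + p * (min (F u) (F b) - min (F u) (F a))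
          + (F u - min (F u) (F b + (1 - p) * (1 - F b))) := by
    intro p hp hplt u
    have w1 : (1 - p) * F a ≤ F a := by nlinarith
    have w3 : F b ≤ F b + (1 - p) * (1 - F b) := by nlinarith
    have hth : F b + (1 - p) * (1 - F b) = p * F b + (1 - p) := by ring
    unfold FlowT
    split_ifs with h1 h2 h3 h4
    · rw [min_eq_left (h1.trans w1), min_eq_left h1,
        min_eq_left ((h1.trans w1).trans hαβ),
        min_eq_left (((h1.trans w1).trans hαβ).trans w3)]
      ring
    · push_neg at h1
      have hs : F u ≤ F a := hFmono h2
      rw [min_eq_left hs, min_eq_right h1.le, min_eq_left (hs.trans hαβ),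
        min_eq_left ((hs.trans hαβ).trans w3)]
      field_simp
      ring
    · push_neg at h1 h2
      have hs1 : F a ≤ F u := hFmono h2.le
      have hs2 : F u ≤ F b := hFmono h3
      rw [min_eq_right hs1, min_eq_right (w1.trans hs1), min_eq_left hs2,
        min_eq_left (hs2.trans w3)]
      ring
    · push_neg at h1 h2 h3
      have hs1 : F a ≤ F u := hFmono h2.le
      have hs2 : F b ≤ F u := hFmono h3.le
      have hs4 : F u ≤ F b + (1 - p) * (1 - F b) := by rw [hth]; exact h4
      rw [min_eq_right hs1, min_eq_right (w1.trans hs1), min_eq_right hs2,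
        min_eq_left hs4]
      ring
    · push_neg at h1 h2 h3 h4
      have hs1 : F a ≤ F u := hFmono h2.le
      have hs2 : F b ≤ F u := hFmono h3.le
      have hs4 : F b + (1 - p) * (1 - F b) ≤ F u := by rw [hth]; exact h4.le
      rw [min_eq_right hs1, min_eq_right (w1.trans hs1), min_eq_right hs2,
        min_eq_right hs4]
      field_simp
      ring
  have L45b : ∀ p : ℝ, 0 < p → p < 1 → ∀ u : ℝ,
      p * Fbar F p (F a) (F b) a b u
        = min (F u) (p * F a)
          + p * (min (F u) (F b) - min (F u) (F a))
          + (min (F u) (F b + p * (1 - F b)) - min (F u) (F b)) := by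
    intro p hp hplt u
    have w1 : p * F a ≤ F a := by nlinarith
    have w3 : F b ≤ F b + p * (1 - F b) := by nlinarith
    have hth : F b + p * (1 - F b) = p + F b * (1 - p) := by ring
    unfold Fbar
    split_ifs with h1 h2 h3 h4
    · rw [min_eq_left h1, min_eq_left (h1.trans w1),
        min_eq_left ((h1.trans w1).trans hαβ),
        min_eq_left (((h1.trans w1).trans hαβ).trans w3)]
      field_simp
      ring
    · push_neg at h1
      have hs : F u ≤ F a := hFmono h2
      rw [min_eq_right h1.le, min_eq_left hs, min_eq_left (hs.trans hαβ),
        min_eq_left ((hs.trans hαβ).trans w3)]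
      ring
    · push_neg at h1 h2
      have hs1 : F a ≤ F u := hFmono h2.le
      have hs2 : F u ≤ F b := hFmono h3
      rw [min_eq_right (w1.trans hs1), min_eq_right hs1, min_eq_left hs2,
        min_eq_left (hs2.trans w3)]
      ring
    · push_neg at h1 h2 h3
      have hs1 : F a ≤ F u := hFmono h2.le
      have hs2 : F b ≤ F u := hFmono h3.le
      have hs4 : F u ≤ F b + p * (1 - F b) := by rw [hth]; exact h4
      rw [min_eq_right (w1.trans hs1), min_eq_right hs1, min_eq_right hs2,
        min_eq_left hs4]
      field_simp
      ring
    · push_neg at h1 h2 h3 h4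
      have hs1 : F a ≤ F u := hFmono h2.le
      have hs2 : F b ≤ F u := hFmono h3.le
      have hs4 : F b + p * (1 - F b) ≤ F u := by rw [hth]; exact h4.le
      rw [min_eq_right (w1.trans hs1), min_eq_right hs1, min_eq_right hs2,
        min_eq_right hs4]
      ring
  -- ordering of the six thresholds
  have o1 : (1 - p₁) * F a ≤ F a := by nlinarith
  have o3 : F b ≤ F b + (1 - p₁) * (1 - F b) := by nlinarith
  have o5 : p₁ * F a ≤ F a := by nlinarith
  have o6 : F b ≤ F b + p₁ * (1 - F b) := by nlinarith
  have oc1 : (0:ℝ) ≤ (1 - p₁) * F a := by nlinarith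
  have oc4 : F b + (1 - p₁) * (1 - F b) ≤ 1 := by nlinarith
  have oc4' : (0:ℝ) ≤ F b + (1 - p₁) * (1 - F b) := by nlinarith [hF0 b]
  have oc5 : (0:ℝ) ≤ p₁ * F a := by nlinarith
  have oc6 : F b + p₁ * (1 - F b) ≤ 1 := by nlinarith
  have oc6' : (0:ℝ) ≤ F b + p₁ * (1 - F b) := by nlinarith [hF0 b]
  have hα1 : F a ≤ 1 := hF1 a
  -- the conditional density
  set g : ℝ → ℝ := fun t => hdens ε p₁ ((1 - p₁) * F a) (F a) (F b)
      (F b + (1 - p₁) * (1 - F b)) (p₁ * F a) (F b + p₁ * (1 - F b)) (F t) with hgdef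
  have hg0 : ∀ t, 0 ≤ g t := fun t =>
    hdens_nonneg ε p₁ _ _ _ _ _ _ (F t) hε0 hε1 hp0.le hp1'.le
  have hg1 : ∀ t, g t ≤ 1 := fun t =>
    hdens_le_one ε p₁ _ _ _ _ _ _ (F t) hε0 hε1 hp0.le hp1'.le
  have hgmeas : Measurable g :=
    (measurable_hdens ε p₁ _ _ _ _ _ _).comp hFcont.measurable
  have hgInt : Integrable g μ := by
    refine Integrable.mono' (integrable_const (1:ℝ)) hgmeas.aestronglyMeasurable
      (Filter.Eventually.of_forall fun t => ?_)
    rw [Real.norm_eq_abs, abs_le]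
    exact ⟨by linarith [hg0 t], hg1 t⟩
  -- the second-coordinate measure
  set ν : Measure ℝ := volume.restrict (Icc (0:ℝ) 1) with hνdef
  haveI hνP : IsProbabilityMeasure ν :=
    ⟨by rw [hνdef, Measure.restrict_apply_univ, Real.volume_Icc]; norm_num⟩
  have hνIio : ∀ x : ℝ, 0 ≤ x → x ≤ 1 → ν (Iio x) = ENNReal.ofReal x := by
    intro x h0 h1
    rw [hνdef, Measure.restrict_apply measurableSet_Iio]
    have : Iio x ∩ Icc (0:ℝ) 1 = Ico 0 x := by
      ext v
      simp only [mem_inter_iff, mem_Iio, mem_Icc, mem_Ico]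
      constructor
      · rintro ⟨hv, h0v, _⟩; exact ⟨h0v, hv⟩
      · rintro ⟨h0v, hv⟩; exact ⟨hv, h0v, by linarith⟩
    rw [this, Real.volume_Ico, sub_zero]
  -- the random variable X
  set X : ℝ × ℝ → ℝ := fun ω => if ω.2 < g ω.1 then (1:ℝ) else 0 with hXdef
  have hEm : MeasurableSet {ω : ℝ × ℝ | ω.2 < g ω.1} :=
    measurableSet_lt measurable_snd (hgmeas.comp measurable_fst)
  have hX1 : {ω : ℝ × ℝ | X ω = 1} = {ω : ℝ × ℝ | ω.2 < g ω.1} := by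
    ext ω
    rw [hXdef]
    by_cases h : ω.2 < g ω.1 <;> simp [h]
  have hX0 : {ω : ℝ × ℝ | X ω = 0} = {ω : ℝ × ℝ | ω.2 < g ω.1}ᶜ := by
    ext ω
    rw [hXdef]
    by_cases h : ω.2 < g ω.1
    · simp [h]
    · simp only [mem_setOf_eq, mem_compl_iff, not_lt]
      simp [h, le_of_not_gt h]
  -- key measure computations
  have hkeyP : ∀ u : ℝ,
      (μ.prod ν) ({ω : ℝ × ℝ | ω.1 ≤ u} ∩ {ω : ℝ × ℝ | ω.2 < g ω.1})
        = ENNReal.ofReal (∫ t in Iic u, g t ∂μ) := by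
    intro u
    rw [Measure.prod_apply ((measurableSet_le measurable_fst measurable_const).inter hEm)]
    have hslice : ∀ t : ℝ,
        ν (Prod.mk t ⁻¹' ({ω : ℝ × ℝ | ω.1 ≤ u} ∩ {ω : ℝ × ℝ | ω.2 < g ω.1}))
          = Set.indicator (Iic u) (fun t => ENNReal.ofReal (g t)) t := by
      intro t
      by_cases ht : t ≤ u
      · rw [Set.indicator_of_mem (mem_Iic.mpr ht)]
        have hpre : Prod.mk t ⁻¹' ({ω : ℝ × ℝ | ω.1 ≤ u} ∩ {ω : ℝ × ℝ | ω.2 < g ω.1})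
            = Iio (g t) := by
          ext v; simp [ht]
        rw [hpre, hνIio _ (hg0 t) (hg1 t)]
      · rw [Set.indicator_of_notMem (by simpa [mem_Iic] using ht)]
        have hpre : Prod.mk t ⁻¹' ({ω : ℝ × ℝ | ω.1 ≤ u} ∩ {ω : ℝ × ℝ | ω.2 < g ω.1})
            = (∅ : Set ℝ) := by
          ext v; simp [ht]
        rw [hpre, measure_empty]
    rw [lintegral_congr hslice, lintegral_indicator measurableSet_Iic,
      ← ofReal_integral_eq_lintegral_ofReal hgInt.restrict
        (Filter.Eventually.of_forall hg0)]
  have hkeyU : (μ.prod ν) {ω : ℝ × ℝ | ω.2 < g ω.1}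
      = ENNReal.ofReal (∫ t, g t ∂μ) := by
    rw [Measure.prod_apply hEm]
    have hslice : ∀ t : ℝ, ν (Prod.mk t ⁻¹' {ω : ℝ × ℝ | ω.2 < g ω.1})
        = ENNReal.ofReal (g t) := by
      intro t
      have hpre : Prod.mk t ⁻¹' {ω : ℝ × ℝ | ω.2 < g ω.1} = Iio (g t) := by
        ext v; simp
      rw [hpre, hνIio _ (hg0 t) (hg1 t)]
    rw [lintegral_congr hslice,
      ← ofReal_integral_eq_lintegral_ofReal hgInt (Filter.Eventually.of_forall hg0)]
  -- evaluating the integrals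
  have int_u : ∀ u : ℝ, ∫ t in Iic u, g t ∂μ
      = ε * (min (F u) (F a) - min (F u) ((1 - p₁) * F a)
          + p₁ * (min (F u) (F b) - min (F u) (F a))
          + (F u - min (F u) (F b + (1 - p₁) * (1 - F b))))
        + (1 - ε) * (min (F u) (p₁ * F a)
          + p₁ * (min (F u) (F b) - min (F u) (F a))
          + (min (F u) (F b + p₁ * (1 - F b)) - min (F u) (F b))) := by
    intro u
    have hcongr : ∀ t : ℝ, g t
        = ε * ((if F t ≤ F a then (1:ℝ) else 0)
              - (if F t ≤ (1 - p₁) * F a then (1:ℝ) else 0)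
            + p₁ * ((if F t ≤ F b then (1:ℝ) else 0)
              - (if F t ≤ F a then (1:ℝ) else 0))
            + (1 - (if F t ≤ F b + (1 - p₁) * (1 - F b) then (1:ℝ) else 0)))
          + (1 - ε) * ((if F t ≤ p₁ * F a then (1:ℝ) else 0)
            + p₁ * ((if F t ≤ F b then (1:ℝ) else 0)
              - (if F t ≤ F a then (1:ℝ) else 0))
            + ((if F t ≤ F b + p₁ * (1 - F b) then (1:ℝ) else 0)
              - (if F t ≤ F b then (1:ℝ) else 0))) := fun t => by
      rw [hgdef]
      exact hdens_eq_comb ε p₁ _ _ _ _ _ _ (F t) o1 hαβ o3 o5 o6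
    rw [integral_congr_ae (Filter.Eventually.of_forall hcongr)]
    rw [comb_int ((iInt ((1 - p₁) * F a)).restrict) ((iInt (F a)).restrict)
      ((iInt (F b)).restrict) ((iInt (F b + (1 - p₁) * (1 - F b))).restrict)
      ((iInt (p₁ * F a)).restrict) ((iInt (F b + p₁ * (1 - F b))).restrict) ε p₁]
    rw [Measure.restrict_apply_univ, intInd u (F a) hα0, intInd u ((1 - p₁) * F a) oc1,
      intInd u (F b) (hF0 b), intInd u (F b + (1 - p₁) * (1 - F b)) oc4',
      intInd u (p₁ * F a) oc5, intInd u (F b + p₁ * (1 - F b)) oc6', ← hF u]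
  have int_total : ∫ t, g t ∂μ = p₁ := by
    have hcongr : ∀ t : ℝ, g t
        = ε * ((if F t ≤ F a then (1:ℝ) else 0)
              - (if F t ≤ (1 - p₁) * F a then (1:ℝ) else 0)
            + p₁ * ((if F t ≤ F b then (1:ℝ) else 0)
              - (if F t ≤ F a then (1:ℝ) else 0))
            + (1 - (if F t ≤ F b + (1 - p₁) * (1 - F b) then (1:ℝ) else 0)))
          + (1 - ε) * ((if F t ≤ p₁ * F a then (1:ℝ) else 0)
            + p₁ * ((if F t ≤ F b then (1:ℝ) else 0)
              - (if F t ≤ F a then (1:ℝ) else 0))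
            + ((if F t ≤ F b + p₁ * (1 - F b) then (1:ℝ) else 0)
              - (if F t ≤ F b then (1:ℝ) else 0))) := fun t => by
      rw [hgdef]
      exact hdens_eq_comb ε p₁ _ _ _ _ _ _ (F t) o1 hαβ o3 o5 o6
    rw [integral_congr_ae (Filter.Eventually.of_forall hcongr)]
    rw [comb_int (iInt ((1 - p₁) * F a)) (iInt (F a)) (iInt (F b))
      (iInt (F b + (1 - p₁) * (1 - F b))) (iInt (p₁ * F a))
      (iInt (F b + p₁ * (1 - F b))) ε p₁]
    rw [measure_univ, intInd' (F a) hα0, intInd' ((1 - p₁) * F a) oc1,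
      intInd' (F b) (hF0 b), intInd' (F b + (1 - p₁) * (1 - F b)) oc4',
      intInd' (p₁ * F a) oc5, intInd' (F b + p₁ * (1 - F b)) oc6']
    rw [min_eq_right hα1, min_eq_right (o1.trans hα1),
      min_eq_right hβ1, min_eq_right oc4, min_eq_right (o5.trans hα1),
      min_eq_right oc6, ENNReal.toReal_one]
    ring
  have key1 : ∀ u : ℝ,
      ((μ.prod ν) ({ω : ℝ × ℝ | ω.1 ≤ u} ∩ {ω : ℝ × ℝ | ω.2 < g ω.1})).toReal
      = ε * (min (F u) (F a) - min (F u) ((1 - p₁) * F a)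
          + p₁ * (min (F u) (F b) - min (F u) (F a))
          + (F u - min (F u) (F b + (1 - p₁) * (1 - F b))))
        + (1 - ε) * (min (F u) (p₁ * F a)
          + p₁ * (min (F u) (F b) - min (F u) (F a))
          + (min (F u) (F b + p₁ * (1 - F b)) - min (F u) (F b))) := by
    intro u
    rw [hkeyP u, ENNReal.toReal_ofReal (integral_nonneg fun t => hg0 t)]
    exact int_u u
  have hPE : (μ.prod ν) {ω : ℝ × ℝ | ω.2 < g ω.1} = ENNReal.ofReal p₁ := by
    rw [hkeyU, int_total]
  have hPEr : ((μ.prod ν) {ω : ℝ × ℝ | ω.2 < g ω.1}).toReal = p₁ := by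
    rw [hPE, ENNReal.toReal_ofReal hp0.le]
  haveI hPprob : IsProbabilityMeasure (μ.prod ν) := inferInstance
  have hPEc : ((μ.prod ν) {ω : ℝ × ℝ | ω.2 < g ω.1}ᶜ).toReal = 1 - p₁ := by
    rw [measure_compl hEm (measure_ne_top _ _), measure_univ, hPE,
      ENNReal.toReal_sub_of_le (ENNReal.ofReal_le_one.mpr hp1'.le) ENNReal.one_ne_top,
      ENNReal.toReal_one, ENNReal.toReal_ofReal hp0.le]
  have hPA : ∀ u : ℝ, (μ.prod ν) {ω : ℝ × ℝ | ω.1 ≤ u} = μ (Iic u) := by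
    intro u
    have hset : {ω : ℝ × ℝ | ω.1 ≤ u} = (Iic u) ×ˢ (univ : Set ℝ) := by
      ext ω; simp [Set.mem_prod]
    rw [hset, Measure.prod_prod, measure_univ, mul_one]
  have hsplit : ∀ u : ℝ,
      ((μ.prod ν) ({ω : ℝ × ℝ | ω.1 ≤ u} ∩ {ω : ℝ × ℝ | ω.2 < g ω.1}ᶜ)).toReal
      = F u - ((μ.prod ν) ({ω : ℝ × ℝ | ω.1 ≤ u} ∩ {ω : ℝ × ℝ | ω.2 < g ω.1})).toReal := by
    intro u
    have hadd := measure_inter_add_diff (μ := μ.prod ν) {ω : ℝ × ℝ | ω.1 ≤ u} hEm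
    rw [Set.diff_eq] at hadd
    have h1 := congrArg ENNReal.toReal hadd
    rw [ENNReal.toReal_add (measure_ne_top _ _) (measure_ne_top _ _), hPA u, ← hF u] at h1
    linarith [h1]
  -- independence on [a,b]
  have hEt : ∀ t, a ≤ t → t ≤ b →
      ((μ.prod ν) ({ω : ℝ × ℝ | ω.1 ≤ t} ∩ {ω : ℝ × ℝ | ω.2 < g ω.1})).toReal
        = p₁ * F t := by
    intro t ht1 ht2
    rw [key1 t]
    have h2 : F a ≤ F t := hFmono ht1
    have h3 : F t ≤ F b := hFmono ht2
    rw [min_eq_right h2, min_eq_right (o1.trans h2), min_eq_left h3,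
      min_eq_left (h3.trans o3), min_eq_right (o5.trans h2), min_eq_left (h3.trans o6)]
    ring
  -- assemble
  refine ⟨ℝ × ℝ, inferInstance, μ.prod ν, Prod.fst, X, inferInstance, measurable_fst,
    ?_, ?_, ?_, ?_, ?_, ?_, ?_⟩
  · rw [hXdef]
    exact Measurable.ite hEm measurable_const measurable_const
  · intro ω
    rw [hXdef]
    by_cases h : ω.2 < g ω.1 <;> simp [h]
  · rw [Measure.map_fst_prod, measure_univ, one_smul]
  · rw [hX1]
    exact hPE
  · intro t ht x hx
    simp only [mem_insert_iff, mem_singleton_iff] at hx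
    rcases hx with rfl | rfl
    · rw [hX0, hsplit t, hEt t ht.1 ht.2, hPEc]
      ring
    · rw [hX1, hEt t ht.1 ht.2, hPEr]
  · intro u
    rw [hX1, key1 u, hPEr]
    have e3 := L45a p₁ hp0 hp1' u
    have e4 := L45b p₁ hp0 hp1' u
    linear_combination (-ε) * e3 + (-(1 - ε)) * e4
  · intro u
    rw [hX0, hsplit u, key1 u, hPEc]
    have e1 := L45a (1 - p₁) (by linarith) (by linarith) u
    have e2 := L45b (1 - p₁) (by linarith) (by linarith) u
    rw [show (1 - (1 - p₁)) * F a = p₁ * F a from by ring,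
      show F b + (1 - (1 - p₁)) * (1 - F b) = F b + p₁ * (1 - F b) from by ring] at e1
    linear_combination (-(1 - ε)) * e1 + (-ε) * e2
end

section
/- Let F : ℝ → [0,1] be a nondecreasing right-continuous function (a cdf), let p₁ ∈ (0,1) with p₀ = 1 − p₁, let a ≤ b be reals, and write α = F(a), β = F(b). Then for each x ∈ {0,1} and all u ∈ ℝ, the 𝒯-independence cdf bound functions satisfy the law-of-total-probability identity p_x · F̄^𝒯(u | x) + (1 − p_x) · F̲^𝒯(u | 1 − x) = F(u), where the bound function for arm 1 − x is evaluated with probability weight p_{1−x} = 1 − p_x. -/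
open MeasureTheory Set

/- After `1 - (1 - p) = p`, the two bounds branch on the same thresholds in the same order,
and in each branch the weighted sum is `F u` by linear algebra in `p`. -/
theorem mul_Fbar_add_mul_FlowT {p : ℝ} (hp : p ≠ 0) (hp' : 1 - p ≠ 0) (F : ℝ → ℝ)
    (α β a b u : ℝ) :
    p * Fbar F p α β a b u + (1 - p) * FlowT F (1 - p) α β a b u = F u := by
  rw [Fbar, FlowT, sub_sub_cancel, show (1 - p) * β + p = p + β * (1 - p) by ring]
  split_ifs <;> field_simp <;> ring

theorem stmt_19_general (F : ℝ → ℝ)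
    (p₁ : ℝ) (hp₁ : p₁ ∈ Set.Ioo (0 : ℝ) 1)
    (a b : ℝ) :
    ∀ px : ℝ, (px = p₁ ∨ px = 1 - p₁) →
      ∀ u : ℝ,
        px * Fbar F px (F a) (F b) a b u
          + (1 - px) * FlowT F (1 - px) (F a) (F b) a b u = F u := by
  intro px hpx u
  obtain ⟨hp₁0, hp₁1⟩ := hp₁
  have hpx : px ∈ Set.Ioo (0 : ℝ) 1 := by
    rcases hpx with rfl | rfl <;> constructor <;> linarith
  exact mul_Fbar_add_mul_FlowT hpx.1.ne' (sub_ne_zero.mpr hpx.2.ne') F _ _ a b u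

/-- law-of-total-probability identity for the `𝒯`-independence
cdf bounds: `p_x F̄^𝒯(u | x) + (1 − p_x) F̲^𝒯(u | 1 − x) = F(u)`, where the bound
for arm `1 − x` is evaluated with weight `1 − p_x`. -/
theorem stmt_19 (F : ℝ → ℝ) (hmono : Monotone F)
    (hrc : ∀ u : ℝ, ContinuousWithinAt F (Set.Ici u) u)
    (p₁ : ℝ) (hp₁ : p₁ ∈ Set.Ioo (0 : ℝ) 1)
    (a b : ℝ) (hab : a ≤ b) :
    ∀ px : ℝ, (px = p₁ ∨ px = 1 - p₁) →
      ∀ u : ℝ,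
        px * Fbar F px (F a) (F b) a b u
          + (1 - px) * FlowT F (1 - px) (F a) (F b) a b u = F u :=
  stmt_19_general F p₁ hp₁ a b
end
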